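/- arXiv:cs/0107011 — 12 statements merged into one kernel-verified Lean document; each statement's English description precedes it below -/
import Mathlib

section
/- There exists an absolute constant C > 0 such that for all integers n and k with 2 ≤ k ≤ n there exists an (n,k)-selective family of subsets of [n] of size at most C·k·(log₂(n/k) + 1). -/
open Finset

/-- A family `F` of subsets of `[n]` is `(n,k)`-selective if for every nonempty
subset `Z` of `[n]` with `|Z| ≤ k` there is `A ∈ F` with `|Z ∩ A| = 1`. -/
def SelectiveFamily (n k : ℕ) (F : Finset (Finset (Fin n))) : Prop :=
  ∀ Z : Finset (Fin n), Z.Nonempty → Z.card ≤ k → ∃ A ∈ F, (Z ∩ A).card = 1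

/-- Counting lemma: at least a 1/6 fraction of all functions `g : Fin n → Fin k`
isolate exactly one element of `Z`, when `k/2 < |Z| ≤ k`. -/
lemma good_count (n k : ℕ) [NeZero k] (hk : 2 ≤ k) (hkn : k ≤ n) (Z : Finset (Fin n))
    (ht1 : k < 2 * Z.card) (ht2 : Z.card ≤ k) :
    ((k:ℝ)^n) ≤ 6 * ((univ.filter (fun g : Fin n → Fin k =>
      (Z ∩ univ.filter fun x => g x = 0).card = 1)).card : ℝ) := by
  classical
  set t := Z.card with htdef
  have htn : t ≤ n := le_trans ht2 hkn
  have ht1' : 1 ≤ t := by omega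
  set S : Fin n → Finset (Fin n → Fin k) := fun z =>
    Fintype.piFinset (fun x => if x = z then {0} else if x ∈ Z then {0}ᶜ else univ) with hS
  have hScard : ∀ z ∈ Z, (S z).card = (k-1)^(t-1) * k^(n-t) := by
    intro z hz
    rw [hS]
    simp only
    rw [Fintype.card_piFinset]
    have hval : ∀ x : Fin n,
        (if x = z then ({0} : Finset (Fin k)) else if x ∈ Z then {0}ᶜ else univ).card
        = if x = z then 1 else if x ∈ Z then k-1 else k := by
      intro x
      by_cases h1 : x = z
      · simp [h1]
      · by_cases h2 : x ∈ Z
        · simp [h1, h2, Finset.card_compl]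
        · simp [h1, h2]
    simp_rw [hval]
    rw [← Finset.prod_mul_prod_compl Z]
    have hZprod : ∏ x ∈ Z, (if x = z then 1 else if x ∈ Z then k-1 else k) = (k-1)^(t-1) := by
      rw [← Finset.mul_prod_erase Z _ hz, if_pos rfl, one_mul]
      rw [Finset.prod_congr rfl (fun x hx => ?_), Finset.prod_const,
        Finset.card_erase_of_mem hz]
      rw [if_neg (Finset.ne_of_mem_erase hx), if_pos (Finset.mem_of_mem_erase hx)]
    have hCprod : ∏ x ∈ Zᶜ, (if x = z then 1 else if x ∈ Z then k-1 else k) = k^(n-t) := by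
      rw [Finset.prod_congr rfl (fun x hx => ?_), Finset.prod_const, Finset.card_compl,
        Fintype.card_fin]
      have hxZ : x ∉ Z := by simpa using hx
      have hxz : x ≠ z := fun h => hxZ (h ▸ hz)
      rw [if_neg hxz, if_neg hxZ]
    rw [hZprod, hCprod]
  have hdisj : ∀ z₁ ∈ Z, ∀ z₂ ∈ Z, z₁ ≠ z₂ → Disjoint (S z₁) (S z₂) := by
    intro z₁ h₁ z₂ h₂ hne
    rw [Finset.disjoint_left]
    intro g hg1 hg2
    rw [hS] at hg1 hg2
    simp only [Fintype.mem_piFinset] at hg1 hg2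
    have a1 := hg1 z₁
    rw [if_pos rfl] at a1
    have a2 := hg2 z₁
    rw [if_neg hne, if_pos h₁] at a2
    simp only [Finset.mem_singleton] at a1
    simp only [Finset.mem_compl, Finset.mem_singleton] at a2
    exact a2 a1
  have hsub : Z.biUnion S ⊆ univ.filter (fun g : Fin n → Fin k =>
      (Z ∩ univ.filter fun x => g x = 0).card = 1) := by
    intro g hg
    simp only [Finset.mem_biUnion] at hg
    obtain ⟨z, hz, hgz⟩ := hg
    rw [hS] at hgz
    simp only [Fintype.mem_piFinset] at hgz
    simp only [Finset.mem_filter, Finset.mem_univ, true_and]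
    have hset : Z ∩ univ.filter (fun x => g x = 0) = {z} := by
      ext x
      simp only [Finset.mem_inter, Finset.mem_filter, Finset.mem_univ, true_and,
        Finset.mem_singleton]
      constructor
      · rintro ⟨hxZ, hx0⟩
        by_contra hne
        have := hgz x
        rw [if_neg hne, if_pos hxZ] at this
        simp only [Finset.mem_compl, Finset.mem_singleton] at this
        exact this hx0
      · rintro rfl
        refine ⟨hz, ?_⟩
        have := hgz x
        rw [if_pos rfl] at this
        simpa using this
    rw [hset, Finset.card_singleton]
  have hcardN : t * ((k-1)^(t-1) * k^(n-t)) ≤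
      (univ.filter (fun g : Fin n → Fin k =>
        (Z ∩ univ.filter fun x => g x = 0).card = 1)).card := by
    calc t * ((k-1)^(t-1) * k^(n-t)) = ∑ _z ∈ Z, ((k-1)^(t-1) * k^(n-t)) := by
          rw [Finset.sum_const, smul_eq_mul]
      _ = ∑ z ∈ Z, (S z).card := Finset.sum_congr rfl fun z hz => (hScard z hz).symm
      _ = (Z.biUnion S).card := (Finset.card_biUnion hdisj).symm
      _ ≤ _ := Finset.card_le_card hsub
  have hk0 : (0:ℝ) < k := by positivity
  have hk2 : (2:ℝ) ≤ k := by exact_mod_cast hk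
  have hk1 : (0:ℝ) < (k:ℝ) - 1 := by linarith
  have key : (k:ℝ)^(t-1) ≤ 3 * ((k:ℝ)-1)^(t-1) := by
    have e1 : (k:ℝ) ≤ ((k:ℝ)-1) * Real.exp (1/((k:ℝ)-1)) := by
      have h := Real.add_one_le_exp (1/((k:ℝ)-1))
      have h2 := mul_le_mul_of_nonneg_left h hk1.le
      calc (k:ℝ) = ((k:ℝ)-1) * (1/((k:ℝ)-1) + 1) := by field_simp; ring
        _ ≤ ((k:ℝ)-1) * Real.exp (1/((k:ℝ)-1)) := h2
    have e2 : (k:ℝ)^(t-1) ≤ (((k:ℝ)-1) * Real.exp (1/((k:ℝ)-1)))^(t-1) :=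
      pow_le_pow_left₀ hk0.le e1 _
    have e5 : ((t-1 : ℕ) : ℝ) * (1/((k:ℝ)-1)) ≤ 1 := by
      have hcast : ((t-1 : ℕ) : ℝ) ≤ (k:ℝ) - 1 := by
        have h' : ((t-1:ℕ):ℝ) = (t:ℝ) - 1 := by
          rw [Nat.cast_sub ht1', Nat.cast_one]
        rw [h']
        have : (t:ℝ) ≤ k := by exact_mod_cast ht2
        linarith
      rw [mul_one_div, div_le_one hk1]
      exact hcast
    have e6 : Real.exp (1/((k:ℝ)-1))^(t-1) ≤ 3 := by
      rw [← Real.exp_nat_mul]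
      calc Real.exp (((t-1:ℕ):ℝ) * (1/((k:ℝ)-1))) ≤ Real.exp 1 := Real.exp_le_exp.mpr e5
        _ ≤ 3 := by linarith [Real.exp_one_lt_d9]
    calc (k:ℝ)^(t-1) ≤ (((k:ℝ)-1) * Real.exp (1/((k:ℝ)-1)))^(t-1) := e2
      _ = ((k:ℝ)-1)^(t-1) * Real.exp (1/((k:ℝ)-1))^(t-1) := mul_pow _ _ _
      _ ≤ ((k:ℝ)-1)^(t-1) * 3 := by
          apply mul_le_mul_of_nonneg_left e6 (by positivity)
      _ = 3 * ((k:ℝ)-1)^(t-1) := by ring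
  have h6t : 3*(k:ℝ) ≤ 6*(t:ℝ) := by
    have : (k:ℝ) + 1 ≤ 2*(t:ℝ) := by exact_mod_cast Nat.succ_le_of_lt ht1
    linarith
  have hnsplit : (k:ℝ)^n = (k:ℝ) * (k:ℝ)^(t-1) * (k:ℝ)^(n-t) := by
    have h : 1 + (t-1) + (n-t) = n := by rw [Nat.add_sub_cancel' ht1', Nat.add_sub_cancel' htn]
    conv_lhs => rw [← h]
    rw [pow_add, pow_add, pow_one]
  have hB : (0:ℝ) ≤ ((k:ℝ)-1)^(t-1) := by positivity
  have hC : (0:ℝ) ≤ (k:ℝ)^(n-t) := by positivity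
  have s1 : (k:ℝ) * (k:ℝ)^(t-1) ≤ 6*(t:ℝ)*((k:ℝ)-1)^(t-1) := by
    nlinarith [mul_le_mul_of_nonneg_left key hk0.le, mul_le_mul_of_nonneg_right h6t hB]
  have s2 : (k:ℝ) * (k:ℝ)^(t-1) * (k:ℝ)^(n-t) ≤ 6*(t:ℝ)*((k:ℝ)-1)^(t-1) * (k:ℝ)^(n-t) :=
    mul_le_mul_of_nonneg_right s1 hC
  have hcast : ((t * ((k-1)^(t-1) * k^(n-t)) : ℕ) : ℝ)
      = (t:ℝ) * (((k:ℝ)-1)^(t-1) * (k:ℝ)^(n-t)) := by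
    have hfix : ((k-1:ℕ):ℝ) = (k:ℝ) - 1 := by
      rw [Nat.cast_sub (Nat.le_of_succ_le hk), Nat.cast_one]
    push_cast
    rw [hfix]
  have hfin := (Nat.cast_le (α := ℝ)).mpr hcardN
  rw [hcast] at hfin
  rw [hnsplit]
  nlinarith [s2, hfin]

/-- The number of subsets of `Fin n` of size at most `k` is at most `(3n/k)^k`. -/
lemma zcount (n k : ℕ) (hk : 1 ≤ k) (hkn : k ≤ n) :
    (((univ : Finset (Finset (Fin n))).filter (fun Z => Z.card ≤ k)).card : ℝ)
      ≤ (3*(n:ℝ)/k)^k := by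
  classical
  have hsub : ((univ : Finset (Finset (Fin n))).filter (fun Z => Z.card ≤ k)) ⊆
      (range (k+1)).biUnion (fun t => univ.powersetCard t) := by
    intro Z hZ
    simp only [Finset.mem_filter] at hZ
    simp only [Finset.mem_biUnion, Finset.mem_range, Finset.mem_powersetCard]
    exact ⟨Z.card, by omega, subset_univ Z, rfl⟩
  have h1 : ((univ : Finset (Finset (Fin n))).filter (fun Z => Z.card ≤ k)).card
      ≤ ∑ t ∈ range (k+1), n.choose t := by
    calc _ ≤ ((range (k+1)).biUnion fun t => univ.powersetCard t).card :=
          Finset.card_le_card hsub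
      _ ≤ ∑ t ∈ range (k+1), (univ.powersetCard t (α := Fin n)).card :=
          Finset.card_biUnion_le
      _ = ∑ t ∈ range (k+1), n.choose t := by
          simp [Finset.card_powersetCard]
  have hn0 : (0:ℝ) < n := by
    have h' : 0 < n := by omega
    exact_mod_cast h'
  have hk0 : (0:ℝ) < k := by exact_mod_cast hk
  set x : ℝ := (k:ℝ) / n with hx
  have hx0 : 0 < x := by positivity
  have hx1 : x ≤ 1 := by
    rw [hx, div_le_one hn0]
    exact_mod_cast hkn
  have hbin : ∑ t ∈ range (n+1), x^t * ((n.choose t : ℕ) : ℝ) = (1+x)^n := by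
    rw [add_comm (1:ℝ) x, add_pow]
    exact Finset.sum_congr rfl fun t _ => by rw [one_pow, mul_one]
  have hA : (∑ t ∈ range (k+1), ((n.choose t : ℕ):ℝ)) * x^k ≤ 3^k := by
    rw [Finset.sum_mul]
    calc ∑ t ∈ range (k+1), ((n.choose t:ℕ):ℝ) * x^k
        ≤ ∑ t ∈ range (k+1), x^t * ((n.choose t:ℕ):ℝ) := by
          apply Finset.sum_le_sum
          intro t ht
          rw [mul_comm]
          apply mul_le_mul_of_nonneg_right _ (Nat.cast_nonneg _)
          apply pow_le_pow_of_le_one hx0.le hx1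
          simp only [Finset.mem_range] at ht
          omega
      _ ≤ ∑ t ∈ range (n+1), x^t * ((n.choose t:ℕ):ℝ) := by
          apply Finset.sum_le_sum_of_subset_of_nonneg
          · exact Finset.range_subset_range.mpr (by omega)
          · intro t _ _
            positivity
      _ = (1+x)^n := hbin
      _ ≤ Real.exp x ^ n := by
          apply pow_le_pow_left₀ (by positivity)
          linarith [Real.add_one_le_exp x]
      _ = Real.exp ((n:ℝ) * x) := (Real.exp_nat_mul x n).symm
      _ = Real.exp (k:ℝ) := by
          rw [hx]
          congr 1
          field_simp
      _ = Real.exp 1 ^ k := by rw [← Real.exp_nat_mul, mul_one]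
      _ ≤ 3^k := by
          apply pow_le_pow_left₀ (Real.exp_pos 1).le
          linarith [Real.exp_one_lt_d9]
  have hxk : 0 < x^k := by positivity
  have h2 : ((∑ t ∈ range (k+1), n.choose t : ℕ) : ℝ) ≤ 3^k / x^k := by
    rw [le_div_iff₀ hxk]
    push_cast
    exact hA
  have h3 : (3:ℝ)^k / x^k = (3*(n:ℝ)/k)^k := by
    rw [← div_pow]
    congr 1
    rw [hx]
    field_simp
  calc (((univ : Finset (Finset (Fin n))).filter (fun Z => Z.card ≤ k)).card : ℝ)
      ≤ ((∑ t ∈ range (k+1), n.choose t : ℕ) : ℝ) := by exact_mod_cast h1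
    _ ≤ 3^k / x^k := h2
    _ = (3*(n:ℝ)/k)^k := h3

/-- One dyadic level: a small family hitting exactly once every `Z` with
`k/2 < |Z| ≤ k`. -/
lemma level (n k : ℕ) (hk : 2 ≤ k) (hkn : k ≤ n) :
    ∃ G : Finset (Finset (Fin n)), (G.card : ℝ) ≤ 6*k*Real.log (3*(n:ℝ)/k) + 1 ∧
      ∀ Z : Finset (Fin n), k < 2*Z.card → Z.card ≤ k → ∃ A ∈ G, (Z ∩ A).card = 1 := by
  classical
  haveI : NeZero k := ⟨by omega⟩
  have hn0 : (0:ℝ) < n := by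
    have h' : 0 < n := by omega
    exact_mod_cast h'
  have hk0 : (0:ℝ) < k := by
    have h' : 0 < k := by omega
    exact_mod_cast h'
  have hquot : (1:ℝ) < 3*(n:ℝ)/k := by
    rw [lt_div_iff₀ hk0]
    have : (k:ℝ) ≤ n := by exact_mod_cast hkn
    linarith
  have hL0 : 0 < Real.log (3*(n:ℝ)/k) := Real.log_pos hquot
  set m : ℕ := ⌈6*(k:ℝ)*Real.log (3*(n:ℝ)/k)⌉₊ with hm
  have hm1 : 0 < m := by
    rw [hm]
    apply Nat.ceil_pos.mpr
    positivity
  have hmge : 6*(k:ℝ)*Real.log (3*(n:ℝ)/k) ≤ m := Nat.le_ceil _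
  have hmle : (m:ℝ) ≤ 6*(k:ℝ)*Real.log (3*(n:ℝ)/k) + 1 := by
    have := Nat.ceil_lt_add_one
      (show (0:ℝ) ≤ 6*(k:ℝ)*Real.log (3*(n:ℝ)/k) by positivity)
    rw [hm]
    linarith
  set Bad : Finset (Fin n) → Finset (Fin n → Fin k) := fun Z =>
    univ.filter (fun g => ¬ ((Z ∩ univ.filter fun x => g x = 0).card = 1)) with hBadDef
  set ZS : Finset (Finset (Fin n)) :=
    univ.filter (fun Z => k < 2*Z.card ∧ Z.card ≤ k) with hZS
  have hBad : ∀ Z ∈ ZS, ((Bad Z).card : ℝ) ≤ (5/6) * (k:ℝ)^n := by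
    intro Z hZ
    rw [hZS, Finset.mem_filter] at hZ
    have hgood := good_count n k hk hkn Z hZ.2.1 hZ.2.2
    have hsplit : (univ.filter (fun g : Fin n → Fin k =>
        (Z ∩ univ.filter fun x => g x = 0).card = 1)).card + (Bad Z).card = k^n := by
      rw [hBadDef]
      rw [Finset.card_filter_add_card_filter_not]
      rw [Finset.card_univ, Fintype.card_fun, Fintype.card_fin, Fintype.card_fin]
    have hsplit' := congrArg (fun a : ℕ => (a:ℝ)) hsplit
    push_cast at hsplit'
    linarith
  set BadT : Finset (Fin n) → Finset (Fin m → Fin n → Fin k) := fun Z =>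
    Fintype.piFinset (fun _ => Bad Z) with hBadT
  have hBadTcard : ∀ Z : Finset (Fin n), (BadT Z).card = (Bad Z).card ^ m := by
    intro Z
    rw [hBadT]
    simp [Fintype.card_piFinset, Finset.prod_const]
  have hZScard : (ZS.card : ℝ) ≤ (3*(n:ℝ)/k)^k := by
    refine le_trans ?_ (zcount n k (by omega) hkn)
    have hsub : ZS ⊆ univ.filter (fun Z : Finset (Fin n) => Z.card ≤ k) := by
      rw [hZS]
      intro Z hZ
      simp only [Finset.mem_filter] at *
      exact ⟨hZ.1, hZ.2.2⟩
    exact_mod_cast Finset.card_le_card hsub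
  have hfrac : (3*(n:ℝ)/k)^k * (5/6)^m < 1 := by
    have hpos : (0:ℝ) < (3*(n:ℝ)/k)^k * (5/6)^m := by positivity
    have hlt : Real.log ((3*(n:ℝ)/k)^k * (5/6)^m) < 0 := by
      rw [Real.log_mul (by positivity) (by positivity), Real.log_pow, Real.log_pow]
      have hlog56 : Real.log (5/6) < -(1/6) := by
        have := Real.log_lt_sub_one_of_pos (show (0:ℝ) < 5/6 by norm_num) (by norm_num)
        linarith
      have hmpos : (0:ℝ) < m := by exact_mod_cast hm1
      have hstep : (m:ℝ) * Real.log (5/6) < (m:ℝ) * (-(1/6)) :=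
        mul_lt_mul_of_pos_left hlog56 hmpos
      linarith [hmge, hL0]
    calc (3*(n:ℝ)/k)^k * (5/6)^m
        = Real.exp (Real.log ((3*(n:ℝ)/k)^k * (5/6)^m)) := (Real.exp_log hpos).symm
      _ < Real.exp 0 := Real.exp_lt_exp.mpr hlt
      _ = 1 := Real.exp_zero
  have hcount : ((ZS.biUnion BadT).card : ℝ) < (((k:ℝ)^n)^m) := by
    have c1 : ((ZS.biUnion BadT).card : ℝ) ≤ ∑ Z ∈ ZS, ((BadT Z).card : ℝ) := by
      exact_mod_cast Finset.card_biUnion_le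
    have c2 : ∀ Z ∈ ZS, ((BadT Z).card : ℝ) ≤ ((5/6) * (k:ℝ)^n)^m := by
      intro Z hZ
      rw [hBadTcard Z]
      push_cast
      exact pow_le_pow_left₀ (by positivity) (hBad Z hZ) m
    have c3 : ∑ Z ∈ ZS, ((BadT Z).card:ℝ) ≤ ZS.card * ((5/6) * (k:ℝ)^n)^m := by
      have := Finset.sum_le_card_nsmul ZS _ _ c2
      rwa [nsmul_eq_mul] at this
    have c4 : (ZS.card:ℝ) * ((5/6) * (k:ℝ)^n)^m < ((k:ℝ)^n)^m := by
      have e : ((5/6) * (k:ℝ)^n)^m = (5/6)^m * ((k:ℝ)^n)^m := mul_pow _ _ _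
      rw [e, ← mul_assoc]
      calc (ZS.card:ℝ) * (5/6)^m * ((k:ℝ)^n)^m
          ≤ ((3*(n:ℝ)/k)^k * (5/6)^m) * ((k:ℝ)^n)^m := by
            apply mul_le_mul_of_nonneg_right _ (by positivity)
            exact mul_le_mul_of_nonneg_right hZScard (by positivity)
        _ < 1 * ((k:ℝ)^n)^m := mul_lt_mul_of_pos_right hfrac (by positivity)
        _ = ((k:ℝ)^n)^m := one_mul _
    linarith
  obtain ⟨ω, hω⟩ : ∃ ω : Fin m → Fin n → Fin k, ω ∉ ZS.biUnion BadT := by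
    by_contra h
    push_neg at h
    have huniv : ZS.biUnion BadT = univ := Finset.eq_univ_iff_forall.mpr h
    have hcc : Fintype.card (Fin m → Fin n → Fin k) = (k^n)^m := by
      rw [Fintype.card_fun, Fintype.card_fun]
      simp
    have heq : ((ZS.biUnion BadT).card : ℝ) = ((k:ℝ)^n)^m := by
      rw [huniv, Finset.card_univ, hcc]
      push_cast
      ring
    linarith
  refine ⟨Finset.image (fun i : Fin m => univ.filter fun x => ω i x = 0) univ, ?_, ?_⟩
  · calc ((Finset.image (fun i : Fin m => univ.filter fun x => ω i x = 0) univ).card : ℝ)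
        ≤ ((univ : Finset (Fin m)).card : ℝ) := by exact_mod_cast Finset.card_image_le
      _ = m := by rw [Finset.card_univ, Fintype.card_fin]
      _ ≤ 6*k*Real.log (3*(n:ℝ)/k) + 1 := hmle
  · intro Z h1 h2
    have hZ : Z ∈ ZS := by
      rw [hZS]
      simp only [Finset.mem_filter]
      exact ⟨Finset.mem_univ _, h1, h2⟩
    have hnot : ω ∉ BadT Z := fun h => hω (Finset.mem_biUnion.mpr ⟨Z, hZ, h⟩)
    rw [hBadT] at hnot
    simp only [Fintype.mem_piFinset] at hnot
    push_neg at hnot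
    obtain ⟨i, hi⟩ := hnot
    rw [hBadDef] at hi
    simp only [Finset.mem_filter, Finset.mem_univ, true_and, not_not] at hi
    exact ⟨univ.filter fun x => ω i x = 0,
      Finset.mem_image_of_mem _ (Finset.mem_univ i), hi⟩

/-- Main quantitative lemma, proved by dyadic induction on `k`. -/
lemma main_lemma : ∀ k n : ℕ, 1 ≤ k → k ≤ n →
    ∃ F : Finset (Finset (Fin n)), SelectiveFamily n k F ∧
      (F.card : ℝ) ≤ 24*k*Real.log (3*(n:ℝ)/k) + 56*k := by
  intro k
  induction k using Nat.strong_induction_on with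
  | _ k IH =>
    intro n hk1 hkn
    by_cases hk2 : k < 2
    · have hke : k = 1 := by omega
      subst hke
      refine ⟨{univ}, ?_, ?_⟩
      · intro Z hZne hZc
        refine ⟨univ, Finset.mem_singleton_self _, ?_⟩
        rw [Finset.inter_univ]
        have := Finset.card_pos.mpr hZne
        omega
      · rw [Finset.card_singleton]
        have hn1 : (1:ℝ) ≤ 3*(n:ℝ)/(1:ℕ) := by
          have h1 : (1:ℝ) ≤ n := by exact_mod_cast hkn
          push_cast
          rw [show 3*(n:ℝ)/1 = 3*n by ring]
          linarith
        have hlog := Real.log_nonneg hn1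
        push_cast at *
        linarith
    · push_neg at hk2
      have hk'lt : (k+1)/2 < k := by omega
      obtain ⟨F', hF'sel, hF'card⟩ := IH ((k+1)/2) hk'lt n (by omega) (by omega)
      obtain ⟨G, hGcard, hGsel⟩ := level n k hk2 hkn
      refine ⟨F' ∪ G, ?_, ?_⟩
      · intro Z hZne hZc
        by_cases hc : Z.card ≤ (k+1)/2
        · obtain ⟨A, hA, h⟩ := hF'sel Z hZne hc
          exact ⟨A, Finset.mem_union_left _ hA, h⟩
        · push_neg at hc
          obtain ⟨A, hA, h⟩ := hGsel Z (by omega) hZc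
          exact ⟨A, Finset.mem_union_right _ hA, h⟩
      · have hcu : ((F' ∪ G).card : ℝ) ≤ (F'.card : ℝ) + G.card := by
          exact_mod_cast Finset.card_union_le F' G
        have hk0 : (0:ℝ) < k := by
          have h' : 0 < k := by omega
          exact_mod_cast h'
        have hk'0 : (0:ℝ) < ((k+1)/2 : ℕ) := by
          have h' : 0 < (k+1)/2 := by omega
          exact_mod_cast h'
        have hn0 : (0:ℝ) < n := by
          have h' : 0 < n := by omega
          exact_mod_cast h'
        have e1 : (((k+1)/2 : ℕ) : ℝ) ≤ 3/4 * k := by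
          have h4 : 4*((k+1)/2) ≤ 3*k := by omega
          have := (Nat.cast_le (α := ℝ)).mpr h4
          push_cast at this
          linarith
        have hargk : (1:ℝ) < 3*(n:ℝ)/k := by
          rw [lt_div_iff₀ hk0]
          have : (k:ℝ) ≤ n := by exact_mod_cast hkn
          linarith
        have hargk' : (1:ℝ) < 3*(n:ℝ)/((k+1)/2 : ℕ) := by
          rw [lt_div_iff₀ hk'0]
          have ha : (((k+1)/2 : ℕ):ℝ) ≤ k := by
            exact_mod_cast (show (k+1)/2 ≤ k by omega)
          have hb : (k:ℝ) ≤ n := by exact_mod_cast hkn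
          linarith
        have hL0 : 0 ≤ Real.log (3*(n:ℝ)/k) := Real.log_nonneg hargk.le
        have hL'0 : 0 ≤ Real.log (3*(n:ℝ)/((k+1)/2 : ℕ)) := Real.log_nonneg hargk'.le
        have e2 : Real.log (3*(n:ℝ)/((k+1)/2 : ℕ))
            ≤ Real.log 2 + Real.log (3*(n:ℝ)/k) := by
          rw [← Real.log_mul (by norm_num) (by positivity)]
          apply Real.log_le_log (by positivity)
          rw [show (2:ℝ)*(3*(n:ℝ)/k) = 6*(n:ℝ)/k by ring]
          rw [div_le_div_iff₀ hk'0 hk0]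
          have hkk' : (k:ℝ) ≤ 2*(((k+1)/2 : ℕ):ℝ) := by
            exact_mod_cast (show k ≤ 2*((k+1)/2) by omega)
          nlinarith [hn0.le]
        have e3 : (((k+1)/2 : ℕ):ℝ) * Real.log (3*(n:ℝ)/((k+1)/2 : ℕ))
            ≤ (3/4 * k) * (Real.log 2 + Real.log (3*(n:ℝ)/k)) := by
          apply mul_le_mul e1 e2 hL'0 (by positivity)
        have e4 : (k:ℝ) * Real.log 2 ≤ (k:ℝ) * 0.6931471808 :=
          mul_le_mul_of_nonneg_left Real.log_two_lt_d9.le hk0.le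
        have hkR2 : (2:ℝ) ≤ k := by exact_mod_cast hk2
        linarith [hcu, hF'card, hGcard, e3, e4]

theorem stmt0 :
    ∃ C : ℝ, 0 < C ∧ ∀ n k : ℕ, 2 ≤ k → k ≤ n →
      ∃ F : Finset (Finset (Fin n)), SelectiveFamily n k F ∧
        (F.card : ℝ) ≤ C * k * (Real.logb 2 ((n : ℝ) / k) + 1) := by
  refine ⟨110, by norm_num, ?_⟩
  intro n k hk2 hkn
  obtain ⟨F, hsel, hcard⟩ := main_lemma k n (by omega) hkn
  refine ⟨F, hsel, ?_⟩
  have hk0 : (0:ℝ) < k := by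
    have h' : 0 < k := by omega
    exact_mod_cast h'
  have hn0 : (0:ℝ) < n := by
    have h' : 0 < n := by omega
    exact_mod_cast h'
  have hdiv1 : (1:ℝ) ≤ (n:ℝ)/k := by
    rw [le_div_iff₀ hk0]
    have : (k:ℝ) ≤ n := by exact_mod_cast hkn
    linarith
  have hlogb0 : 0 ≤ Real.logb 2 ((n:ℝ)/k) := Real.logb_nonneg (by norm_num) hdiv1
  have hsplit : Real.log (3*(n:ℝ)/k) = Real.log 3 + Real.log ((n:ℝ)/k) := by
    rw [mul_div_assoc, Real.log_mul (by norm_num) (by positivity)]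
  have hln : Real.log ((n:ℝ)/k) = Real.log 2 * Real.logb 2 ((n:ℝ)/k) := by
    have h2 : Real.log 2 ≠ 0 := ne_of_gt (Real.log_pos one_lt_two)
    rw [Real.logb]
    field_simp
  have hlog3 : Real.log 3 ≤ 2 := by
    have := Real.log_le_sub_one_of_pos (show (0:ℝ) < 3 by norm_num)
    linarith
  have hb : 24 * Real.log 2 * ((k:ℝ) * Real.logb 2 ((n:ℝ)/k))
      ≤ 110 * ((k:ℝ) * Real.logb 2 ((n:ℝ)/k)) := by
    apply mul_le_mul_of_nonneg_right _ (mul_nonneg hk0.le hlogb0)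
    linarith [Real.log_two_lt_d9]
  have hc3 : (k:ℝ) * Real.log 3 ≤ (k:ℝ) * 2 :=
    mul_le_mul_of_nonneg_left hlog3 hk0.le
  rw [hsplit, hln] at hcard
  nlinarith [hcard, hb, hc3, hk0.le, hlogb0]
end

section
/- For every integer i ≥ 1 and every integer s with 2^{i−1} < s ≤ 2^i, one has (s/2^i)·(1 − 1/2^i)^{s−1} > 1/8. -/
lemma aux_quarter (i : ℕ) (hi : 1 ≤ i) : (1/4 : ℝ) ≤ (1 - 1/2^i) ^ (2^i) := by
  induction i with
  | zero => omega
  | succ n ih =>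
    rcases Nat.eq_or_lt_of_le hi with h | h
    · simp [← h]; norm_num
    · have hn : 1 ≤ n := by omega
      have hnn : (0:ℝ) ≤ 1 - 1/2^n := by
        have : (1:ℝ)/2^n ≤ 1 := by
          rw [div_le_one (by positivity)]
          exact one_le_pow₀ (by norm_num)
        linarith
      have key : (1 - 1/2^n : ℝ) ≤ (1 - 1/2^(n+1))^2 := by
        have h2 : (2:ℝ)^(n+1) = 2 * 2^n := by ring
        have hpos : (0:ℝ) < 2^n := by positivity
        rw [h2]
        field_simp
        ring_nf
        nlinarith [sq_nonneg ((2:ℝ)^n)]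
      calc (1/4 : ℝ) ≤ (1 - 1/2^n) ^ (2^n) := ih hn
        _ ≤ ((1 - 1/2^(n+1))^2) ^ (2^n) := pow_le_pow_left₀ hnn key _
        _ = (1 - 1/2^(n+1)) ^ (2^(n+1)) := by
            rw [← pow_mul, mul_comm 2 (2^n), ← pow_succ]

theorem stmt1 (i : ℕ) (hi : 1 ≤ i) (s : ℕ) (h1 : 2 ^ (i - 1) < s) (h2 : s ≤ 2 ^ i) :
    (s : ℝ) / 2 ^ i * (1 - 1 / 2 ^ i) ^ (s - 1) > 1 / 8 := by
  have hpow : (0:ℝ) < 2^i := by positivity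
  have hle1 : (1:ℝ)/2^i ≤ 1 := by
    rw [div_le_one hpow]
    exact one_le_pow₀ (by norm_num)
  have hb0 : (0:ℝ) ≤ 1 - 1/2^i := by linarith
  have hb1 : (1:ℝ) - 1/2^i ≤ 1 := by
    have : (0:ℝ) < 1/2^i := by positivity
    linarith
  -- first factor > 1/2
  have hs2 : 2 * s > 2^i := by
    have : 2 * 2^(i-1) = 2^i := by
      rw [← pow_succ']
      congr 1
      omega
    omega
  have hA : (1:ℝ)/2 < (s:ℝ)/2^i := by
    rw [div_lt_div_iff₀ (by norm_num) hpow]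
    have : (2:ℝ)^i < 2 * s := by exact_mod_cast hs2
    linarith
  -- second factor ≥ 1/4
  have hB : (1/4 : ℝ) ≤ (1 - 1/2^i) ^ (s-1) := by
    calc (1/4 : ℝ) ≤ (1 - 1/2^i) ^ (2^i) := aux_quarter i hi
      _ ≤ (1 - 1/2^i) ^ (s-1) := pow_le_pow_of_le_one hb0 hb1 (by omega)
  calc (1/8 : ℝ) = (1/2) * (1/4) := by norm_num
    _ < (s:ℝ)/2^i * (1 - 1/2^i)^(s-1) :=
        mul_lt_mul hA hB (by norm_num) (by positivity)
end

section
/- Let l ≤ k ≤ n be positive integers with 2l + 1 ≥ k and such that k − l is a prime power, and let 𝓕 be an (n,k,l)-intersection-free family. Then |𝓕|·C(2k−l−1, l) ≤ C(n, l)·C(2k−l−1, k), where C(a,b) denotes the binomial coefficient. -/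
/-- A family `F` of `k`-element subsets of `[n]` is `(n,k,l)`-intersection-free if
`|F₁ ∩ F₂| ≠ l` for any two distinct members `F₁, F₂` of `F`. -/
def IntersectionFree (n k l : ℕ) (F : Finset (Finset (Fin n))) : Prop :=
  (∀ A ∈ F, A.card = k) ∧ ∀ A ∈ F, ∀ B ∈ F, A ≠ B → (A ∩ B).card ≠ l

set_option linter.unusedSectionVars false


open Polynomial in
lemma cast_choose_pow_add (p : ℕ) [Fact p.Prime] (a r j : ℕ) (hj : j < p ^ a) :
    (((p ^ a + r).choose j : ℕ) : ZMod p) = ((r.choose j : ℕ) : ZMod p) := by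
  have h1 : ((X + 1 : Polynomial (ZMod p)) ^ (p ^ a + r)).coeff j = ((p ^ a + r).choose j : ZMod p) :=
    Polynomial.coeff_X_add_one_pow _ _ _
  have h2 : ((X + 1 : Polynomial (ZMod p)) ^ (p ^ a + r)) =
      (X + 1) ^ r * X ^ (p ^ a) + (X + 1) ^ r := by
    rw [pow_add, add_pow_char_pow, one_pow, mul_comm]
    ring
  rw [h2, Polynomial.coeff_add, Polynomial.coeff_mul_X_pow', if_neg (by omega),
    Polynomial.coeff_X_add_one_pow, zero_add] at h1
  exact h1.symm

variable {α : Type} [Fintype α] [DecidableEq α]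

/-- indicator vector of "contains R" -/
def eVec (p : ℕ) (R : Finset α) : Finset α → ZMod p := fun S => if R ⊆ S then 1 else 0

def fVec (p l : ℕ) (B : Finset α) : Finset α → ZMod p :=
  ∑ T ∈ B.powersetCard l, eVec p T

def psiVec (p l : ℕ) (T : Finset α) : Finset α → ZMod p :=
  (∑ R ∈ Tᶜ.powersetCard (l - T.card), eVec p (T ∪ R)) - eVec p T

lemma fVec_apply (p l : ℕ) (B S : Finset α) :
    fVec p l B S = (((S ∩ B).card.choose l : ℕ) : ZMod p) := by
  have h : (B.powersetCard l).filter (fun T => T ⊆ S) = (S ∩ B).powersetCard l := by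
    ext T
    simp only [Finset.mem_filter, Finset.mem_powersetCard, Finset.subset_inter_iff]
    tauto
  rw [fVec, Finset.sum_apply]
  simp only [eVec]
  rw [Finset.sum_boole, h, Finset.card_powersetCard]

lemma psiVec_apply (p l : ℕ) (T S : Finset α) :
    psiVec p l T S =
      if T ⊆ S then (((S.card - T.card).choose (l - T.card) : ℕ) : ZMod p) - 1 else 0 := by
  rw [psiVec, Pi.sub_apply, Finset.sum_apply]
  simp only [eVec]
  rw [Finset.sum_boole]
  by_cases hTS : T ⊆ S
  · have h : (Tᶜ.powersetCard (l - T.card)).filter (fun R => T ∪ R ⊆ S) =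
        (S \ T).powersetCard (l - T.card) := by
      ext R
      simp only [Finset.mem_filter, Finset.mem_powersetCard, Finset.union_subset_iff,
        Finset.subset_sdiff]
      constructor
      · rintro ⟨⟨h1, h2⟩, _, h4⟩
        exact ⟨⟨h4, Finset.disjoint_left.mpr fun x hxR hxT =>
          (Finset.mem_compl.mp (h1 hxR)) hxT⟩, h2⟩
      · rintro ⟨⟨h1, h2⟩, h3⟩
        exact ⟨⟨fun x hx => Finset.mem_compl.mpr (Finset.disjoint_left.mp h2 hx), h3⟩, hTS, h1⟩
    rw [h, Finset.card_powersetCard, Finset.card_sdiff_of_subset hTS]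
    simp [hTS]
  · have h : (Tᶜ.powersetCard (l - T.card)).filter (fun R => T ∪ R ⊆ S) = ∅ := by
      rw [Finset.filter_eq_empty_iff]
      intro R _ hc
      exact hTS (Finset.union_subset_iff.mp hc).1
    rw [h]
    simp [hTS]

lemma base_bound (p b l : ℕ) [Fact p.Prime] (hq : p ^ b = l + 1) (hl : 1 ≤ l)
    (F : Finset (Finset α)) (hcard : ∀ A ∈ F, A.card = 2 * l + 1)
    (hint : ∀ A ∈ F, ∀ B ∈ F, A ≠ B → (A ∩ B).card ≠ l) :
    F.card ≤ (Fintype.card α).choose l := by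
  classical
  have castkey : ∀ r j : ℕ, j < l + 1 →
      (((l + 1 + r).choose j : ℕ) : ZMod p) = ((r.choose j : ℕ) : ZMod p) := by
    intro r j hj
    rw [← hq] at hj ⊢
    exact cast_choose_pow_add p b r j hj
  have hzero : ∀ y : ℕ, y ≤ 2 * l → y ≠ l → ((y.choose l : ℕ) : ZMod p) = 0 := by
    intro y hy hne
    rcases lt_or_gt_of_ne hne with h | h
    · rw [Nat.choose_eq_zero_of_lt h, Nat.cast_zero]
    · have hy2 : y = l + 1 + (y - l - 1) := by omega
      rw [hy2, castkey _ l (by omega), Nat.choose_eq_zero_of_lt (by omega), Nat.cast_zero]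
  have hdiag : (((2 * l + 1).choose l : ℕ) : ZMod p) = 1 := by
    have h2 : 2 * l + 1 = l + 1 + l := by omega
    rw [h2, castkey l l (by omega), Nat.choose_self, Nat.cast_one]
  have hpsi1 : ∀ t : ℕ, t ≤ l → (((2 * l + 1 - t).choose (l - t) : ℕ) : ZMod p) = 1 := by
    intro t ht
    have h2 : 2 * l + 1 - t = l + 1 + (l - t) := by omega
    rw [h2, castkey _ _ (by omega), Nat.choose_self, Nat.cast_one]
  set v : ({A // A ∈ F} ⊕ {T : Finset α // T.card < l}) → (Finset α → ZMod p) :=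
    Sum.elim (fun A => fVec p l A.1) (fun T => psiVec p l T.1) with hv
  have li : LinearIndependent (ZMod p) v := by
    rw [Fintype.linearIndependent_iff]
    intro g hg
    have heval : ∀ S : Finset α,
        (∑ A : {A // A ∈ F}, g (Sum.inl A) • fVec p l A.1 S) +
        (∑ T : {T : Finset α // T.card < l}, g (Sum.inr T) • psiVec p l T.1 S) = 0 := by
      intro S
      have h0 := congrFun hg S
      rw [Finset.sum_apply] at h0
      simp only [Pi.smul_apply, Pi.zero_apply] at h0
      rw [Fintype.sum_sum_type] at h0
      simpa [hv] using h0
    have step1 : ∀ i : {A // A ∈ F}, g (Sum.inl i) = 0 := by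
      intro i
      have h0 := heval i.1
      have hpsiz : ∀ T : {T : Finset α // T.card < l}, psiVec p l T.1 i.1 = 0 := by
        intro T
        rw [psiVec_apply]
        by_cases hTA : T.1 ⊆ i.1
        · rw [if_pos hTA, hcard i.1 i.2, hpsi1 T.1.card T.2.le, sub_self]
        · rw [if_neg hTA]
      have hsum2 : ∑ T : {T : Finset α // T.card < l},
          g (Sum.inr T) • psiVec p l T.1 i.1 = 0 := by
        apply Finset.sum_eq_zero
        intro T _
        rw [hpsiz T, smul_zero]
      rw [hsum2, add_zero] at h0
      have hf : ∀ j : {A // A ∈ F}, j ≠ i → g (Sum.inl j) • fVec p l j.1 i.1 = 0 := by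
        intro j hji
        rw [fVec_apply]
        have hne : i.1 ≠ j.1 := fun h => hji (Subtype.ext h.symm)
        have hlt : (i.1 ∩ j.1).card ≤ 2 * l := by
          by_contra hco
          push_neg at hco
          have hci := hcard i.1 i.2
          have hcj := hcard j.1 j.2
          have h2 : i.1 ∩ j.1 = i.1 :=
            Finset.eq_of_subset_of_card_le Finset.inter_subset_left (by omega)
          have h3 : i.1 ⊆ j.1 := by rw [← h2]; exact Finset.inter_subset_right
          exact hne (Finset.eq_of_subset_of_card_le h3 (by omega))
        rw [hzero _ hlt (hint i.1 i.2 j.1 j.2 hne), smul_zero]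
      rw [Fintype.sum_eq_single i hf, fVec_apply, Finset.inter_self,
        hcard i.1 i.2, hdiag, smul_eq_mul, mul_one] at h0
      exact h0
    have step2 : ∀ c : ℕ, ∀ T : {T : Finset α // T.card < l}, T.1.card = c →
        g (Sum.inr T) = 0 := by
      intro c
      induction c using Nat.strong_induction_on with
      | _ c IH =>
        intro T hTc
        have hTl := T.2
        have h0 := heval T.1
        have hfz : ∑ A : {A // A ∈ F}, g (Sum.inl A) • fVec p l A.1 T.1 = 0 := by
          apply Finset.sum_eq_zero
          intro A _
          rw [step1 A, zero_smul]
        rw [hfz, zero_add] at h0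
        have hterm : ∀ U : {T : Finset α // T.card < l}, U ≠ T →
            g (Sum.inr U) • psiVec p l U.1 T.1 = 0 := by
          intro U hUT
          by_cases hsub : U.1 ⊆ T.1
          · have hcardle : U.1.card ≤ T.1.card := Finset.card_le_card hsub
            have hUneq : U.1 ≠ T.1 := fun h => hUT (Subtype.ext h)
            have hclt : U.1.card < T.1.card :=
              lt_of_le_of_ne hcardle
                (fun h => hUneq (Finset.eq_of_subset_of_card_le hsub h.ge))
            rw [IH U.1.card (by omega) U rfl, zero_smul]
          · rw [psiVec_apply, if_neg hsub, smul_zero]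
        rw [Fintype.sum_eq_single T hterm, psiVec_apply, if_pos (Finset.Subset.refl _),
          Nat.sub_self, Nat.choose_eq_zero_of_lt (by omega), Nat.cast_zero, zero_sub] at h0
        simpa using h0
    intro i
    cases i with
    | inl A => exact step1 A
    | inr T => exact step2 T.1.card T rfl
  set E : Finset (Finset α → ZMod p) :=
    ((Finset.univ.filter (fun R : Finset α => R.card ≤ l)).image (eVec p)) with hE
  have he : ∀ R : Finset α, R.card ≤ l →
      eVec (α := α) p R ∈ Submodule.span (ZMod p) (E : Set (Finset α → ZMod p)) := by
    intro R hR
    apply Submodule.subset_span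
    rw [hE]
    simp only [Finset.coe_image, Set.mem_image, Finset.mem_coe, Finset.mem_filter]
    exact ⟨R, ⟨Finset.mem_univ R, hR⟩, rfl⟩
  have hmem : ∀ i, v i ∈ Submodule.span (ZMod p) (E : Set (Finset α → ZMod p)) := by
    intro i
    cases i with
    | inl A =>
      apply Submodule.sum_mem
      intro T hT
      exact he T (le_of_eq (Finset.mem_powersetCard.mp hT).2)
    | inr T =>
      apply Submodule.sub_mem
      · apply Submodule.sum_mem
        intro R hR
        obtain ⟨hR1, hR2⟩ := Finset.mem_powersetCard.mp hR
        have hdisj : Disjoint T.1 R := by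
          rw [Finset.disjoint_right]
          intro x hxR hxT
          exact (Finset.mem_compl.mp (hR1 hxR)) hxT
        apply he
        rw [Finset.card_union_of_disjoint hdisj, hR2]
        have := T.2
        omega
      · exact he T.1 T.2.le
  set W := Submodule.span (ZMod p) (E : Set (Finset α → ZMod p)) with hW
  have li' : LinearIndependent (ZMod p) (fun i => (⟨v i, hmem i⟩ : W)) :=
    LinearIndependent.of_comp W.subtype li
  have hcard1 : Fintype.card ({A // A ∈ F} ⊕ {T : Finset α // T.card < l}) ≤
      Module.finrank (ZMod p) W := li'.fintype_card_le_finrank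
  have hrank : Module.finrank (ZMod p) W ≤ E.card := by
    have h2 := finrank_span_finset_le_card (R := ZMod p) E
    simpa [Set.finrank, hW] using h2
  have hcardι : Fintype.card ({A // A ∈ F} ⊕ {T : Finset α // T.card < l}) =
      F.card + (Finset.univ.filter (fun T : Finset α => T.card < l)).card := by
    rw [Fintype.card_sum, Fintype.card_coe, Fintype.card_subtype]
  have hEcard : E.card ≤ (Finset.univ.filter (fun R : Finset α => R.card ≤ l)).card :=
    Finset.card_image_le
  have hsplitc : (Finset.univ.filter (fun R : Finset α => R.card ≤ l)).card =
      (Finset.univ.filter (fun T : Finset α => T.card < l)).card + (Fintype.card α).choose l := by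
    have hsp : (Finset.univ.filter (fun R : Finset α => R.card ≤ l)) =
        (Finset.univ.filter (fun T : Finset α => T.card < l)) ∪
        (Finset.univ.filter (fun T : Finset α => T.card = l)) := by
      ext R
      simp only [Finset.mem_filter, Finset.mem_univ, true_and, Finset.mem_union]
      omega
    have hdisj : Disjoint (Finset.univ.filter (fun T : Finset α => T.card < l))
        (Finset.univ.filter (fun T : Finset α => T.card = l)) := by
      rw [Finset.disjoint_left]
      intro x hx1 hx2
      simp only [Finset.mem_filter] at hx1 hx2
      omega
    rw [hsp, Finset.card_union_of_disjoint hdisj]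
    congr 1
    rw [show (Finset.univ.filter (fun T : Finset α => T.card = l)) =
        Finset.powersetCard l (Finset.univ : Finset α) by
      rw [Finset.powersetCard_eq_filter, Finset.powerset_univ]]
    rw [Finset.card_powersetCard, Finset.card_univ]
  omega

lemma subtype_inter_card (x : α) (A B : Finset α) (hx : x ∈ A ∩ B) :
    (A.subtype (· ≠ x) ∩ B.subtype (· ≠ x)).card = (A ∩ B).card - 1 := by
  have h : A.subtype (· ≠ x) ∩ B.subtype (· ≠ x) = (A ∩ B).subtype (· ≠ x) := by
    ext a
    simp [Finset.mem_subtype]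
  rw [h]
  have h2 : ((A ∩ B).subtype (· ≠ x)).card = ((A ∩ B).filter (· ≠ x)).card := by
    rw [← Finset.subtype_map (· ≠ x), Finset.card_map]
  rw [h2, Finset.filter_ne', Finset.card_erase_of_mem hx]

theorem aux : ∀ (l k : ℕ) (α : Type) [Fintype α] [DecidableEq α] (F : Finset (Finset α)),
    1 ≤ l → l ≤ k → k ≤ Fintype.card α → k ≤ 2 * l + 1 → IsPrimePow (k - l) →
    (∀ A ∈ F, A.card = k) → (∀ A ∈ F, ∀ B ∈ F, A ≠ B → (A ∩ B).card ≠ l) →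
    F.card * (2 * k - l - 1).choose l ≤ (Fintype.card α).choose l * (2 * k - l - 1).choose k := by
  intro l
  induction l using Nat.strong_induction_on with
  | _ l IH =>
    intro k α _ _ F hl hlk hkn h2l hpp hcard hint
    classical
    obtain ⟨P, B, hPprime, hBpos, hPB⟩ := hpp
    have hPp : P.Prime := Nat.prime_iff.mpr hPprime
    have hq2 : 2 ≤ k - l := by
      have h1 : P ≤ P ^ B := Nat.le_self_pow (by omega) P
      have h2 := hPp.two_le
      omega
    have hkl2 : l + 2 ≤ k := by omega
    by_cases hbase : k = 2 * l + 1
    · subst hbase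
      haveI : Fact P.Prime := ⟨hPp⟩
      have hq : P ^ B = l + 1 := by rw [hPB]; omega
      have hFle := base_bound P B l hq hl F hcard hint
      have hm : 2 * (2 * l + 1) - l - 1 = 3 * l + 1 := by omega
      rw [hm]
      have hsymm : (3 * l + 1).choose l = (3 * l + 1).choose (2 * l + 1) := by
        rw [← Nat.choose_symm (show 2 * l + 1 ≤ 3 * l + 1 by omega)]
        congr 1
        omega
      rw [hsymm]
      exact Nat.mul_le_mul_right _ hFle
    · -- recursive case : k ≤ 2 * l
      have hk2l : k ≤ 2 * l := by omega
      have hl2 : 2 ≤ l := by omega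
      set n := Fintype.card α with hn
      have hn3 : 3 ≤ n := by omega
      set m := 2 * k - l - 1 with hm
      have hm3 : 2 ≤ m := by omega
      -- the link families
      have key : ∀ x : α, (F.filter (fun A => x ∈ A)).card * ((m - 1).choose (l - 1)) ≤
          (n - 1).choose (l - 1) * ((m - 1).choose (k - 1)) := by
        intro x
        set Fx : Finset (Finset {y : α // y ≠ x}) :=
          (F.filter (fun A => x ∈ A)).image (Finset.subtype (· ≠ x)) with hFx
        have hinj : Set.InjOn (Finset.subtype (· ≠ x)) ↑(F.filter (fun A => x ∈ A)) := by
          intro A hA B hB hAB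
          simp only [Finset.coe_filter, Set.mem_setOf_eq] at hA hB
          have h1 := congrArg (Finset.map (Function.Embedding.subtype (· ≠ x))) hAB
          rw [Finset.subtype_map, Finset.subtype_map, Finset.filter_ne', Finset.filter_ne'] at h1
          have h2 : insert x (A.erase x) = insert x (B.erase x) := by rw [h1]
          rwa [Finset.insert_erase hA.2, Finset.insert_erase hB.2] at h2
        have hcardFx : Fx.card = (F.filter (fun A => x ∈ A)).card :=
          Finset.card_image_of_injOn hinj
        have hsubcard : Fintype.card {y : α // y ≠ x} = n - 1 := by
          rw [Fintype.card_subtype_compl, Fintype.card_subtype_eq]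
        have hchild := IH (l - 1) (by omega) (k - 1) {y : α // y ≠ x} Fx
          (by omega) (by omega) (by rw [hsubcard]; omega) (by omega)
          (by rw [show k - 1 - (l - 1) = k - l by omega]; exact ⟨P, B, hPprime, hBpos, hPB⟩)
          ?_ ?_
        · rw [hsubcard, hcardFx] at hchild
          rw [show 2 * (k - 1) - (l - 1) - 1 = m - 1 by omega] at hchild
          exact hchild
        · -- uniformity of the link
          intro A' hA'
          obtain ⟨A, hA, rfl⟩ := Finset.mem_image.mp hA'
          simp only [Finset.mem_filter] at hA
          have h2 : (A.subtype (· ≠ x)).card = (A.filter (· ≠ x)).card := by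
            rw [← Finset.subtype_map (· ≠ x), Finset.card_map]
          rw [h2, Finset.filter_ne', Finset.card_erase_of_mem hA.2, hcard A hA.1]
        · -- intersection-free
          intro A' hA' B' hB' hne'
          obtain ⟨A, hA, rfl⟩ := Finset.mem_image.mp hA'
          obtain ⟨B2, hB, rfl⟩ := Finset.mem_image.mp hB'
          simp only [Finset.mem_filter] at hA hB
          have hABne : A ≠ B2 := by
            intro h
            exact hne' (by rw [h])
          have hxmem : x ∈ A ∩ B2 := Finset.mem_inter.mpr ⟨hA.2, hB.2⟩
          rw [subtype_inter_card x A B2 hxmem]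
          have h3 := hint A hA.1 B2 hB.1 hABne
          have h4 : 1 ≤ (A ∩ B2).card := Finset.card_pos.mpr ⟨x, hxmem⟩
          omega
      -- double counting
      have hsum : ∑ x : α, (F.filter (fun A => x ∈ A)).card = k * F.card := by
        have h1 : ∀ x : α, (F.filter (fun A => x ∈ A)).card =
            ∑ A ∈ F, (if x ∈ A then 1 else 0) := by
          intro x
          rw [Finset.card_filter]
        rw [Finset.sum_congr rfl (fun x _ => h1 x), Finset.sum_comm]
        have h2 : ∀ A ∈ F, (∑ x : α, if x ∈ A then 1 else 0) = k := by
          intro A hA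
          rw [Finset.sum_boole, Finset.filter_univ_mem, hcard A hA]
          exact Nat.cast_id k
        rw [Finset.sum_congr rfl h2, Finset.sum_const, smul_eq_mul, mul_comm]
      have htotal : k * F.card * ((m - 1).choose (l - 1)) ≤
          n * ((n - 1).choose (l - 1) * ((m - 1).choose (k - 1))) := by
        calc k * F.card * ((m - 1).choose (l - 1))
            = (∑ x : α, (F.filter (fun A => x ∈ A)).card) * ((m - 1).choose (l - 1)) := by
              rw [hsum]
          _ = ∑ x : α, (F.filter (fun A => x ∈ A)).card * ((m - 1).choose (l - 1)) := by
              rw [Finset.sum_mul]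
          _ ≤ ∑ _x : α, (n - 1).choose (l - 1) * ((m - 1).choose (k - 1)) :=
              Finset.sum_le_sum (fun x _ => key x)
          _ = n * ((n - 1).choose (l - 1) * ((m - 1).choose (k - 1))) := by
              rw [Finset.sum_const, smul_eq_mul, Finset.card_univ]
      -- binomial identities
      have idgen : ∀ N j : ℕ, 1 ≤ N → 1 ≤ j → N * (N - 1).choose (j - 1) = N.choose j * j := by
        intro N j hN hj
        have h := Nat.add_one_mul_choose_eq (N - 1) (j - 1)
        rw [show N - 1 + 1 = N by omega, show j - 1 + 1 = j by omega] at h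
        exact h
      have hnl : n * (n - 1).choose (l - 1) = n.choose l * l := idgen n l (by omega) (by omega)
      have hml : m * (m - 1).choose (l - 1) = m.choose l * l := idgen m l (by omega) (by omega)
      have hmk : m * (m - 1).choose (k - 1) = m.choose k * k := idgen m k (by omega) (by omega)
      have hmul : k * F.card * ((m - 1).choose (l - 1)) * m ≤
          n * ((n - 1).choose (l - 1) * ((m - 1).choose (k - 1))) * m :=
        Nat.mul_le_mul htotal (le_refl m)
      have e1 : k * F.card * ((m - 1).choose (l - 1)) * m = (k * l) * (F.card * m.choose l) := by
        calc k * F.card * ((m - 1).choose (l - 1)) * m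
            = (k * F.card) * (m * ((m - 1).choose (l - 1))) := by ring
          _ = (k * F.card) * (m.choose l * l) := by rw [hml]
          _ = (k * l) * (F.card * m.choose l) := by ring
      have e2 : n * ((n - 1).choose (l - 1) * ((m - 1).choose (k - 1))) * m =
          (k * l) * (n.choose l * m.choose k) := by
        calc n * ((n - 1).choose (l - 1) * ((m - 1).choose (k - 1))) * m
            = (n * (n - 1).choose (l - 1)) * (m * ((m - 1).choose (k - 1))) := by ring
          _ = (n.choose l * l) * (m.choose k * k) := by rw [hnl, hmk]
          _ = (k * l) * (n.choose l * m.choose k) := by ring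
      rw [e1, e2] at hmul
      exact Nat.le_of_mul_le_mul_left hmul (Nat.mul_pos (by omega) (by omega))

theorem stmt2 (n k l : ℕ) (hl : 1 ≤ l) (hlk : l ≤ k) (hkn : k ≤ n)
    (h2l : k ≤ 2 * l + 1) (hpp : IsPrimePow (k - l))
    (F : Finset (Finset (Fin n))) (hF : IntersectionFree n k l F) :
    F.card * (2 * k - l - 1).choose l ≤ n.choose l * (2 * k - l - 1).choose k := by
  obtain ⟨hcard, hint⟩ := hF
  have h := aux l k (Fin n) F hl hlk (by simpa using hkn) h2l hpp hcard hint
  simpa using h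
end

section
/- Let k be a power of 2 with k ≥ 2 and k ≤ n/64, and let 𝓕 be an (n,k,k/2)-intersection-free family. Then log₂|𝓕| ≤ (11k/12)·log₂(n/k). -/
open Finset Real

set_option linter.unnecessarySeqFocus false

/-- Mod 2: partial sums of binomial coefficients of `m+1` collapse. -/
lemma sum_choose_succ_zmod (m t : ℕ) :
    (∑ r ∈ Finset.range (t + 1), ((m + 1).choose r : ZMod 2)) = (m.choose t : ZMod 2) := by
  induction t with
  | zero => simp
  | succ t ih =>
    rw [Finset.sum_range_succ, ih, Nat.choose_succ_succ m t]
    push_cast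
    have h2 : (m.choose t : ZMod 2) + (m.choose t : ZMod 2) = 0 := by
      rw [← two_mul, show ((2 : ZMod 2)) = 0 from rfl, zero_mul]
    rw [← add_assoc, h2, zero_add]

lemma mod_two_mul (a b : ℕ) (hb : 0 < b) :
    a % (2 * b) = a % 2 + 2 * ((a / 2) % b) := by
  have h1 : a = 2 * (a / 2) + a % 2 := (Nat.div_add_mod a 2).symm
  have h2 : a / 2 = b * ((a / 2) / b) + (a / 2) % b := (Nat.div_add_mod _ b).symm
  have h3 : a % 2 < 2 := Nat.mod_lt _ (by norm_num)
  have h4 : (a / 2) % b < b := Nat.mod_lt _ hb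
  have key : a = (a % 2 + 2 * ((a / 2) % b)) + (2 * b) * ((a / 2) / b) := by
    nth_rewrite 1 [h1]; nth_rewrite 1 [h2]; ring
  conv_lhs => rw [key]
  rw [Nat.add_mul_mod_self_left]
  exact Nat.mod_eq_of_lt (by omega)

lemma choose_two_pow_sub_one (s : ℕ) : ∀ a, 
    ((a.choose (2 ^ s - 1)) : ZMod 2) = if a % 2 ^ s = 2 ^ s - 1 then 1 else 0 := by
  induction s with
  | zero => intro a; simp [Nat.mod_one]
  | succ s ih =>
    intro a
    haveI : Fact (Nat.Prime 2) := ⟨Nat.prime_two⟩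
    have hb : (0:ℕ) < 2 ^ s := Nat.two_pow_pos s
    have hk1 : (2 ^ (s+1) - 1) % 2 = 1 := by
      have : 2 ^ (s+1) = 2 * 2 ^ s := by ring
      omega
    have hk2 : (2 ^ (s+1) - 1) / 2 = 2 ^ s - 1 := by
      have : 2 ^ (s+1) = 2 * 2 ^ s := by ring
      omega
    have lucas := Choose.choose_modEq_choose_mod_mul_choose_div_nat (n := a)
      (k := 2 ^ (s+1) - 1) (p := 2)
    have : ((a.choose (2 ^ (s+1) - 1)) : ZMod 2)
        = (((a % 2).choose ((2 ^ (s+1) - 1) % 2) * ((a / 2).choose ((2 ^ (s+1) - 1) / 2)) : ℕ) : ZMod 2) :=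
      (ZMod.natCast_eq_natCast_iff _ _ _).mpr lucas
    rw [this, hk1, hk2]
    push_cast
    rw [Nat.choose_one_right, ih (a / 2)]
    have hmod : a % (2 ^ (s+1)) = a % 2 + 2 * ((a / 2) % 2 ^ s) := by
      have : 2 ^ (s+1) = 2 * 2 ^ s := by ring
      rw [this, mod_two_mul a _ hb]
    have h2 : a % 2 < 2 := Nat.mod_lt _ (by norm_num)
    have h4 : (a / 2) % 2 ^ s < 2 ^ s := Nat.mod_lt _ hb
    rcases Nat.mod_two_eq_zero_or_one a with h | h
    · rw [h]
      have : ¬ (a % 2 ^ (s+1) = 2 ^ (s+1) - 1) := by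
        have : 2 ^ (s+1) = 2 * 2 ^ s := by ring
        omega
      rw [if_neg this]
      push_cast
      rw [zero_mul]
    · rw [h]
      have hiff : ((a / 2) % 2 ^ s = 2 ^ s - 1) ↔ (a % 2 ^ (s+1) = 2 ^ (s+1) - 1) := by
        have : 2 ^ (s+1) = 2 * 2 ^ s := by ring
        omega
      push_cast
      rw [one_mul]
      by_cases hc : (a / 2) % 2 ^ s = 2 ^ s - 1
      · rw [if_pos hc, if_pos (hiff.mp hc)]
      · rw [if_neg hc, if_neg (fun hx => hc (hiff.mpr hx))]

lemma sum_choose_two_pow (s m : ℕ) :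
    (∑ r ∈ Finset.range (2 ^ s), (m.choose r : ZMod 2)) = if 2 ^ s ∣ m then 1 else 0 := by
  have hp : (0:ℕ) < 2 ^ s := Nat.two_pow_pos s
  cases m with
  | zero =>
    rw [if_pos (dvd_zero _)]
    rw [show 2 ^ s = (2 ^ s - 1) + 1 by omega, Finset.sum_range_succ']
    simp [Nat.choose_eq_zero_of_lt]
  | succ m =>
    conv_lhs => rw [show 2 ^ s = (2 ^ s - 1) + 1 by omega]
    rw [sum_choose_succ_zmod, choose_two_pow_sub_one]
    congr 1
    rw [eq_iff_iff]
    constructor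
    · intro h
      have h1 : m = 2 ^ s * (m / 2 ^ s) + (m % 2 ^ s) := (Nat.div_add_mod _ _).symm
      have h2 : 2 ^ s * (m / 2 ^ s + 1) = 2 ^ s * (m / 2 ^ s) + 2 ^ s := by ring
      exact ⟨m / 2 ^ s + 1, by omega⟩
    · rintro ⟨c, hc⟩
      have hc1 : 1 ≤ c := by by_contra h; push_neg at h; interval_cases c <;> omega
      have : m = 2 ^ s * (c - 1) + (2 ^ s - 1) := by
        have h5 : 2 ^ s * c = 2 ^ s * (c - 1) + 2 ^ s := by
          cases c with
          | zero => omega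
          | succ c => simp [Nat.mul_succ]
        omega
      rw [this, Nat.mul_add_mod]
      exact Nat.mod_eq_of_lt (by omega)




variable {n : ℕ}

def lowSets (n q : ℕ) : Finset (Finset (Fin n)) :=
  Finset.univ.filter (fun S => S.card < q)

lemma count_subsets (q : ℕ) (I : Finset (Fin n)) :
    ((lowSets n q).filter (fun S => S ⊆ I)).card = ∑ r ∈ Finset.range q, (I.card).choose r := by
  have he : (lowSets n q).filter (fun S => S ⊆ I)
      = (Finset.range q).biUnion (fun r => I.powersetCard r) := by
    ext S
    simp only [lowSets, Finset.mem_filter, Finset.mem_univ, true_and, Finset.mem_biUnion,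
      Finset.mem_range, Finset.mem_powersetCard]
    constructor
    · rintro ⟨h1, h2⟩; exact ⟨S.card, h1, h2, rfl⟩
    · rintro ⟨r, hr, h2, rfl⟩; exact ⟨hr, h2⟩
  rw [he, Finset.card_biUnion]
  · exact Finset.sum_congr rfl (fun r _ => Finset.card_powersetCard r I)
  · intro i hi j hj hij
    exact I.pairwise_disjoint_powersetCard hij

lemma core_bound (q s : ℕ) (hq : q = 2 ^ s) (G : Finset (Finset (Fin n)))
    (hdvd : ∀ A ∈ G, ∀ B ∈ G, (q ∣ (A ∩ B).card ↔ A = B)) :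
    G.card ≤ (lowSets n q).card := by
  classical
  let ι := {S : Finset (Fin n) // S ∈ lowSets n q}
  let w : Finset (Fin n) → ι → ZMod 2 := fun A S => if (S : Finset (Fin n)) ⊆ A then 1 else 0
  have gram : ∀ A B : Finset (Fin n),
      (∑ S : ι, w A S * w B S) = if q ∣ (A ∩ B).card then 1 else 0 := by
    intro A B
    have e1 : ∀ S : ι, w A S * w B S
        = if (S : Finset (Fin n)) ⊆ A ∩ B then 1 else 0 := by
      intro S
      simp only [w]
      by_cases h1 : (S : Finset (Fin n)) ⊆ A <;> by_cases h2 : (S : Finset (Fin n)) ⊆ B <;>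
        simp [h1, h2, Finset.subset_inter_iff]
    rw [Finset.sum_congr rfl (fun S _ => e1 S)]
    rw [Finset.sum_coe_sort (lowSets n q) (fun S => if S ⊆ A ∩ B then (1 : ZMod 2) else 0)]
    rw [Finset.sum_boole, count_subsets, Nat.cast_sum, hq, sum_choose_two_pow]
  have li : LinearIndependent (ZMod 2) (fun A : {A // A ∈ G} => w (A : Finset (Fin n))) := by
    rw [Fintype.linearIndependent_iff]
    intro g hg B
    have h0 : ∀ S : ι, (∑ A : {A // A ∈ G}, g A • w (A : Finset (Fin n))) S = 0 := by
      intro S; rw [hg]; rfl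
    have h1 : ∀ S : ι, (∑ A : {A // A ∈ G}, g A * w (A : Finset (Fin n)) S) = 0 := by
      intro S
      have := h0 S
      rwa [Finset.sum_apply] at this
    have key : (∑ A : {A // A ∈ G}, g A * (∑ S : ι, w (A : Finset (Fin n)) S * w (B : Finset (Fin n)) S)) = 0 := by
      simp_rw [Finset.mul_sum]
      rw [Finset.sum_comm]
      have : ∀ S : ι, (∑ A : {A // A ∈ G}, g A * (w (A : Finset (Fin n)) S * w (B : Finset (Fin n)) S))
          = (∑ A : {A // A ∈ G}, g A * w (A : Finset (Fin n)) S) * w (B : Finset (Fin n)) S := by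
        intro S
        rw [Finset.sum_mul]
        exact Finset.sum_congr rfl (fun A _ => (mul_assoc _ _ _).symm)
      rw [Finset.sum_congr rfl (fun S _ => this S)]
      simp_rw [h1]
      simp
    rw [Finset.sum_congr rfl (fun A _ => by rw [gram])] at key
    have e2 : ∀ A : {A // A ∈ G},
        (if q ∣ ((A : Finset (Fin n)) ∩ (B : Finset (Fin n))).card then (1 : ZMod 2) else 0)
        = if A = B then 1 else 0 := by
      intro A
      have : (q ∣ ((A : Finset (Fin n)) ∩ (B : Finset (Fin n))).card) ↔ A = B := by
        rw [hdvd _ A.2 _ B.2]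
        exact ⟨fun h => Subtype.ext h, fun h => congrArg _ h⟩
      by_cases h : A = B
      · rw [if_pos (this.mpr h), if_pos h]
      · rw [if_neg (fun hx => h (this.mp hx)), if_neg h]
    rw [Finset.sum_congr rfl (fun A _ => by rw [e2 A])] at key
    simp only [mul_ite, mul_one, mul_zero] at key
    rw [Finset.sum_ite_eq' Finset.univ B g, if_pos (Finset.mem_univ B)] at key
    exact key
  have hcard := li.fintype_card_le_finrank
  rwa [Module.finrank_fintype_fun_eq_card, Fintype.card_coe, Fintype.card_coe] at hcard

lemma lowSets_card (q : ℕ) : (lowSets n q).card = ∑ r ∈ Finset.range q, n.choose r := by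
  have h1 : (lowSets n q).filter (fun S => S ⊆ (Finset.univ : Finset (Fin n))) = lowSets n q :=
    Finset.filter_true_of_mem (fun S _ => Finset.subset_univ S)
  have := count_subsets q (Finset.univ : Finset (Fin n))
  rw [h1] at this
  simpa using this

lemma choose_mono_right {N r : ℕ} : ∀ {t : ℕ}, r ≤ t → t ≤ N / 2 → N.choose r ≤ N.choose t := by
  intro t
  induction t with
  | zero => intro h _; simp [Nat.le_zero.mp h]
  | succ t ih =>
    intro h ht
    rcases Nat.lt_or_ge r (t + 1) with h' | h'
    · exact le_trans (ih (by omega) (by omega)) (Nat.choose_le_succ_of_lt_half_left (by omega))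
    · have : r = t + 1 := by omega
      rw [this]

/-- The key combinatorial bound by double counting over elements. -/
lemma count_main (k q s : ℕ) (hq2 : k = 2 * q) (hqs : q = 2 ^ s) (hkn : 64 * k ≤ n)
    (F : Finset (Finset (Fin n))) (hF : IntersectionFree n k q F) :
    F.card * k ≤ n * (q * (n.choose (q - 1))) := by
  obtain ⟨hcard, hint⟩ := hF
  have hq0 : 0 < q := hqs ▸ Nat.two_pow_pos s
  -- bound for each point-family
  have hx : ∀ x : Fin n, (F.filter (fun A => x ∈ A)).card ≤ (lowSets n q).card := by
    intro x
    apply core_bound q s hqs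
    intro A hA B hB
    rw [Finset.mem_filter] at hA hB
    constructor
    · intro hdvd
      by_contra hne
      have hm1 : 1 ≤ (A ∩ B).card := by
        refine Finset.card_pos.mpr ⟨x, Finset.mem_inter.mpr ⟨hA.2, hB.2⟩⟩
      have hmk : (A ∩ B).card ≤ k := by
        calc (A ∩ B).card ≤ A.card := Finset.card_le_card (Finset.inter_subset_left)
        _ = k := hcard A hA.1
      have hmne : (A ∩ B).card ≠ k := by
        intro h
        apply hne
        have h1 : A ∩ B = A := Finset.eq_of_subset_of_card_le Finset.inter_subset_left
          (by rw [h, hcard A hA.1])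
        have h2 : A ⊆ B := by rw [← h1]; exact Finset.inter_subset_right
        exact Finset.eq_of_subset_of_card_le h2 (by rw [hcard A hA.1, hcard B hB.1])
      have hmq : (A ∩ B).card ≠ q := hint A hA.1 B hB.1 hne
      obtain ⟨c, hc⟩ := hdvd
      have hc1 : 1 ≤ c := by by_contra h; push_neg at h; interval_cases c <;> omega
      have hc2 : c ≠ 1 := by intro h; rw [h, mul_one] at hc; exact hmq hc
      have : q * 2 ≤ q * c := Nat.mul_le_mul_left q (by omega)
      omega
    · intro h
      rw [h]
      rw [Finset.inter_self, hcard B hB.1, hq2]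
      exact ⟨2, mul_comm 2 q⟩
  -- double counting
  have hdc : ∑ A ∈ F, A.card = ∑ x : Fin n, (F.filter (fun A => x ∈ A)).card := by
    have h1 : ∀ A ∈ F, A.card = ∑ x : Fin n, (if x ∈ A then 1 else 0) := by
      intro A _
      rw [← Finset.card_filter]
      congr 1
      ext y
      simp
    rw [Finset.sum_congr rfl h1, Finset.sum_comm]
    refine Finset.sum_congr rfl (fun x _ => ?_)
    rw [← Finset.card_filter]
  have hsum : ∑ A ∈ F, A.card = F.card * k := by
    rw [Finset.sum_congr rfl hcard, Finset.sum_const, smul_eq_mul]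
  have hN : (lowSets n q).card ≤ q * n.choose (q - 1) := by
    rw [lowSets_card]
    calc ∑ r ∈ Finset.range q, n.choose r
        ≤ ∑ _r ∈ Finset.range q, n.choose (q - 1) := by
          refine Finset.sum_le_sum (fun r hr => ?_)
          rw [Finset.mem_range] at hr
          exact choose_mono_right (by omega) (by omega)
      _ = q * n.choose (q - 1) := by rw [Finset.sum_const, Finset.card_range, smul_eq_mul]
  calc F.card * k = ∑ x : Fin n, (F.filter (fun A => x ∈ A)).card := by rw [← hsum, hdc]
    _ ≤ ∑ _x : Fin n, q * n.choose (q - 1) := Finset.sum_le_sum (fun x _ => le_trans (hx x) hN)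
    _ = n * (q * n.choose (q - 1)) := by rw [Finset.sum_const, smul_eq_mul, Finset.card_univ, Fintype.card_fin]



lemma two_pow_le_two_mul_factorial : ∀ j : ℕ, 2 ^ j ≤ 2 * j.factorial := by
  intro j
  induction j with
  | zero => norm_num
  | succ j ih =>
    rcases Nat.eq_zero_or_pos j with rfl | hj
    · norm_num [Nat.factorial]
    · rw [pow_succ, Nat.factorial_succ]
      have h := Nat.factorial_pos j
      nlinarith

lemma succ_pow_le_four_mul_pow (m : ℕ) : ((m : ℝ) + 1) ^ m ≤ 4 * (m : ℝ) ^ m := by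
  rcases Nat.eq_zero_or_pos m with rfl | hm
  · norm_num
  have hm1 : (1 : ℝ) ≤ (m : ℝ) := by exact_mod_cast hm
  have key : ∀ j ∈ Finset.range (m + 1),
      (m : ℝ) ^ j * 1 ^ (m - j) * (m.choose j) ≤ 2 * (m : ℝ) ^ m * (1 / 2) ^ (m - j) := by
    intro j hj
    rw [Finset.mem_range] at hj
    have hj' : j ≤ m := by omega
    rw [one_pow, mul_one]
    have h1 : m.choose j * (m - j).factorial ≤ m ^ (m - j) := by
      rw [← Nat.choose_symm hj']
      calc m.choose (m - j) * (m - j).factorial = m.descFactorial (m - j) := by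
            rw [Nat.descFactorial_eq_factorial_mul_choose]; ring
        _ ≤ m ^ (m - j) := Nat.descFactorial_le_pow m (m - j)
    have h2 : (2 : ℕ) ^ (m - j) ≤ 2 * (m - j).factorial := two_pow_le_two_mul_factorial (m - j)
    have h1' : (m.choose j : ℝ) * (m - j).factorial ≤ (m : ℝ) ^ (m - j) := by exact_mod_cast h1
    have h2' : (2 : ℝ) ^ (m - j) ≤ 2 * ((m - j).factorial : ℝ) := by exact_mod_cast h2
    have hc : (m.choose j : ℝ) * (2 : ℝ) ^ (m - j) ≤ 2 * (m : ℝ) ^ (m - j) := by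
      have hnn : (0 : ℝ) ≤ (m.choose j : ℝ) := by positivity
      nlinarith
    have hp2 : (0 : ℝ) < (2 : ℝ) ^ (m - j) := by positivity
    have e : 2 * (m : ℝ) ^ m * (1 / 2) ^ (m - j)
        = ((2 * (m : ℝ) ^ (m - j)) * (m : ℝ) ^ j) / 2 ^ (m - j) := by
      rw [div_pow, one_pow]
      have hsplit : (m : ℝ) ^ m = (m : ℝ) ^ j * (m : ℝ) ^ (m - j) := by
        rw [← pow_add]
        congr 1
        omega
      rw [hsplit]
      field_simp
    rw [e, le_div_iff₀ hp2]
    have hmj : (0 : ℝ) ≤ (m : ℝ) ^ j := by positivity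
    nlinarith
  have hbin : ((m : ℝ) + 1) ^ m = ∑ j ∈ Finset.range (m + 1), (m : ℝ) ^ j * 1 ^ (m - j) * (m.choose j) :=
    add_pow (m : ℝ) 1 m
  rw [hbin]
  calc ∑ j ∈ Finset.range (m + 1), (m : ℝ) ^ j * 1 ^ (m - j) * (m.choose j)
      ≤ ∑ j ∈ Finset.range (m + 1), 2 * (m : ℝ) ^ m * (1 / 2) ^ (m - j) :=
        Finset.sum_le_sum key
    _ = 2 * (m : ℝ) ^ m * ∑ j ∈ Finset.range (m + 1), (1 / 2 : ℝ) ^ (m - j) := by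
        rw [Finset.mul_sum]
    _ = 2 * (m : ℝ) ^ m * ∑ j ∈ Finset.range (m + 1), (1 / 2 : ℝ) ^ j := by
        congr 1
        rw [← Finset.sum_range_reflect]
        refine Finset.sum_congr rfl (fun j hj => ?_)
        rw [Finset.mem_range] at hj
        congr 1
        omega
    _ ≤ 2 * (m : ℝ) ^ m * 2 := by
        have hg : ∑ j ∈ Finset.range (m + 1), (1 / 2 : ℝ) ^ j ≤ 2 := by
          rw [geom_sum_eq (show (1/2 : ℝ) ≠ 1 by norm_num) (m + 1)]
          have hp : (0:ℝ) < (1/2:ℝ)^(m+1) := by positivity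
          have he : ((1/2:ℝ)^(m+1) - 1)/((1/2:ℝ) - 1) = 2 - 2*(1/2:ℝ)^(m+1) := by
            field_simp
            ring
          rw [he]
          linarith
        have hnn : (0:ℝ) ≤ 2 * (m:ℝ)^m := by positivity
        nlinarith
    _ = 4 * (m : ℝ) ^ m := by ring

lemma pow_self_le_four_pow_mul_factorial : ∀ m : ℕ, (m : ℝ) ^ m ≤ 4 ^ m * (m.factorial : ℝ) := by
  intro m
  induction m with
  | zero => norm_num
  | succ m ih =>
    have h1 : ((m : ℝ) + 1) ^ m ≤ 4 * (m : ℝ) ^ m := succ_pow_le_four_mul_pow m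
    have hpos : (0 : ℝ) ≤ (m : ℝ) + 1 := by positivity
    have hfac : (0 : ℝ) < (m.factorial : ℝ) := by exact_mod_cast m.factorial_pos
    calc ((m + 1 : ℕ) : ℝ) ^ (m + 1) = ((m : ℝ) + 1) * ((m : ℝ) + 1) ^ m := by
          push_cast
          ring
      _ ≤ ((m : ℝ) + 1) * (4 * (m : ℝ) ^ m) := by nlinarith
      _ ≤ ((m : ℝ) + 1) * (4 * (4 ^ m * (m.factorial : ℝ))) := by nlinarith
      _ = 4 ^ (m + 1) * (((m + 1 : ℕ)).factorial : ℝ) := by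
          rw [Nat.factorial_succ]
          push_cast
          ring

/-- `C(n,m) ≤ (4n/m)^m` for `m ≥ 1`. -/
lemma choose_le_four_n_div_m_pow (n m : ℕ) (hm : 1 ≤ m) :
    (n.choose m : ℝ) ≤ (4 * (n : ℝ) / m) ^ m := by
  have h1 : (n.choose m : ℝ) * (m.factorial : ℝ) ≤ (n : ℝ) ^ m := by
    have : n.choose m * m.factorial ≤ n ^ m := by
      calc n.choose m * m.factorial = n.descFactorial m := by
            rw [Nat.descFactorial_eq_factorial_mul_choose]; ring
        _ ≤ n ^ m := Nat.descFactorial_le_pow n m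
    exact_mod_cast this
  have h2 : (m : ℝ) ^ m ≤ 4 ^ m * (m.factorial : ℝ) := pow_self_le_four_pow_mul_factorial m
  have hmr : (0 : ℝ) < (m : ℝ) := by exact_mod_cast hm
  have hfac : (0 : ℝ) < (m.factorial : ℝ) := by exact_mod_cast m.factorial_pos
  have hmm : (0 : ℝ) < (m : ℝ) ^ m := by positivity
  rw [div_pow, le_div_iff₀ (by positivity : (0:ℝ) < (m : ℝ) ^ m)]
  have hch : (0 : ℝ) ≤ (n.choose m : ℝ) := by positivity
  calc (n.choose m : ℝ) * (m : ℝ) ^ m ≤ (n.choose m : ℝ) * (4 ^ m * (m.factorial : ℝ)) := by nlinarith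
    _ = 4 ^ m * ((n.choose m : ℝ) * (m.factorial : ℝ)) := by ring
    _ ≤ 4 ^ m * (n : ℝ) ^ m := by nlinarith [pow_pos (show (0:ℝ) < 4 by norm_num) m]
    _ = (4 * (n : ℝ)) ^ m := by rw [mul_pow]


theorem stmt3 (n k : ℕ) (hpow : ∃ i : ℕ, k = 2 ^ i) (hk : 2 ≤ k) (hkn : 64 * k ≤ n)
    (F : Finset (Finset (Fin n))) (hF : IntersectionFree n k (k / 2) F) :
    Real.logb 2 F.card ≤ (11 * (k : ℝ) / 12) * Real.logb 2 ((n : ℝ) / k) := by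
  obtain ⟨i, hi⟩ := hpow
  have hi1 : 1 ≤ i := by
    by_contra h
    push_neg at h
    interval_cases i <;> omega
  set s : ℕ := i - 1 with hs
  set q : ℕ := 2 ^ s with hqdef
  have hq1 : 1 ≤ q := Nat.one_le_two_pow
  have hk2q : k = 2 * q := by
    rw [hi, hqdef, hs, ← pow_succ']
    congr 1
    omega
  have hkhalf : k / 2 = q := by omega
  rw [hkhalf] at hF
  have hcount := count_main k q s hk2q rfl hkn F hF
  -- positivity setup
  have hk0 : (0 : ℝ) < (k : ℝ) := by exact_mod_cast (by omega : 0 < k)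
  have hn0 : (0 : ℝ) < (n : ℝ) := by exact_mod_cast (by omega : 0 < n)
  have hq0 : (0 : ℝ) < (q : ℝ) := by exact_mod_cast hq1
  set X : ℝ := (n : ℝ) / k with hX
  have hX64 : (64 : ℝ) ≤ X := by
    rw [hX, le_div_iff₀ hk0]
    exact_mod_cast hkn
  have hX0 : (0 : ℝ) < X := by linarith
  set L : ℝ := Real.logb 2 X with hL
  have hlog64 : Real.logb 2 (64 : ℝ) = 6 := by
    rw [show (64 : ℝ) = 2 ^ (6 : ℕ) by norm_num, Real.logb_pow, Real.logb_self_eq_one] <;> norm_num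
  have hL6 : (6 : ℝ) ≤ L := by
    rw [hL, ← hlog64]
    exact Real.logb_le_logb_of_le one_lt_two (by norm_num) hX64
  rcases Nat.eq_zero_or_pos F.card with hF0 | hF1
  · rw [hF0]
    norm_num
    apply mul_nonneg
    · positivity
    · exact Real.logb_nonneg one_lt_two (by linarith)
  -- main case
  set m : ℕ := q - 1 with hm
  have hmn : m ≤ n := by omega
  have hCpos : 0 < n.choose m := Nat.choose_pos hmn
  have hC : (n.choose m : ℝ) ≤ (16 * X) ^ m := by
    rcases Nat.eq_zero_or_pos m with hm0 | hm1
    · rw [hm0]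
      norm_num
    · have h1 := choose_le_four_n_div_m_pow n m hm1
      refine le_trans h1 (pow_le_pow_left₀ (by positivity) ?_ m)
      have hq2 : 2 ≤ q := by omega
      have hm2 : (q : ℝ) ≤ 2 * (m : ℝ) := by
        have : (m : ℝ) = (q : ℝ) - 1 := by
          rw [hm]
          push_cast [Nat.cast_sub hq1]
          ring
        rw [this]
        have : (2:ℝ) ≤ (q:ℝ) := by exact_mod_cast hq2
        linarith
      have hmpos : (0 : ℝ) < (m : ℝ) := by exact_mod_cast hm1
      rw [div_le_iff₀ hmpos, hX]
      have hkq : (k : ℝ) = 2 * q := by exact_mod_cast hk2q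
      rw [show 16 * ((n:ℝ)/k) * (m:ℝ) = 16 * (n:ℝ) * (m:ℝ) / k by ring, le_div_iff₀ hk0, hkq]
      nlinarith [mul_le_mul_of_nonneg_left hm2 hn0.le]
  have hcard_le : (F.card : ℝ) ≤ X * ((q : ℝ) * (n.choose m)) := by
    have hc' : (F.card : ℝ) * k ≤ (n : ℝ) * ((q : ℝ) * (n.choose m)) := by exact_mod_cast hcount
    have : X * ((q : ℝ) * (n.choose m)) = (n : ℝ) * ((q : ℝ) * (n.choose m)) / k := by
      rw [hX]; ring
    rw [this, le_div_iff₀ hk0]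
    linarith
  have hF1' : (1 : ℝ) ≤ (F.card : ℝ) := by exact_mod_cast hF1
  have step1 : Real.logb 2 (F.card : ℝ) ≤ Real.logb 2 (X * ((q : ℝ) * (n.choose m))) :=
    Real.logb_le_logb_of_le one_lt_two (by linarith) hcard_le
  have hCne : ((n.choose m : ℝ)) ≠ 0 := by positivity
  have split : Real.logb 2 (X * ((q : ℝ) * (n.choose m)))
      = L + Real.logb 2 (q : ℝ) + Real.logb 2 (n.choose m : ℝ) := by
    rw [Real.logb_mul (by positivity) (by positivity), Real.logb_mul (by positivity) hCne, hL]
    ring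
  have hLq : Real.logb 2 (q : ℝ) ≤ (q : ℝ) := by
    have h1 : (q : ℝ) ≤ (2 : ℝ) ^ q := by
      exact_mod_cast (Nat.lt_two_pow_self (n := q)).le
    calc Real.logb 2 (q : ℝ) ≤ Real.logb 2 ((2 : ℝ) ^ q) :=
          Real.logb_le_logb_of_le one_lt_two hq0 h1
      _ = (q : ℝ) := by
          rw [Real.logb_pow, Real.logb_self_eq_one] <;> norm_num
  have hLC : Real.logb 2 (n.choose m : ℝ) ≤ (m : ℝ) * (4 + L) := by
    have h1 : (1 : ℝ) ≤ (n.choose m : ℝ) := by exact_mod_cast hCpos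
    calc Real.logb 2 (n.choose m : ℝ) ≤ Real.logb 2 ((16 * X) ^ m) :=
          Real.logb_le_logb_of_le one_lt_two (by linarith) hC
      _ = (m : ℝ) * Real.logb 2 (16 * X) := Real.logb_pow 2 (16 * X) m
      _ = (m : ℝ) * (4 + L) := by
          rw [Real.logb_mul (by norm_num) (ne_of_gt hX0), hL]
          congr 2
          rw [show (16 : ℝ) = 2 ^ (4 : ℕ) by norm_num, Real.logb_pow, Real.logb_self_eq_one] <;>
            norm_num
  -- final arithmetic
  have hmr : (m : ℝ) = (q : ℝ) - 1 := by
    rw [hm]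
    push_cast [Nat.cast_sub hq1]
    ring
  have hkr : (k : ℝ) = 2 * (q : ℝ) := by exact_mod_cast hk2q
  have hq1' : (1 : ℝ) ≤ (q : ℝ) := by exact_mod_cast hq1
  have hfinal : L + (q : ℝ) + ((q : ℝ) - 1) * (4 + L) ≤ 11 * (k : ℝ) / 12 * L := by
    rw [hkr]
    nlinarith [mul_nonneg (by linarith : (0:ℝ) ≤ (q:ℝ)) (by linarith : (0:ℝ) ≤ L - 6)]
  calc Real.logb 2 (F.card : ℝ) ≤ L + Real.logb 2 (q : ℝ) + Real.logb 2 (n.choose m : ℝ) := by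
        rw [← split]; exact step1
    _ ≤ L + (q : ℝ) + ((q : ℝ) - 1) * (4 + L) := by
        rw [← hmr] at *
        have : (0:ℝ) ≤ (m:ℝ) := by positivity
        nlinarith [hLq, hLC]
    _ ≤ 11 * (k : ℝ) / 12 * L := hfinal
end

section
/- For any integers n and k with 2 ≤ k ≤ n/64, every (n,k)-selective family 𝓕 satisfies |𝓕| ≥ (k/24)·log₂(n/k). -/
private def parityMap {n : ℕ} (F : Finset (Finset (Fin n))) (s : Finset (Fin n)) :
    Finset (Finset (Fin n)) :=
  F.filter (fun A => (s ∩ A).card % 2 = 1)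

private lemma mem_parityMap {n : ℕ} {F : Finset (Finset (Fin n))} {s : Finset (Fin n)}
    {A : Finset (Fin n)} : A ∈ parityMap F s ↔ A ∈ F ∧ (s ∩ A).card % 2 = 1 :=
  Finset.mem_filter

private lemma parityMap_subset {n : ℕ} (F : Finset (Finset (Fin n))) (s : Finset (Fin n)) :
    parityMap F s ⊆ F := Finset.filter_subset _ _

/-- the block embedding `Fin t × Fin q ↪ Fin n` -/
private def emb (n t q : ℕ) (htq : t * q ≤ n) (p : Fin t × Fin q) : Fin n :=
  Fin.castLE htq (finProdFinEquiv p)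

private lemma emb_injective (n t q : ℕ) (htq : t * q ≤ n) :
    Function.Injective (emb n t q htq) := fun a b hab =>
  (Equiv.injective finProdFinEquiv) (Fin.castLE_injective htq hab)

/-- the transversal set associated to `f : Fin t → Fin q` -/
private def blockSet (n t q : ℕ) (htq : t * q ≤ n) (f : Fin t → Fin q) : Finset (Fin n) :=
  Finset.image (fun i => emb n t q htq (i, f i)) Finset.univ

private lemma mem_blockSet (n t q : ℕ) (htq : t * q ≤ n) (f : Fin t → Fin q) (i : Fin t) :
    emb n t q htq (i, f i) ∈ blockSet n t q htq f :=
  Finset.mem_image_of_mem _ (Finset.mem_univ i)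

private lemma notMem_blockSet (n t q : ℕ) (htq : t * q ≤ n) (f g : Fin t → Fin q) (i : Fin t)
    (hne : f i ≠ g i) : emb n t q htq (i, f i) ∉ blockSet n t q htq g := by
  intro hmem
  rcases Finset.mem_image.mp hmem with ⟨j, _, hj⟩
  have h := emb_injective n t q htq hj
  have hij : j = i := congrArg Prod.fst h
  apply hne
  subst hij
  exact (congrArg Prod.snd h).symm

private lemma card_blockSet_le (n t q : ℕ) (htq : t * q ≤ n) (f : Fin t → Fin q) :
    (blockSet n t q htq f).card ≤ t := by
  calc (blockSet n t q htq f).card ≤ (Finset.univ : Finset (Fin t)).card :=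
        Finset.card_image_le
  _ = t := by simp

/-- Key counting lemma: the parity map is injective on transversal sets, so
`q ^ t ≤ 2 ^ |F|`. -/
private lemma key_count (n k t q : ℕ) (F : Finset (Finset (Fin n)))
    (hF : SelectiveFamily n k F) (htq : t * q ≤ n) (h2t : 2 * t ≤ k) :
    q ^ t ≤ 2 ^ F.card := by
  classical
  have hinj : ∀ f g : Fin t → Fin q,
      parityMap F (blockSet n t q htq f) = parityMap F (blockSet n t q htq g) → f = g := by
    intro f g hfg
    by_contra hne
    have hex : ∃ i, f i ≠ g i := by
      by_contra h
      push_neg at h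
      exact hne (funext h)
    rcases hex with ⟨i, hi⟩
    set Sf := blockSet n t q htq f with hSf
    set Sg := blockSet n t q htq g with hSg
    set Z : Finset (Fin n) := (Sf \ Sg) ∪ (Sg \ Sf) with hZdef
    have hZne : Z.Nonempty := by
      refine ⟨emb n t q htq (i, f i), ?_⟩
      rw [hZdef]
      exact Finset.mem_union_left _ (Finset.mem_sdiff.mpr
        ⟨mem_blockSet n t q htq f i, notMem_blockSet n t q htq f g i hi⟩)
    have hZcard : Z.card ≤ k := by
      have h1 : Z ⊆ Sf ∪ Sg := by
        rw [hZdef]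
        exact Finset.union_subset_union Finset.sdiff_subset Finset.sdiff_subset
      calc Z.card ≤ (Sf ∪ Sg).card := Finset.card_le_card h1
      _ ≤ Sf.card + Sg.card := Finset.card_union_le _ _
      _ ≤ t + t := Nat.add_le_add (card_blockSet_le n t q htq f) (card_blockSet_le n t q htq g)
      _ ≤ k := by omega
    rcases hF Z hZne hZcard with ⟨A, hAF, hA1⟩
    set X : Finset (Fin n) := Sf ∩ A with hX
    set Y : Finset (Fin n) := Sg ∩ A with hY
    have hZA : Z ∩ A = (X \ Y) ∪ (Y \ X) := by
      ext a
      simp only [hZdef, hX, hY, Finset.mem_inter, Finset.mem_union, Finset.mem_sdiff]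
      tauto
    have hdisj : Disjoint (X \ Y) (Y \ X) := disjoint_sdiff_sdiff
    have hsum : (X \ Y).card + (Y \ X).card = 1 := by
      rw [← Finset.card_union_of_disjoint hdisj, ← hZA, hA1]
    have hX1 : (X \ Y).card + (X ∩ Y).card = X.card := Finset.card_sdiff_add_card_inter X Y
    have hY1 : (Y \ X).card + (Y ∩ X).card = Y.card := Finset.card_sdiff_add_card_inter Y X
    have hXY : (X ∩ Y).card = (Y ∩ X).card := by rw [Finset.inter_comm]
    have hmemf : A ∈ parityMap F Sf ↔ (X.card % 2 = 1) := by
      rw [mem_parityMap, ← hX]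
      tauto
    have hmemg : A ∈ parityMap F Sg ↔ (Y.card % 2 = 1) := by
      rw [mem_parityMap, ← hY]
      tauto
    have hiff : (X.card % 2 = 1) ↔ (Y.card % 2 = 1) := by
      rw [← hmemf, ← hmemg, hfg]
    omega
  have h1 : (Finset.univ : Finset (Fin t → Fin q)).card ≤ F.powerset.card := by
    apply Finset.card_le_card_of_injOn (fun f => parityMap F (blockSet n t q htq f))
    · intro f _
      exact Finset.mem_powerset.mpr (parityMap_subset F _)
    · intro f _ g _ hfg
      exact hinj f g hfg
  rw [Finset.card_powerset] at h1
  calc q ^ t = Fintype.card (Fin t → Fin q) := by simp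
  _ = (Finset.univ : Finset (Fin t → Fin q)).card := (Finset.card_univ).symm
  _ ≤ 2 ^ F.card := h1

theorem stmt4 (n k : ℕ) (hk : 2 ≤ k) (hkn : 64 * k ≤ n)
    (F : Finset (Finset (Fin n))) (hF : SelectiveFamily n k F) :
    ((k : ℝ) / 24) * Real.logb 2 ((n : ℝ) / k) ≤ F.card := by
  classical
  set t : ℕ := k / 2 with ht
  set q : ℕ := n / t with hq
  have ht1 : 1 ≤ t := by omega
  have h2t : 2 * t ≤ k := by omega
  have htn : t ≤ n := by omega
  have hq1 : 1 ≤ q := (Nat.one_le_div_iff (by omega)).mpr htn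
  have htq : t * q ≤ n := by
    rw [hq]; exact Nat.mul_div_le n t
  have hcount : q ^ t ≤ 2 ^ F.card := key_count n k t q F hF htq h2t
  -- now the real-number estimates
  have hk0 : (0:ℝ) < k := by positivity
  have hkn' : (k:ℝ) ≤ n := by
    have : k ≤ n := by omega
    exact_mod_cast this
  have hnq : n ≤ q * k := by
    have hmod : t * q + n % t = n := by rw [hq]; exact Nat.div_add_mod n t
    have hr : n % t < t := Nat.mod_lt n (by omega)
    have h2 : t ≤ t * q := Nat.le_mul_of_pos_right t (by omega)
    have h3 : n ≤ 2 * (t * q) := by omega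
    calc n ≤ 2 * (t * q) := h3
    _ = (2 * t) * q := by ring
    _ ≤ k * q := Nat.mul_le_mul_right q h2t
    _ = q * k := by ring
  have hnkq : (n:ℝ) / k ≤ (q:ℝ) := by
    rw [div_le_iff₀ hk0]
    exact_mod_cast hnq
  have h1nk : (1:ℝ) ≤ (n:ℝ) / k := by
    rw [le_div_iff₀ hk0]
    simpa using hkn'
  have hlognonneg : 0 ≤ Real.logb 2 ((n:ℝ) / k) :=
    Real.logb_nonneg (by norm_num) h1nk
  have hq0R : (0:ℝ) < (q:ℝ) := by
    exact_mod_cast Nat.lt_of_lt_of_le Nat.zero_lt_one hq1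
  have hlogmono : Real.logb 2 ((n:ℝ) / k) ≤ Real.logb 2 (q:ℝ) :=
    Real.logb_le_logb_of_le (by norm_num) (by positivity) hnkq
  have hpow : ((q:ℝ)) ^ t ≤ (2:ℝ) ^ F.card := by
    exact_mod_cast hcount
  have hlogcount : (t:ℝ) * Real.logb 2 (q:ℝ) ≤ (F.card : ℝ) := by
    have h1 : Real.logb 2 ((q:ℝ) ^ t) ≤ Real.logb 2 ((2:ℝ) ^ F.card) :=
      Real.logb_le_logb_of_le (by norm_num) (by positivity) hpow
    rwa [Real.logb_pow, Real.logb_pow, Real.logb_self_eq_one (by norm_num),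
      mul_one] at h1
  have htk : (k:ℝ) / 24 ≤ (t:ℝ) := by
    have h24n : k ≤ 24 * t := by omega
    have h24 : (k:ℝ) ≤ 24 * t := by exact_mod_cast h24n
    linarith
  calc ((k:ℝ) / 24) * Real.logb 2 ((n:ℝ) / k)
      ≤ (t:ℝ) * Real.logb 2 ((n:ℝ) / k) := mul_le_mul_of_nonneg_right htk hlognonneg
    _ ≤ (t:ℝ) * Real.logb 2 (q:ℝ) := mul_le_mul_of_nonneg_left hlogmono (by positivity)
    _ ≤ (F.card : ℝ) := hlogcount
end

section
/- Let k' be a power of 2 with k' ≥ 2 and k' ≤ n/64. Then the chromatic number of the graph G(n,k') satisfies log₂ χ(G(n,k')) ≥ (k'/12)·log₂(n/k'). -/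
open Finset Matrix

/-- Key binomial recurrence over ℤ. -/
lemma choose_rec (m s : ℕ) :
    ((m : ℤ) - s) * m.choose s = (s + 1) * m.choose (s + 1) := by
  rcases le_or_gt s m with h | h
  · have h1 := congrArg (Nat.cast : ℕ → ℤ) (Nat.choose_succ_right_eq m s)
    push_cast [h] at h1
    linarith
  · rw [Nat.choose_eq_zero_of_lt h, Nat.choose_eq_zero_of_lt (by omega)]
    simp

/-- Any monic product of linear factors in `m` is an integer combination of
binomial coefficients `choose m s`, `s ≤ d`. -/
lemma prod_linear_eq_sum_choose (d : ℕ) (a : ℕ → ℤ) :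
    ∃ c : ℕ → ℤ, (∀ s, d + 1 ≤ s → c s = 0) ∧ ∀ m : ℕ,
      ∏ i ∈ range d, ((m : ℤ) - a i) = ∑ s ∈ range (d + 1), c s * m.choose s := by
  induction d with
  | zero =>
    refine ⟨fun s => if s = 0 then 1 else 0, fun s hs => if_neg (by omega), ?_⟩
    intro m; simp
  | succ d ih =>
    obtain ⟨c, hsupp, hc⟩ := ih
    refine ⟨fun s => (if 1 ≤ s then c (s - 1) * s else 0) + c s * (s - a d), ?_, fun m => ?_⟩
    · intro s hs
      have h1 : c (s - 1) = 0 := hsupp _ (by omega)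
      have h2 : c s = 0 := hsupp _ (by omega)
      simp [h1, h2]
    rw [prod_range_succ, hc, Finset.sum_mul]
    have key : ∀ s : ℕ, c s * (m.choose s) * ((m:ℤ) - a d)
        = c s * (s + 1) * m.choose (s+1) + c s * ((s : ℤ) - a d) * m.choose s := by
      intro s
      linear_combination (c s) * choose_rec m s
    rw [Finset.sum_congr rfl (fun s _ => key s), Finset.sum_add_distrib]
    have split : ∀ s ∈ range (d + 1 + 1),
        ((if 1 ≤ s then c (s - 1) * s else 0) + c s * (s - a d)) * m.choose s
        = (if 1 ≤ s then c (s - 1) * s else 0) * m.choose s + c s * ((s:ℤ) - a d) * m.choose s := by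
      intro s _; ring
    rw [Finset.sum_congr rfl split, Finset.sum_add_distrib]
    congr 1
    · rw [Finset.sum_range_succ' (fun s => (if 1 ≤ s then c (s - 1) * s else 0) * (m.choose s : ℤ))]
      have hcg : ∀ i ∈ range (d+1),
          (if 1 ≤ i+1 then c (i+1-1) * ((i+1 : ℕ) : ℤ) else 0) * (m.choose (i+1) : ℤ)
            = c i * ((i:ℤ) + 1) * m.choose (i+1) := by
        intro i _
        rw [if_pos (by omega)]
        push_cast
        ring
      rw [Finset.sum_congr rfl hcg]
      simp
    · rw [eq_comm, Finset.sum_range_succ, hsupp (d+1) le_rfl]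
      simp


/-- `choose (2^s + b) (2^s - 1)` is even for `0 ≤ b ≤ 2^s - 2`. -/
lemma even_choose_pow2 : ∀ s : ℕ, 1 ≤ s → ∀ b : ℕ, b ≤ 2 ^ s - 2 →
    2 ∣ Nat.choose (2 ^ s + b) (2 ^ s - 1) := by
  intro s
  induction s with
  | zero => omega
  | succ s ih =>
    intro _ b hb
    rcases Nat.eq_zero_or_pos s with rfl | hs
    · interval_cases b
      · norm_num
    · -- s ≥ 1
      have hP : 2 ≤ 2 ^ s := Nat.one_lt_two_pow (by omega)
      have hlucas := @Choose.choose_modEq_choose_mod_mul_choose_div_nat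
        (2 ^ (s+1) + b) (2 ^ (s+1) - 1) 2 ⟨Nat.prime_two⟩
      have hn2 : (2 ^ (s+1) + b) % 2 = b % 2 := by
        have : 2 ^ (s+1) % 2 = 0 := by
          simp [Nat.pow_succ, Nat.mul_mod]
        omega
      have hnd : (2 ^ (s+1) + b) / 2 = 2 ^ s + b / 2 := by
        have h2 : 2 ^ (s+1) = 2 * 2 ^ s := by ring
        omega
      have hk2 : (2 ^ (s+1) - 1) % 2 = 1 := by
        have h2 : 2 ^ (s+1) = 2 * 2 ^ s := by ring
        omega
      have hkd : (2 ^ (s+1) - 1) / 2 = 2 ^ s - 1 := by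
        have h2 : 2 ^ (s+1) = 2 * 2 ^ s := by ring
        omega
      rw [hn2, hnd, hk2, hkd] at hlucas
      have hdvd : 2 ∣ (b % 2).choose 1 * (2 ^ s + b / 2).choose (2 ^ s - 1) := by
        rcases Nat.even_or_odd b with he | ho
        · have : b % 2 = 0 := Nat.even_iff.mp he
          simp [this]
        · have h1 : b % 2 = 1 := Nat.odd_iff.mp ho
          rw [h1]
          simp only [Nat.choose_self, one_mul]
          have h2 : 2 ^ (s+1) = 2 * 2 ^ s := by ring
          exact ih hs (b / 2) (by omega)
      exact (Nat.modEq_zero_iff_dvd).mp (hlucas.trans (Nat.modEq_zero_iff_dvd.mpr hdvd))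


/-- The auxiliary polynomial-type function `hval q m = ∏_{i=1}^{q-1} (m - q - i)`. -/
def hval (q : ℕ) (m : ℕ) : ℤ := ∏ i ∈ range (q - 1), ((m : ℤ) - q - (i + 1))

lemma hval_diag (q : ℕ) (hq : 1 ≤ q) : hval q (2 * q) = ((q - 1).factorial : ℤ) := by
  unfold hval
  have h1 : ∀ i ∈ range (q - 1), ((2 * q : ℕ) : ℤ) - q - (i + 1) = (((q - 1) - i : ℕ) : ℤ) := by
    intro i hi
    simp only [mem_range] at hi
    omega
  rw [Finset.prod_congr rfl h1, ← Nat.cast_prod]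
  rw [← Nat.descFactorial_eq_prod_range (q-1) (q-1), Nat.descFactorial_self]

lemma hval_zero_of_between (q m : ℕ) (h1 : q < m) (h2 : m ≤ 2 * q - 1) : hval q m = 0 := by
  unfold hval
  apply Finset.prod_eq_zero (i := m - q - 1)
  · simp only [mem_range]; omega
  · omega

lemma hval_eq_of_lt (q m : ℕ) (h1 : 1 ≤ m) (h2 : m < q) :
    hval q m = (-1) ^ (q - 1) * ((2 * q - 1 - m).descFactorial (q - 1) : ℤ) := by
  unfold hval
  have h1' : ∀ i ∈ range (q - 1), ((m : ℤ) - q - (i + 1)) = (-1) * (((q + 1 + i - m : ℕ) : ℤ)) := by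
    intro i hi
    simp only [mem_range] at hi
    omega
  rw [Finset.prod_congr rfl h1', Finset.prod_mul_distrib, Finset.prod_const, Finset.card_range]
  congr 1
  rw [← Nat.cast_prod]
  congr 1
  have hre := Finset.prod_range_reflect (fun j => q + 1 + j - m) (q - 1)
  rw [← hre, Nat.descFactorial_eq_prod_range]
  apply Finset.prod_congr rfl
  intro j hj
  simp only [mem_range] at hj
  omega

/-- divisibility of the off-diagonal small-intersection values -/
lemma hval_small_dvd (s q m : ℕ) (hq : q = 2 ^ s) (h1 : 1 ≤ m) (h2 : m < q) :
    (2 : ℤ) ^ (((q - 1).factorial.factorization 2) + 1) ∣ hval q m := by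
  set v := (q - 1).factorial.factorization 2 with hv
  have hs : 1 ≤ s := by
    rcases Nat.eq_zero_or_pos s with rfl | h
    · omega
    · exact h
  rw [hval_eq_of_lt q m h1 h2]
  have hdesc : (2 * q - 1 - m).descFactorial (q - 1)
      = (q - 1).factorial * (2 * q - 1 - m).choose (q - 1) :=
    Nat.descFactorial_eq_factorial_mul_choose _ _
  have hchoose : 2 ∣ (2 * q - 1 - m).choose (q - 1) := by
    have h0 := even_choose_pow2 s hs (q - 1 - m) (by omega)
    have e1 : 2 ^ s + (q - 1 - m) = 2 * q - 1 - m := by omega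
    have e2 : 2 ^ s - 1 = q - 1 := by omega
    rw [e1, e2] at h0
    exact h0
  have hfact : (2 : ℕ) ^ v ∣ (q - 1).factorial := Nat.ordProj_dvd _ 2
  obtain ⟨u, hu⟩ := hfact
  obtain ⟨w, hw⟩ := hchoose
  refine ⟨(-1) ^ (q - 1) * (u * w), ?_⟩
  rw [hdesc, hu, hw]
  push_cast
  ring

/-- The core Frankl–Wilson style bound: an intersecting family of `2q`-sets, `q = 2^s`,
with no pairwise intersection of size exactly `q`, has size at most `∑_{t<q} C(n,t)`. -/
lemma indep_intersecting_bound (n s q : ℕ) (hq : q = 2 ^ s)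
    (F : Finset {A : Finset (Fin n) // A.card = 2 * q})
    (x0 : Fin n) (hx : ∀ A ∈ F, x0 ∈ A.1)
    (hind : ∀ A ∈ F, ∀ B ∈ F, A ≠ B → (A.1 ∩ B.1).card ≠ q) :
    F.card ≤ ∑ t ∈ range q, n.choose t := by
  classical
  have hq1 : 1 ≤ q := by rw [hq]; exact Nat.one_le_two_pow
  -- the coefficients
  obtain ⟨c, hcsupp, hc⟩ := prod_linear_eq_sum_choose (q - 1) (fun i => (q : ℤ) + (i + 1))
  have hcval : ∀ m : ℕ, hval q m = ∑ t ∈ range q, c t * m.choose t := by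
    intro m
    have : hval q m = ∏ i ∈ range (q-1), ((m : ℤ) - ((q : ℤ) + (i + 1))) := by
      unfold hval
      exact Finset.prod_congr rfl (fun i _ => by ring)
    rw [this, hc m, Nat.sub_add_cancel hq1]
  -- the column type
  set ι := {S : Finset (Fin n) // S.card < q} with hι
  have hcards : Fintype.card ι = ∑ t ∈ range q, n.choose t := by
    rw [Fintype.card_subtype]
    have hsplit : (univ.filter (fun S : Finset (Fin n) => S.card < q))
        = (range q).biUnion (fun t => Finset.powersetCard t univ) := by
      ext S
      simp only [mem_filter, mem_univ, true_and, mem_biUnion, mem_range,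
        Finset.mem_powersetCard]
      constructor
      · intro h; exact ⟨S.card, h, S.subset_univ, rfl⟩
      · rintro ⟨t, ht, _, rfl⟩; exact ht
    rw [hsplit, Finset.card_biUnion]
    · apply Finset.sum_congr rfl
      intro t _
      rw [Finset.card_powersetCard, Finset.card_univ, Fintype.card_fin]
    · intro a _ b _ hab
      simp only [Finset.disjoint_left]
      intro S hS hS'
      rw [Finset.mem_powersetCard] at hS hS'
      exact hab (hS.2 ▸ hS'.2)
  -- matrices
  let M : Matrix F ι ℤ := fun A S => if S.1 ⊆ A.1.1 then 1 else 0
  let Cd : Matrix ι ι ℤ := Matrix.diagonal (fun S => c S.1.card)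
  let Hm : Matrix F F ℤ := M * Cd * Mᵀ
  have hentry : ∀ A B : F, Hm A B = hval q ((A.1.1 ∩ B.1.1).card) := by
    intro A B
    have h1 : Hm A B = ∑ S : ι, (M A S * c S.1.card) * M B S := by
      simp only [Hm, Matrix.mul_assoc, Matrix.mul_apply, Matrix.diagonal_mul,
        Matrix.transpose_apply]
      have hinner : ∀ S : ι, (∑ x : ι, Cd S x * M B x) = c S.1.card * M B S := by
        intro S
        simp only [Cd, Matrix.diagonal_apply, ite_mul, zero_mul]
        rw [Finset.sum_ite_eq]
        simp
      exact Finset.sum_congr rfl (fun S _ => by rw [hinner S]; ring)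
    rw [h1]
    have h2 : ∀ S : ι, (M A S * c S.1.card) * M B S
        = if S.1 ⊆ A.1.1 ∩ B.1.1 then c S.1.card else 0 := by
      intro S
      simp only [M, Finset.subset_inter_iff]
      by_cases hA : S.1 ⊆ A.1.1 <;> by_cases hB : S.1 ⊆ B.1.1 <;>
        simp [hA, hB]
    rw [Finset.sum_congr rfl (fun S _ => h2 S)]
    -- convert subtype sum to a sum over a filtered finset
    rw [← Finset.sum_subtype (univ.filter (fun S : Finset (Fin n) => S.card < q))
        (by intro x; simp [hι]) (fun S => if S ⊆ A.1.1 ∩ B.1.1 then c S.card else 0)]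
    rw [← Finset.sum_filter]
    have hsplit2 : (univ.filter (fun S : Finset (Fin n) => S.card < q)).filter
        (fun S => S ⊆ A.1.1 ∩ B.1.1)
        = (range q).biUnion (fun t => Finset.powersetCard t (A.1.1 ∩ B.1.1)) := by
      ext S
      simp only [mem_filter, mem_univ, true_and, mem_biUnion, mem_range,
        Finset.mem_powersetCard]
      constructor
      · rintro ⟨h1, h2⟩; exact ⟨S.card, h1, h2, rfl⟩
      · rintro ⟨t, ht, hsub, rfl⟩; exact ⟨ht, hsub⟩
    rw [hsplit2, Finset.sum_biUnion]
    · rw [hcval]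
      apply Finset.sum_congr rfl
      intro t ht
      have : ∀ S ∈ Finset.powersetCard t (A.1.1 ∩ B.1.1), c S.card = c t := by
        intro S hS
        rw [(Finset.mem_powersetCard.mp hS).2]
      rw [Finset.sum_congr rfl this, Finset.sum_const, Finset.card_powersetCard]
      push_cast
      ring
    · intro a _ b _ hab
      simp only [Finset.disjoint_left]
      intro S hS hS'
      rw [Finset.mem_powersetCard] at hS hS'
      exact hab (hS.2 ▸ hS'.2)
  -- valuation data
  set v := (q - 1).factorial.factorization 2 with hv
  obtain ⟨u, hu, hodd⟩ : ∃ u : ℕ, (q - 1).factorial = 2 ^ v * u ∧ ¬ 2 ∣ u := by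
    refine ⟨(q - 1).factorial / 2 ^ v, ?_, ?_⟩
    · exact (Nat.ordProj_mul_ordCompl_eq_self (q-1).factorial 2).symm
    · exact Nat.not_dvd_ordCompl Nat.prime_two (Nat.factorial_ne_zero _)
  -- diagonal entries
  have hdiagH : ∀ A : F, Hm A A = ((q - 1).factorial : ℤ) := by
    intro A
    rw [hentry A A, Finset.inter_self, A.1.2]
    exact hval_diag q hq1
  -- off-diagonal divisibility
  have hoffH : ∀ A B : F, A ≠ B → (2 : ℤ) ^ (v + 1) ∣ Hm A B := by
    intro A B hAB
    rw [hentry A B]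
    set m := (A.1.1 ∩ B.1.1).card with hm
    have hne : A.1 ≠ B.1 := fun h => hAB (Subtype.ext h)
    have hm1 : 1 ≤ m := by
      rw [hm, Nat.one_le_iff_ne_zero, ← Nat.pos_iff_ne_zero, Finset.card_pos]
      exact ⟨x0, Finset.mem_inter.mpr ⟨hx A.1 A.2, hx B.1 B.2⟩⟩
    have hcA : A.1.1.card = 2 * q := A.1.2
    have hcB : B.1.1.card = 2 * q := B.1.2
    have hmle : m ≤ 2 * q := by
      have := Finset.card_le_card (Finset.inter_subset_left : A.1.1 ∩ B.1.1 ⊆ A.1.1)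
      omega
    have hmne2q : m ≠ 2 * q := by
      intro hcontr
      have hsub : A.1.1 ∩ B.1.1 = A.1.1 :=
        Finset.eq_of_subset_of_card_le Finset.inter_subset_left (by omega)
      have hAB' : A.1.1 ⊆ B.1.1 := by
        rw [← hsub]; exact Finset.inter_subset_right
      exact hne (Subtype.ext (Finset.eq_of_subset_of_card_le hAB' (by omega)))
    have hmq : m ≠ q := hind A.1 A.2 B.1 B.2 hne
    rcases lt_or_gt_of_ne hmq with hlt | hgt
    · exact hval_small_dvd s q m hq hm1 hlt
    · rw [hval_zero_of_between q m hgt (by omega)]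
      exact dvd_zero _
  -- all entries divisible by 2^v
  have hdvdall : ∀ A B : F, (2 : ℤ) ^ v ∣ Hm A B := by
    intro A B
    rcases eq_or_ne A B with rfl | hne
    · rw [hdiagH A, hu]
      push_cast
      exact Dvd.intro _ rfl
    · exact dvd_trans (pow_dvd_pow 2 (Nat.le_succ v)) (hoffH A B hne)
  -- the reduced matrix
  let E : Matrix F F ℤ := fun A B => Hm A B / 2 ^ v
  have hHE : ∀ A B : F, Hm A B = (2 : ℤ) ^ v * E A B := by
    intro A B
    exact (Int.mul_ediv_cancel' (hdvdall A B)).symm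
  have h2v0 : (2 : ℤ) ^ v ≠ 0 := by positivity
  have hEdiag : ∀ A : F, E A A = (u : ℤ) := by
    intro A
    have : Hm A A = (2 : ℤ) ^ v * u := by rw [hdiagH A, hu]; push_cast; ring
    simp only [E, this]
    exact Int.mul_ediv_cancel_left _ h2v0
  have hEoff : ∀ A B : F, A ≠ B → ∃ w : ℤ, E A B = 2 * w := by
    intro A B hne
    obtain ⟨w, hw⟩ := hoffH A B hne
    refine ⟨w, ?_⟩
    have h1 : Hm A B = (2 : ℤ) ^ v * (2 * w) := by
      rw [hw, pow_succ]
      ring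
    simp only [E, h1]
    exact Int.mul_ediv_cancel_left _ h2v0
  -- E is the identity mod 2
  have hEmod : E.map (Int.cast : ℤ → ZMod 2) = 1 := by
    ext A B
    rcases eq_or_ne A B with rfl | hne
    · rw [Matrix.map_apply, hEdiag A, Matrix.one_apply_eq]
      have hu2 : u % 2 = 1 := by omega
      have : ((u : ℤ) : ZMod 2) = ((u : ℕ) : ZMod 2) := by push_cast; ring
      rw [this, ← ZMod.natCast_mod u 2, hu2]
      simp
    · obtain ⟨w, hw⟩ := hEoff A B hne
      rw [Matrix.map_apply, hw, Matrix.one_apply_ne hne]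
      push_cast
      rw [show (2 : ZMod 2) = 0 by decide]
      ring
  -- determinant of E is odd, hence nonzero
  have hdetE : E.det ≠ 0 := by
    intro hcontr
    have h1 : ((Int.castRingHom (ZMod 2)).mapMatrix E).det = 1 := by
      have : (Int.castRingHom (ZMod 2)).mapMatrix E = E.map (Int.cast : ℤ → ZMod 2) := rfl
      rw [this, hEmod, Matrix.det_one]
    rw [← RingHom.map_det, hcontr] at h1
    simp at h1
  -- determinant of Hm is nonzero
  have hHmE : Hm = ((2 : ℤ) ^ v) • E := by
    ext A B
    rw [Matrix.smul_apply, hHE A B]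
    simp
  have hdetH : Hm.det ≠ 0 := by
    rw [hHmE, Matrix.det_smul]
    exact mul_ne_zero (pow_ne_zero _ h2v0) hdetE
  -- move to ℚ and use rank
  let Mq : Matrix F ι ℚ := M.map ⇑(Int.castRingHom ℚ)
  let Hq : Matrix F F ℚ := Hm.map ⇑(Int.castRingHom ℚ)
  have hdetHq : Hq.det ≠ 0 := by
    have : Hq = ((Int.castRingHom ℚ).mapMatrix Hm) := rfl
    rw [this, ← RingHom.map_det]
    simpa using hdetH
  have hrank1 : Hq.rank = F.card := by
    rw [Matrix.rank_of_isUnit Hq ((Matrix.isUnit_iff_isUnit_det Hq).mpr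
      (isUnit_iff_ne_zero.mpr hdetHq))]
    exact Fintype.card_coe F
  have hfactor : Hq = Mq * ((Cd * Mᵀ).map ⇑(Int.castRingHom ℚ)) := by
    have h0 : Hm = M * (Cd * Mᵀ) := Matrix.mul_assoc M Cd Mᵀ
    calc Hq = (M * (Cd * Mᵀ)).map ⇑(Int.castRingHom ℚ) := by
          rw [show Hq = Hm.map ⇑(Int.castRingHom ℚ) from rfl, h0]
      _ = Mq * ((Cd * Mᵀ).map ⇑(Int.castRingHom ℚ)) := Matrix.map_mul (f := Int.castRingHom ℚ)
  have hrank2 : Hq.rank ≤ Fintype.card ι := by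
    rw [hfactor]
    exact le_trans (Matrix.rank_mul_le_left _ _) (Matrix.rank_le_card_width Mq)
  rw [← hcards]
  omega

/-- The graph `G(n,k)` whose vertices are the `k`-element subsets of `[n]`, two
subsets being adjacent iff their intersection has exactly `k/2` elements. -/
def interGraph (n k : ℕ) : SimpleGraph {A : Finset (Fin n) // A.card = k} where
  Adj A B := A ≠ B ∧ (A.1 ∩ B.1).card = k / 2
  symm := by
    constructor
    intro A B h
    exact ⟨h.1.symm, by rw [Finset.inter_comm]; exact h.2⟩
  loopless := by constructor; intro A h; exact h.1 rfl


section Count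

variable (n q : ℕ)

/-- counting bound: the number of vertices is at most (number of colors) * n * D -/
lemma count_bound (s : ℕ) (hq : q = 2 ^ s) (hn : 1 ≤ n) :
    n.choose (2 * q) ≤ (interGraph n (2 * q)).chromaticNumber.toNat *
      (n * (2 * ∑ t ∈ Finset.range q, n.choose t)) := by
  classical
  set G := interGraph n (2 * q) with hG
  set cn := G.chromaticNumber.toNat with hcn
  obtain ⟨Cl⟩ := G.colorable_chromaticNumber_of_fintype
  set D := ∑ t ∈ Finset.range q, n.choose t with hD
  -- each fiber of the coloring is small
  have fiber_bound : ∀ j : Fin cn,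
      (Finset.univ.filter (fun A => Cl A = j)).card ≤ n * D := by
    intro j
    set Fib := Finset.univ.filter (fun A : {A : Finset (Fin n) // A.card = 2 * q} => Cl A = j)
      with hFib
    -- Fib.card ≤ ∑_x (number of members containing x)
    have step1 : Fib.card ≤ ∑ x : Fin n, (Fib.filter (fun A => x ∈ A.1)).card := by
      have expand : ∀ x : Fin n, (Fib.filter (fun A => x ∈ A.1)).card
          = ∑ A ∈ Fib, (if x ∈ A.1 then 1 else 0) := by
        intro x
        rw [Finset.card_filter]
      rw [Finset.sum_congr rfl (fun x _ => expand x), Finset.sum_comm]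
      have inner : ∀ A ∈ Fib, (∑ x : Fin n, if x ∈ A.1 then 1 else 0) = 2 * q := by
        intro A _
        rw [Finset.sum_ite_mem]
        simp only [Finset.univ_inter, Finset.sum_const, smul_eq_mul, mul_one]
        exact A.2
      rw [Finset.sum_congr rfl inner, Finset.sum_const, smul_eq_mul]
      have hq1 : 1 ≤ q := by rw [hq]; exact Nat.one_le_two_pow
      nlinarith [Fib.card.le_refl]
    -- each of those is an intersecting independent family
    have step2 : ∀ x : Fin n, (Fib.filter (fun A => x ∈ A.1)).card ≤ D := by
      intro x
      apply indep_intersecting_bound n s q hq _ x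
      · intro A hA
        exact (Finset.mem_filter.mp hA).2
      · intro A hA B hB hAB
        have hA' := Finset.mem_filter.mp (Finset.mem_filter.mp hA).1
        have hB' := Finset.mem_filter.mp (Finset.mem_filter.mp hB).1
        have hcol : Cl A = Cl B := by
          rw [hA'.2, hB'.2]
        intro hcard
        have h2q : 2 * q / 2 = q := by omega
        exact (Cl.valid ⟨hAB, by rw [h2q]; exact hcard⟩) hcol
    calc Fib.card ≤ ∑ x : Fin n, (Fib.filter (fun A => x ∈ A.1)).card := step1
      _ ≤ ∑ _x : Fin n, D := Finset.sum_le_sum (fun x _ => step2 x)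
      _ = n * D := by simp [Finset.sum_const, Finset.card_univ]
  -- total count
  have total : (Finset.univ : Finset {A : Finset (Fin n) // A.card = 2 * q}).card
      = ∑ j : Fin cn, (Finset.univ.filter (fun A => Cl A = j)).card := by
    exact Finset.card_eq_sum_card_fiberwise (fun x _ => Finset.mem_univ (Cl x))
  have hcard : (Finset.univ : Finset {A : Finset (Fin n) // A.card = 2 * q}).card
      = n.choose (2 * q) := by
    rw [Finset.card_univ]
    rw [Fintype.card_finset_len]
    simp
  calc n.choose (2 * q) = ∑ j : Fin cn, (Finset.univ.filter (fun A => Cl A = j)).card := by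
        rw [← hcard, total]
    _ ≤ ∑ _j : Fin cn, n * D := Finset.sum_le_sum (fun j _ => fiber_bound j)
    _ = cn * (n * D) := by simp [Finset.sum_const, Finset.card_univ]
    _ ≤ cn * (n * (2 * D)) := by
        apply Nat.mul_le_mul_left
        apply Nat.mul_le_mul_left
        omega

end Count

lemma sum_choose_le_aux (n q : ℕ) (hn : 64 * (2 * q) ≤ n) :
    ∀ t, t < q → ∑ j ∈ Finset.range (t + 1), n.choose j ≤ 2 * n.choose t := by
  intro t
  induction t with
  | zero => intro _; simp
  | succ t ih =>
    intro ht
    rw [Finset.sum_range_succ]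
    have h1 : ∑ j ∈ Finset.range (t + 1), n.choose j ≤ 2 * n.choose t := ih (by omega)
    have h2 : 2 * n.choose t ≤ n.choose (t + 1) := by
      have hid := Nat.choose_succ_right_eq n t
      have hcoef : 2 * (t + 1) ≤ n - t := by omega
      have : 2 * n.choose t * (t + 1) ≤ n.choose (t + 1) * (t + 1) := by
        calc 2 * n.choose t * (t + 1) = n.choose t * (2 * (t + 1)) := by ring
          _ ≤ n.choose t * (n - t) := Nat.mul_le_mul_left _ hcoef
          _ = n.choose (t + 1) * (t + 1) := hid.symm
      exact Nat.le_of_mul_le_mul_right this (by omega)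
    omega

theorem stmt5 (n k' : ℕ) (hpow : ∃ i : ℕ, k' = 2 ^ i) (hk : 2 ≤ k') (hn : 64 * k' ≤ n) :
    ((k' : ℝ) / 12) * Real.logb 2 ((n : ℝ) / k') ≤
      Real.logb 2 (((interGraph n k').chromaticNumber.toNat : ℝ)) := by
  classical
  obtain ⟨i, hi⟩ := hpow
  have hi1 : 1 ≤ i := by
    rcases Nat.eq_zero_or_pos i with rfl | h
    · omega
    · exact h
  set s := i - 1 with hs
  set q := 2 ^ s with hq
  have hk2q : k' = 2 * q := by
    rw [hi, hq, hs, ← pow_succ']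
    congr 1
    omega
  subst hk2q
  have hq1 : 1 ≤ q := Nat.one_le_two_pow
  have hn1 : 1 ≤ n := by omega
  set c := (interGraph n (2 * q)).chromaticNumber.toNat with hc
  set D := ∑ t ∈ Finset.range q, n.choose t with hD
  have hcount : n.choose (2 * q) ≤ c * (n * (2 * D)) := count_bound n q s rfl hn1
  have hDle : D ≤ 2 * n.choose (q - 1) := by
    have := sum_choose_le_aux n q hn (q - 1) (by omega)
    rw [hD]
    have hq' : q - 1 + 1 = q := by omega
    rw [← hq']
    exact this
  -- real numbers
  set β : ℝ := (n : ℝ) / (2 * (2 * q)) with hβ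
  have hqR : (0:ℝ) < (q : ℝ) := by positivity
  have hnR : (0:ℝ) < (n : ℝ) := by exact_mod_cast hn1
  have hβpos : 0 < β := by positivity
  have hβ32 : 32 ≤ β := by
    rw [hβ, le_div_iff₀ (by positivity)]
    push_cast
    have : (64 : ℝ) * (2 * q) ≤ n := by exact_mod_cast hn
    linarith
  have hn4q : (n : ℝ) = 4 * q * β := by
    rw [hβ]
    field_simp
    ring
  -- ratio step
  have hstep : ∀ t : ℕ, t + 1 ≤ 2 * q → β * n.choose t ≤ n.choose (t + 1) := by
    intro t ht
    have hid := congrArg (Nat.cast : ℕ → ℝ) (Nat.choose_succ_right_eq n t)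
    have htn : t ≤ n := by omega
    push_cast [htn] at hid
    have hchoosepos : (0:ℝ) ≤ n.choose t := by positivity
    have hcoef : β * (t + 1) ≤ (n : ℝ) - t := by
      have h1 : β * (t + 1) ≤ β * (2 * q) := by
        apply mul_le_mul_of_nonneg_left _ (le_of_lt hβpos)
        exact_mod_cast ht
      have h2 : β * (2 * q) = (n : ℝ) / 2 := by
        rw [hβ]; field_simp
      have h3 : (n : ℝ) - t ≥ (n : ℝ) / 2 := by
        have : (t : ℝ) ≤ 2 * q := by exact_mod_cast (by omega : t ≤ 2 * q)
        have h4 : (2 * q : ℝ) * 2 ≤ n := by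
          have : (64:ℝ) * (2 * q) ≤ n := by exact_mod_cast hn
          linarith
        push_cast at h4 ⊢
        linarith
      linarith [h1, h2 ▸ h1]
    have : β * n.choose t * (t + 1) ≤ (n.choose (t+1) : ℝ) * (t + 1) := by
      calc β * n.choose t * (t + 1) = (n.choose t : ℝ) * (β * (t + 1)) := by ring
        _ ≤ (n.choose t : ℝ) * ((n : ℝ) - t) := by
            apply mul_le_mul_of_nonneg_left hcoef hchoosepos
        _ = (n.choose (t+1) : ℝ) * (t + 1) := by linarith [hid]
    have htpos : (0:ℝ) < (t : ℝ) + 1 := by positivity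
    exact le_of_mul_le_mul_right this htpos
  -- iterated ratio step
  have hiter : ∀ j a : ℕ, a + j ≤ 2 * q → β ^ j * n.choose a ≤ n.choose (a + j) := by
    intro j
    induction j with
    | zero => intro a _; simp
    | succ j ih =>
      intro a ha
      have h1 : β ^ (j+1) * n.choose a = β * (β ^ j * n.choose a) := by ring
      rw [h1]
      calc β * (β ^ j * n.choose a) ≤ β * n.choose (a + j) := by
            apply mul_le_mul_of_nonneg_left (ih a (by omega)) (le_of_lt hβpos)
        _ ≤ n.choose (a + j + 1) := hstep (a + j) (by omega)
        _ = n.choose (a + (j + 1)) := by rw [Nat.add_assoc]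
  have hmain : β ^ (q + 1) * n.choose (q - 1) ≤ n.choose (2 * q) := by
    have := hiter (q + 1) (q - 1) (by omega)
    have he : q - 1 + (q + 1) = 2 * q := by omega
    rw [he] at this
    exact this
  -- combine with the counting bound
  have hCpos : (0:ℝ) < n.choose (q - 1) := by
    have : q - 1 ≤ n := by omega
    exact_mod_cast Nat.choose_pos this
  have hc1 : β ^ (q + 1) ≤ 4 * c * n := by
    have hcastN : n.choose (2*q) ≤ c * (n * (2 * (2 * n.choose (q-1)))) :=
      le_trans hcount (Nat.mul_le_mul_left _ (Nat.mul_le_mul_left _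
        (Nat.mul_le_mul_left _ hDle)))
    have hcast : (n.choose (2 * q) : ℝ) ≤ c * (n * (2 * (2 * n.choose (q-1)))) := by
      exact_mod_cast hcastN
    have h2 : β ^ (q + 1) * n.choose (q - 1) ≤ (4 * c * n) * n.choose (q - 1) := by
      calc β ^ (q + 1) * n.choose (q - 1) ≤ (n.choose (2*q) : ℝ) := hmain
        _ ≤ c * (n * (2 * (2 * n.choose (q-1)))) := hcast
        _ = (4 * c * n) * n.choose (q - 1) := by push_cast; ring
    exact le_of_mul_le_mul_right h2 hCpos
  have hcpos : (0:ℝ) < c := by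
    by_contra hcon
    push_neg at hcon
    have hc0 : (c:ℝ) = 0 := le_antisymm hcon (by positivity)
    rw [hc0] at hc1
    have : (0:ℝ) < β ^ (q+1) := by positivity
    linarith
  -- the key polynomial inequality
  have hq2 : (q : ℝ) ≤ 2 ^ (q - 1) := by
    have := Nat.lt_two_pow_self (n := q - 1)
    have h2 : q ≤ 2 ^ (q - 1) := by omega
    exact_mod_cast h2
  have e2 : (2*β) ^ (2*q) * (4*(n:ℝ)) ^ 12 ≤ β ^ (12 * (q + 1)) := by
    have lhs_eq : (2*β) ^ (2*q) * (4*(n:ℝ)) ^ 12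
        = 2 ^ (2*q) * 16 ^ 12 * (q:ℝ) ^ 12 * (β ^ (2*q) * β ^ 12) := by
      rw [hn4q, mul_pow (2:ℝ) β (2*q)]
      ring
    have rhs_eq : β ^ (12 * (q + 1)) = β ^ (10 * q) * (β ^ (2*q) * β ^ 12) := by
      rw [← pow_add, ← pow_add]
      congr 1
      omega
    rw [lhs_eq, rhs_eq]
    apply mul_le_mul_of_nonneg_right _ (by positivity)
    calc (2:ℝ) ^ (2*q) * 16 ^ 12 * (q:ℝ) ^ 12
        ≤ 2 ^ (2*q) * 16 ^ 12 * (2:ℝ) ^ (12 * (q-1)) := by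
          apply mul_le_mul_of_nonneg_left _ (by positivity)
          calc (q:ℝ) ^ 12 ≤ ((2:ℝ) ^ (q-1)) ^ 12 := by
                apply pow_le_pow_left₀ (by positivity) hq2
            _ = (2:ℝ) ^ (12 * (q-1)) := by rw [← pow_mul]; ring_nf
      _ = (2:ℝ) ^ (2*q + 48 + 12*(q-1)) := by
          rw [pow_add, pow_add]
          norm_num
      _ ≤ (2:ℝ) ^ (50 * q) := by
          apply pow_le_pow_right₀ one_le_two
          omega
      _ = (32:ℝ) ^ (10 * q) := by
          rw [show (32:ℝ) = 2^5 by norm_num, ← pow_mul]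
          congr 1
          omega
      _ ≤ β ^ (10 * q) := pow_le_pow_left₀ (by positivity) hβ32 _
  -- conclude (n/k')^{k'} ≤ c^12
  have key : ((n:ℝ) / (2*q)) ^ (2*q) ≤ (c:ℝ) ^ 12 := by
    have h2β : (n:ℝ) / (2*q) = 2 * β := by
      rw [hβ]
      field_simp
    rw [h2β]
    have e1 : β ^ (12 * (q+1)) ≤ (c:ℝ)^12 * (4*(n:ℝ))^12 := by
      calc β ^ (12 * (q+1)) = (β ^ (q+1)) ^ 12 := by rw [← pow_mul, Nat.mul_comm]
        _ ≤ (4 * c * n) ^ 12 := pow_le_pow_left₀ (by positivity) hc1 _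
        _ = (c:ℝ)^12 * (4*(n:ℝ))^12 := by ring
    have := le_trans e2 e1
    have h4npos : (0:ℝ) < (4*(n:ℝ))^12 := by positivity
    exact le_of_mul_le_mul_right this h4npos
  -- final logarithm manipulation
  have hxpos : (0:ℝ) < ((n:ℝ) / (2*q)) ^ (2*q) := by positivity
  have hcpow : (0:ℝ) < (c:ℝ) ^ 12 := by positivity
  have hlog := (Real.logb_le_logb one_lt_two hxpos hcpow).mpr key
  rw [Real.logb_pow, Real.logb_pow] at hlog
  push_cast at hlog ⊢
  linarith
end

section
/- Let n and k be integers with 2 ≤ k ≤ n, let k' be a power of 2 with k/2 < k' ≤ k, and let 𝓕 be an (n,k)-selective family of subsets of [n]. Then χ(G(n,k')) ≤ 2^{|𝓕|}, i.e. |𝓕| ≥ log₂ χ(G(n,k')). -/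
open scoped symmDiff


lemma card_symmDiff_aux {α : Type*} [DecidableEq α] (s t : Finset α) :
    ((s ∆ t)).card + 2 * (s ∩ t).card = s.card + t.card := by
  have h1 := Finset.card_sdiff_add_card_inter s t
  have h2 := Finset.card_sdiff_add_card_inter t s
  have hd : Disjoint (s \ t) (t \ s) := by
    exact disjoint_sdiff_sdiff
  have : ((s ∆ t)).card = (s \ t).card + (t \ s).card := by
    rw [symmDiff_def, Finset.sup_eq_union, Finset.card_union_of_disjoint hd]
  rw [Finset.inter_comm t s] at h2
  omega

theorem stmt6 (n k k' : ℕ) (hk : 2 ≤ k) (hkn : k ≤ n)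
    (hpow : ∃ i : ℕ, k' = 2 ^ i) (h1 : k < 2 * k') (h2 : k' ≤ k)
    (F : Finset (Finset (Fin n))) (hF : SelectiveFamily n k F) :
    (interGraph n k').chromaticNumber ≤ 2 ^ F.card := by
  classical
  have hk2 : 2 ≤ k' := by omega
  have hk'even : 2 ∣ k' := by
    obtain ⟨i, rfl⟩ := hpow
    refine dvd_pow_self 2 ?_
    rintro rfl
    simp at hk2
  let c : {A : Finset (Fin n) // A.card = k'} → ({f // f ∈ F} → ZMod 2) :=
    fun A f => ((A.1 ∩ f.1).card : ZMod 2)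
  have hc : ∀ A B, (interGraph n k').Adj A B → c A ≠ c B := by
    intro A B hadj heq
    obtain ⟨hne, hint⟩ := hadj
    have hZne : ((A.1 ∆ B.1)).Nonempty := by
      rw [Finset.nonempty_iff_ne_empty]
      intro h
      apply hne
      ext x
      have := symmDiff_eq_bot.mp h
      rw [this]
    have hZcard : ((A.1 ∆ B.1)).card = k' := by
      have := card_symmDiff_aux A.1 B.1
      rw [A.2, B.2, hint] at this
      omega
    obtain ⟨f, hfF, hf1⟩ := hF _ hZne (by omega)
    have key : ((A.1 ∆ B.1)) ∩ f = ((A.1 ∩ f) ∆ (B.1 ∩ f)) := by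
      ext x
      simp only [Finset.mem_symmDiff, Finset.mem_inter]
      tauto
    have hcast : ((A.1 ∩ f).card : ZMod 2) = ((B.1 ∩ f).card : ZMod 2) :=
      congrFun heq ⟨f, hfF⟩
    have hmod : (A.1 ∩ f).card % 2 = (B.1 ∩ f).card % 2 :=
      (ZMod.natCast_eq_natCast_iff' _ _ _).mp hcast
    have hsd := card_symmDiff_aux (A.1 ∩ f) (B.1 ∩ f)
    rw [← key, hf1] at hsd
    omega
  have hcol : (interGraph n k').Colorable (Fintype.card ({f // f ∈ F} → ZMod 2)) :=
    (SimpleGraph.Coloring.mk c fun {A B} h => hc A B h).colorable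
  have hcard : Fintype.card ({f // f ∈ F} → ZMod 2) = 2 ^ F.card := by
    simp [Fintype.card_fun]
  rw [hcard] at hcol
  exact_mod_cast hcol.chromaticNumber_le
end

section
/- Let 𝓕 be an (n,k)-strongly-selective family with 3 ≤ k and k ≤ √(2n) − 1 (equivalently (k+1)² ≤ 2n). Then |𝓕| ≥ (k²/(48·log₂ k))·log₂ n. -/
open Finset

section Aux

variable {α β : Type*} [DecidableEq α] [DecidableEq β]

lemma chunk_cover (S : α → Finset β) (x : α) (s : ℕ)
    (hrich : ∀ B ⊆ S x, B.card ≤ s → ∃ y, y ≠ x ∧ B ⊆ S y) :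
    ∀ (m : ℕ) (W : Finset β), W ⊆ S x → W.card ≤ m * s →
      ∃ J : Finset α, x ∉ J ∧ J.card ≤ m ∧ W ⊆ J.biUnion S := by
  intro m
  induction m with
  | zero =>
    intro W hWx hWc
    refine ⟨∅, by simp, by simp, ?_⟩
    have : W = ∅ := Finset.card_eq_zero.mp (Nat.le_zero.mp (by simpa using hWc))
    simp [this]
  | succ m ih =>
    intro W hWx hWc
    by_cases hWs : W.card ≤ s
    · obtain ⟨y, hyx, hWy⟩ := hrich W hWx hWs
      refine ⟨{y}, by simp [Ne.symm hyx] , by simp, ?_⟩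
      intro a ha
      exact mem_biUnion.mpr ⟨y, mem_singleton_self y, hWy ha⟩
    · push_neg at hWs
      obtain ⟨W', hW'W, hW'card⟩ := Finset.exists_subset_card_eq (le_of_lt hWs : s ≤ W.card)
      obtain ⟨y, hyx, hWy⟩ := hrich W' (hW'W.trans hWx) (le_of_eq hW'card)
      have hrest : (W \ W').card ≤ m * s := by
        have := Finset.card_sdiff_of_subset hW'W
        have h2 : W.card ≤ m * s + s := by
          have : (m+1) * s = m * s + s := by ring
          omega
        omega
      obtain ⟨J₀, hxJ₀, hJ₀card, hcov⟩ := ih (W \ W') ((sdiff_subset).trans hWx) hrest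
      refine ⟨insert y J₀, ?_, ?_, ?_⟩
      · simp only [mem_insert]
        rintro (h | h)
        · exact hyx h.symm
        · exact hxJ₀ h
      · calc (insert y J₀).card ≤ J₀.card + 1 := card_insert_le _ _
          _ ≤ m + 1 := by omega
      · intro a ha
        by_cases haW' : a ∈ W'
        · exact mem_biUnion.mpr ⟨y, mem_insert_self _ _, hWy haW'⟩
        · have : a ∈ J₀.biUnion S := hcov (mem_sdiff.mpr ⟨ha, haW'⟩)
          obtain ⟨z, hz, haz⟩ := mem_biUnion.mp this
          exact mem_biUnion.mpr ⟨z, mem_insert_of_mem hz, haz⟩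

variable [Fintype α]

lemma coverfree_main (S : α → Finset β) (F : Finset β) (hSF : ∀ x, S x ⊆ F)
    (r s : ℕ)
    (hcf : ∀ (x : α) (J : Finset α), x ∉ J → J.card ≤ r → ¬ S x ⊆ J.biUnion S)
    (hs : 2 * F.card < s * (r * (r + 1))) :
    Fintype.card α ≤ r + ∑ b ∈ Finset.range (s + 1), (F.card).choose b := by
  classical
  set rich : α → Prop := fun x => ∀ B ⊆ S x, B.card ≤ s → ∃ y, y ≠ x ∧ B ⊆ S y with hrichdef
  -- # of rich elements is at most r
  have hrichcount : (univ.filter rich).card ≤ r := by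
    by_contra hcon
    push_neg at hcon
    set R := univ.filter rich with hR
    have greedy : ∀ j : ℕ, j ≤ r + 1 → ∃ J : Finset α, J ⊆ R ∧ J.card = j ∧
        2 * j + s * (j * (2 * r + 1)) ≤ 2 * (J.biUnion S).card + s * (j * j) := by
      intro j
      induction j with
      | zero => intro _; exact ⟨∅, empty_subset _, by simp, by simp⟩
      | succ j ih =>
        intro hj1
        obtain ⟨J, hJR, hJcard, hJbound⟩ := ih (by omega)
        have hjr : j ≤ r := by omega
        obtain ⟨c, hc⟩ : ∃ c, r = j + c := ⟨r - j, by omega⟩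
        -- pick a rich element not in J
        have hex : (R \ J).Nonempty := by
          rw [← card_pos]
          have h1 : R.card - J.card ≤ (R \ J).card := le_card_sdiff _ _
          omega
        obtain ⟨x, hx⟩ := hex
        have hxR : x ∈ R := (mem_sdiff.mp hx).1
        have hxJ : x ∉ J := (mem_sdiff.mp hx).2
        have hxrich : rich x := (mem_filter.mp hxR).2
        set U := J.biUnion S with hU
        -- key claim : S x has many new elements
        have hkey : c * s + 1 ≤ (S x \ U).card := by
          by_contra hsmall
          push_neg at hsmall
          have hle : (S x \ U).card ≤ c * s := by omega
          obtain ⟨J', hxJ', hJ'card, hcov⟩ :=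
            chunk_cover S x s hxrich c (S x \ U) sdiff_subset hle
          refine hcf x (J ∪ J') ?_ ?_ ?_
          · simp only [mem_union]; rintro (h | h); exact hxJ h; exact hxJ' h
          · calc (J ∪ J').card ≤ J.card + J'.card := card_union_le _ _
              _ ≤ r := by omega
          · intro a ha
            by_cases haU : a ∈ U
            · obtain ⟨z, hz, haz⟩ := mem_biUnion.mp haU
              exact mem_biUnion.mpr ⟨z, mem_union_left _ hz, haz⟩
            · obtain ⟨z, hz, haz⟩ := mem_biUnion.mp (hcov (mem_sdiff.mpr ⟨ha, haU⟩))
              exact mem_biUnion.mpr ⟨z, mem_union_right _ hz, haz⟩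
        refine ⟨insert x J, ?_, ?_, ?_⟩
        · exact insert_subset hxR hJR
        · rw [card_insert_of_notMem hxJ, hJcard]
        · have hbi : (insert x J).biUnion S = S x ∪ U := by
            rw [hU, biUnion_insert]
          have hcard : (S x ∪ U).card = (S x \ U).card + U.card := by
            rw [← card_sdiff_add_card]
          rw [hbi, hcard]
          subst hc
          nlinarith [hJbound, hkey]
    obtain ⟨J, hJR, hJcard, hJbound⟩ := greedy (r + 1) le_rfl
    have hUF : (J.biUnion S) ⊆ F := by
      intro a ha
      obtain ⟨z, _, haz⟩ := mem_biUnion.mp ha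
      exact hSF z haz
    have hUcard : (J.biUnion S).card ≤ F.card := card_le_card hUF
    nlinarith [hJbound, hUcard, hs]
  -- count the poor elements
  set T : Finset (Finset β) := (Finset.range (s + 1)).biUnion (fun b => F.powersetCard b) with hT
  have hTcard : T.card = ∑ b ∈ Finset.range (s + 1), (F.card).choose b := by
    rw [hT, card_biUnion]
    · exact Finset.sum_congr rfl (fun b _ => by rw [card_powersetCard])
    · intro i hi j hj hij
      intro u hu1 hu2 w hw
      exfalso
      have h1 := (mem_powersetCard.mp (hu1 hw)).2
      have h2 := (mem_powersetCard.mp (hu2 hw)).2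
      exact hij (h1 ▸ h2 ▸ rfl)
  have hpoor : (univ.filter (fun x => ¬ rich x)).card ≤ T.card := by
    have hprop : ∀ x ∈ univ.filter (fun x => ¬ rich x),
        ∃ B, B ⊆ S x ∧ B.card ≤ s ∧ ∀ y, y ≠ x → ¬ B ⊆ S y := by
      intro x hx
      have hnx : ¬ (∀ B ⊆ S x, B.card ≤ s → ∃ y, y ≠ x ∧ B ⊆ S y) := (mem_filter.mp hx).2
      push_neg at hnx
      obtain ⟨B, hB1, hB2, hB3⟩ := hnx
      exact ⟨B, hB1, hB2, fun y hy hBy => hB3 y hy hBy⟩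
    choose! f hf1 hf2 hf3 using hprop
    refine Finset.card_le_card_of_injOn f ?_ ?_
    · intro x hx
      rw [hT, mem_coe, mem_biUnion]
      refine ⟨(f x).card, ?_, ?_⟩
      · rw [mem_range]; exact Nat.lt_succ_of_le (hf2 x hx)
      · exact mem_powersetCard.mpr ⟨(hf1 x hx).trans (hSF x), rfl⟩
    · intro x1 hx1 x2 hx2 heq
      by_contra hne
      exact hf3 x1 (mem_coe.mp hx1) x2 (Ne.symm hne) (heq ▸ hf1 x2 (mem_coe.mp hx2))
  calc Fintype.card α = (univ.filter rich).card + (univ.filter (fun x => ¬ rich x)).card := by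
        rw [Finset.card_filter_add_card_filter_not, card_univ]
    _ ≤ r + T.card := by omega
    _ = _ := by rw [hTcard]

lemma sum_choose_le_real (t s : ℕ) (h1 : 1 ≤ s) (hst : s ≤ t) :
    (∑ b ∈ Finset.range (s + 1), ((t.choose b : ℝ))) ≤ (Real.exp 1 * t / s) ^ s := by
  have ht0 : (0:ℝ) < t := by
    have : (1:ℕ) ≤ t := le_trans h1 hst
    exact_mod_cast Nat.lt_of_lt_of_le Nat.zero_lt_one this
  have hs0 : (0:ℝ) < s := by exact_mod_cast h1
  set x : ℝ := s / t with hx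
  have hx0 : 0 < x := by positivity
  have hx1 : x ≤ 1 := by
    rw [hx, div_le_one ht0]; exact_mod_cast hst
  have step1 : (∑ b ∈ Finset.range (s + 1), ((t.choose b : ℝ))) * x ^ s ≤ (1 + x) ^ t := by
    rw [Finset.sum_mul]
    have e1 : (1 + x) ^ t = ∑ b ∈ Finset.range (t + 1), (t.choose b : ℝ) * x ^ b := by
      rw [add_comm (1:ℝ) x, add_pow]
      exact Finset.sum_congr rfl (fun b _ => by ring)
    rw [e1]
    have hsub : Finset.range (s + 1) ⊆ Finset.range (t + 1) := by
      intro b hb; rw [mem_range] at *; omega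
    refine le_trans (Finset.sum_le_sum ?_) (Finset.sum_le_sum_of_subset_of_nonneg hsub ?_)
    · intro b hb
      have hb' : b ≤ s := by rw [mem_range] at hb; omega
      have := pow_le_pow_of_le_one (le_of_lt hx0) hx1 hb'
      have hc : (0:ℝ) ≤ (t.choose b : ℝ) := by positivity
      nlinarith
    · intro b _ _; positivity
  have step2 : (1 + x) ^ t ≤ Real.exp 1 ^ s := by
    have h4 : x * t = s := by
      rw [hx]; exact div_mul_cancel₀ _ (ne_of_gt ht0)
    calc (1 + x) ^ t ≤ Real.exp x ^ t := by
          apply pow_le_pow_left₀ (by positivity)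
          linarith [Real.add_one_le_exp x]
      _ = Real.exp (x * t) := by rw [← Real.exp_nat_mul]; ring_nf
      _ = Real.exp s := by rw [h4]
      _ = Real.exp 1 ^ s := by rw [← Real.exp_nat_mul]; ring_nf
  have hxs : (0:ℝ) < x ^ s := by positivity
  have key : (∑ b ∈ Finset.range (s + 1), ((t.choose b : ℝ))) ≤ Real.exp 1 ^ s / x ^ s := by
    rw [le_div_iff₀ hxs]
    exact le_trans step1 step2
  refine le_trans key (le_of_eq ?_)
  rw [← div_pow, hx]
  congr 1
  field_simp

end Aux

/-- A family `F` of subsets of `[n]` is `(n,k)`-strongly-selective if for every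
subset `Z` of `[n]` with `|Z| ≤ k` and every `z ∈ Z` there is `A ∈ F` with
`Z ∩ A = {z}`. -/
def StronglySelective (n k : ℕ) (F : Finset (Finset (Fin n))) : Prop :=
  ∀ Z : Finset (Fin n), Z.card ≤ k → ∀ z ∈ Z, ∃ A ∈ F, Z ∩ A = {z}

set_option maxHeartbeats 1000000 in
theorem stmt9 (n k : ℕ) (hk : 3 ≤ k) (hkn : (k + 1) ^ 2 ≤ 2 * n)
    (F : Finset (Finset (Fin n))) (hF : StronglySelective n k F) :
    ((k : ℝ) ^ 2 / (48 * Real.logb 2 k)) * Real.logb 2 n ≤ F.card := by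
  classical
  set t := F.card with ht
  set S : Fin n → Finset (Finset (Fin n)) := fun x => F.filter (fun A => x ∈ A) with hS
  have hSF : ∀ x, S x ⊆ F := fun x => filter_subset _ _
  have hn8 : 8 ≤ n := by nlinarith
  -- cover-freeness
  have hcf : ∀ (x : Fin n) (J : Finset (Fin n)), x ∉ J → J.card ≤ k - 1 →
      ¬ S x ⊆ J.biUnion S := by
    intro x J hxJ hJcard hsub
    obtain ⟨A, hAF, hZA⟩ := hF (insert x J) (by
        calc (insert x J).card ≤ J.card + 1 := card_insert_le _ _
          _ ≤ k := by omega) x (mem_insert_self _ _)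
    have hxA : x ∈ A := by
      have hx : x ∈ insert x J ∩ A := by rw [hZA]; exact mem_singleton_self x
      exact (mem_inter.mp hx).2
    have hASx : A ∈ S x := mem_filter.mpr ⟨hAF, hxA⟩
    obtain ⟨y, hyJ, hyS⟩ := mem_biUnion.mp (hsub hASx)
    have hyA : y ∈ A := (mem_filter.mp hyS).2
    have hyZ : y ∈ insert x J ∩ A := mem_inter.mpr ⟨mem_insert_of_mem hyJ, hyA⟩
    rw [hZA, mem_singleton] at hyZ
    exact hxJ (hyZ ▸ hyJ)
  set d := (k - 1) * k with hd
  have hd0 : 0 < d := by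
    have : 1 ≤ k - 1 := by omega
    exact Nat.mul_pos (by omega) (by omega)
  set s := 2 * t / d + 1 with hsdef
  have hs : 2 * t < s * ((k - 1) * ((k - 1) + 1)) := by
    have hkm : (k - 1) + 1 = k := by omega
    rw [hkm]
    have h1 : 2 * t < s * d := by
      calc 2 * t = d * (2 * t / d) + 2 * t % d := (Nat.div_add_mod _ _).symm
        _ < d * (2 * t / d) + d := by
            have := Nat.mod_lt (2 * t) hd0; omega
        _ = s * d := by rw [hsdef]; ring
    exact h1
  have hcount : n ≤ (k - 1) + ∑ b ∈ Finset.range (s + 1), t.choose b := by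
    have := coverfree_main S F hSF (k - 1) s hcf hs
    simpa using this
  -- small case is impossible
  have hbig : d ≤ 2 * t := by
    by_contra hsmall
    push_neg at hsmall
    have hq : 2 * t / d = 0 := Nat.div_eq_of_lt hsmall
    have hs1 : s = 1 := by rw [hsdef, hq]
    rw [hs1] at hcount
    have hsum : ∑ b ∈ Finset.range 2, t.choose b = 1 + t := by
      simp [Finset.sum_range_succ]
    rw [hsum] at hcount
    obtain ⟨k', rfl⟩ : ∃ k', k = k' + 3 := ⟨k - 3, by omega⟩
    have h31 : k' + 3 - 1 = k' + 2 := by omega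
    have hexp : (k' + 3 + 1) ^ 2 = k' * k' + 8 * k' + 16 := by ring
    have hdval : d = k' * k' + 5 * k' + 6 := by rw [hd, h31]; ring
    generalize hm : k' * k' = m at hexp hdval
    omega
  have ht3 : 3 ≤ t := by
    have h6 : 6 ≤ d := by
      rw [hd]
      calc (6:ℕ) = 2 * 3 := rfl
        _ ≤ (k - 1) * k := Nat.mul_le_mul (by omega) hk
    omega
  have hst : s ≤ t := by
    have h6 : 6 ≤ d := by
      rw [hd]
      calc (6:ℕ) = 2 * 3 := rfl
        _ ≤ (k - 1) * k := Nat.mul_le_mul (by omega) hk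
    have h1 : 2 * t / d ≤ 2 * t / 6 := Nat.div_le_div_left h6 (by norm_num)
    omega
  have hs1 : 1 ≤ s := Nat.le_add_left 1 (2 * t / d)
  -- pass to the reals
  have hsdnat : s * d ≤ 4 * t := by
    calc s * d = (2 * t / d) * d + d := by rw [hsdef]; ring
      _ ≤ 2 * t + d := Nat.add_le_add_right (Nat.div_mul_le_self _ _) d
      _ ≤ 4 * t := by omega
  set L := Real.logb 2 k with hL
  have hk2R : (2:ℝ) ≤ (k:ℝ) := by exact_mod_cast (by omega : 2 ≤ k)
  have hL1 : 1 ≤ L := by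
    rw [hL]
    calc (1:ℝ) = Real.logb 2 2 := (Real.logb_self_eq_one (by norm_num : (1:ℝ) < 2)).symm
      _ ≤ Real.logb 2 k := Real.logb_le_logb_of_le (by norm_num) (by norm_num) hk2R
  have hL0 : (0:ℝ) < L := by linarith
  have hT0 : (0:ℝ) < t := by exact_mod_cast (by omega : 0 < t)
  have hK0 : (0:ℝ) < k := by linarith
  have hs0R : (0:ℝ) < s := by exact_mod_cast (by omega : 0 < s)
  have hn0 : (0:ℝ) < n := by exact_mod_cast (by omega : 0 < n)
  have hk1 : (1:ℝ) ≤ (k:ℝ) - 1 := by linarith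
  have hk3R : (3:ℝ) ≤ (k:ℝ) := by exact_mod_cast hk
  have hdcast : (((k - 1) * k : ℕ) : ℝ) = ((k:ℝ) - 1) * k := by
    push_cast [Nat.cast_sub (by omega : 1 ≤ k)]
    ring
  -- real versions of the key numeric facts
  have hbigR : ((k:ℝ) - 1) * k ≤ 2 * t := by
    have h : ((k - 1) * k : ℕ) ≤ 2 * t := hbig
    calc ((k:ℝ) - 1) * k = (((k - 1) * k : ℕ) : ℝ) := hdcast.symm
      _ ≤ ((2 * t : ℕ) : ℝ) := by exact_mod_cast h
      _ = 2 * (t:ℝ) := by push_cast; ring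
  have hsdR : (s:ℝ) * (((k:ℝ) - 1) * k) ≤ 4 * t := by
    have h : s * ((k - 1) * k) ≤ 4 * t := hsdnat
    calc (s:ℝ) * (((k:ℝ) - 1) * k) = ((s * ((k - 1) * k) : ℕ) : ℝ) := by
          rw [Nat.cast_mul, hdcast]
      _ ≤ ((4 * t : ℕ) : ℝ) := by exact_mod_cast h
      _ = 4 * (t:ℝ) := by push_cast; ring
  have htsR : 2 * (t:ℝ) < (s:ℝ) * (((k:ℝ) - 1) * k) := by
    have e : (k - 1) + 1 = k := by omega
    rw [e] at hs
    have h : 2 * t < s * ((k - 1) * k) := hs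
    calc 2 * (t:ℝ) = ((2 * t : ℕ) : ℝ) := by push_cast; ring
      _ < ((s * ((k - 1) * k) : ℕ) : ℝ) := by exact_mod_cast h
      _ = (s:ℝ) * (((k:ℝ) - 1) * k) := by rw [Nat.cast_mul, hdcast]
  have hKK3T : (k:ℝ) * k ≤ 3 * t := by nlinarith
  have hsKK : (s:ℝ) * ((k:ℝ) * k) ≤ 6 * t := by nlinarith
  have htsKK : 2 * (t:ℝ) ≤ (s:ℝ) * ((k:ℝ) * k) := by nlinarith
  -- the quantity X
  set X : ℝ := Real.exp 1 * t / s with hX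
  have he1 : (2:ℝ) ≤ Real.exp 1 := by
    have := Real.add_one_le_exp 1
    linarith
  have hstR : (s:ℝ) ≤ t := by exact_mod_cast hst
  have hX1 : (1:ℝ) ≤ X := by
    rw [hX, le_div_iff₀ hs0R]
    have h2t : 2 * (t:ℝ) ≤ Real.exp 1 * t := by
      nlinarith [mul_le_mul_of_nonneg_right he1 (le_of_lt hT0)]
    linarith
  have hX0 : (0:ℝ) < X := by linarith
  have hXs1 : (1:ℝ) ≤ X ^ s := one_le_pow₀ hX1
  -- count in the reals
  have hcountR : (n:ℝ) ≤ ((k:ℝ) - 1) + X ^ s := by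
    have h1 : (n:ℝ) ≤ ((k - 1 : ℕ) : ℝ) + ((∑ b ∈ Finset.range (s + 1), t.choose b : ℕ) : ℝ) := by
      exact_mod_cast hcount
    have h2 : ((∑ b ∈ Finset.range (s + 1), t.choose b : ℕ) : ℝ)
        = ∑ b ∈ Finset.range (s + 1), ((t.choose b : ℝ)) := by push_cast; ring
    have h3 := sum_choose_le_real t s hs1 hst
    have h4 : ((k - 1 : ℕ) : ℝ) = (k:ℝ) - 1 := by
      push_cast [Nat.cast_sub (by omega : 1 ≤ k)]; ring
    rw [h2, h4] at h1
    rw [hX]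
    linarith
  have hnkX : (n:ℝ) ≤ (k:ℝ) * X ^ s := by nlinarith
  -- logarithms
  have hlogn : Real.logb 2 n ≤ L + (s:ℝ) * Real.logb 2 X := by
    calc Real.logb 2 n ≤ Real.logb 2 ((k:ℝ) * X ^ s) :=
          Real.logb_le_logb_of_le (by norm_num) hn0 hnkX
      _ = Real.logb 2 k + Real.logb 2 (X ^ s) :=
          Real.logb_mul (ne_of_gt hK0) (by positivity)
      _ = L + (s:ℝ) * Real.logb 2 X := by rw [Real.logb_pow, hL]
  have hlog2 : (0.6931471803 : ℝ) < Real.log 2 := Real.log_two_gt_d9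
  have hlogbe : Real.logb 2 (Real.exp 1) ≤ 1.45 := by
    rw [Real.logb, Real.log_exp]
    rw [div_le_iff₀ (by linarith)]
    linarith
  have hXle : X ≤ Real.exp 1 * ((k:ℝ) * k) / 2 := by
    rw [hX, div_le_div_iff₀ hs0R (by norm_num)]
    nlinarith [Real.exp_pos 1]
  have hlogX : Real.logb 2 X ≤ 2.45 * L := by
    have h1 : Real.logb 2 X ≤ Real.logb 2 (Real.exp 1 * ((k:ℝ) * k) / 2) :=
      Real.logb_le_logb_of_le (by norm_num) hX0 hXle
    have h2 : Real.logb 2 (Real.exp 1 * ((k:ℝ) * k) / 2)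
        = Real.logb 2 (Real.exp 1) + (L + L) - 1 := by
      rw [Real.logb_div (by positivity) (by norm_num),
          Real.logb_mul (by positivity) (by positivity),
          Real.logb_mul (ne_of_gt hK0) (ne_of_gt hK0),
          Real.logb_self_eq_one (by norm_num : (1:ℝ) < 2), hL]
    rw [h2] at h1
    linarith
  have hlogX0 : 0 ≤ Real.logb 2 X := Real.logb_nonneg (by norm_num) hX1
  -- main bound
  have hmain : Real.logb 2 n * ((k:ℝ) * k) ≤ 48 * L * t := by
    have h1 : Real.logb 2 n * ((k:ℝ) * k) ≤ (L + (s:ℝ) * Real.logb 2 X) * ((k:ℝ) * k) :=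
      mul_le_mul_of_nonneg_right hlogn (by positivity)
    have h2 : (L + (s:ℝ) * Real.logb 2 X) * ((k:ℝ) * k)
        = L * ((k:ℝ) * k) + ((s:ℝ) * ((k:ℝ) * k)) * Real.logb 2 X := by ring
    have h3 : ((s:ℝ) * ((k:ℝ) * k)) * Real.logb 2 X ≤ (6 * t) * (2.45 * L) :=
      mul_le_mul hsKK hlogX hlogX0 (by positivity)
    have h4 : L * ((k:ℝ) * k) ≤ L * (3 * t) :=
      mul_le_mul_of_nonneg_left hKK3T (le_of_lt hL0)
    have hLT : 0 ≤ L * t := by positivity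
    nlinarith
  -- finish
  have h48 : (0:ℝ) < 48 * L := by linarith
  rw [div_mul_eq_mul_div, div_le_iff₀ h48]
  calc (k:ℝ) ^ 2 * Real.logb 2 n = Real.logb 2 n * ((k:ℝ) * k) := by ring
    _ ≤ 48 * L * t := hmain
    _ = (t:ℝ) * (48 * L) := by ring
end

section
/- Let 𝓕 be an (n,k)-strongly-selective family with k ≤ n and k ≥ √(2n) (equivalently k² ≥ 2n). Then |𝓕| ≥ n. -/
/-- Bassalygo-type bound: if `T` assigns to each element of `s` a subset of `G`,
and the family is "d-cover-free on s" (every `x ∈ s` has, for every `t` of ≤ d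
other elements, a point of `T x` private from all `T y`, `y ∈ t`), and `G` has
fewer elements than `s`, then `|G| ≥ (d+1)(d+2)/2`. -/
lemma coverfree_aux {α β : Type*} [DecidableEq α] [DecidableEq β] :
    ∀ (N d : ℕ) (s : Finset α) (G : Finset β) (T : α → Finset β),
      s.card ≤ N →
      (∀ x ∈ s, T x ⊆ G) →
      (∀ x ∈ s, ∀ t ⊆ s.erase x, t.card ≤ d → ∃ b ∈ T x, ∀ y ∈ t, b ∉ T y) →
      G.card < s.card → (d + 1) * (d + 2) / 2 ≤ G.card := by
  intro N
  induction N with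
  | zero => intro d s G T hsN _ _ hcard; omega
  | succ N ih =>
    intro d s G T hsN hG hcov hcard
    have hs0 : 0 < s.card := lt_of_le_of_lt (Nat.zero_le _) hcard
    obtain ⟨x0, hx0⟩ := Finset.card_pos.mp hs0
    by_cases hsmall : s.card ≤ d + 1
    · -- too few elements: every element has a fully private point, contradiction
      exfalso
      obtain ⟨b0, hb00, -⟩ := hcov x0 hx0 ∅ (Finset.empty_subset _) (by simp)
      have hpriv : ∀ x : α, ∃ b : β, x ∈ s → b ∈ T x ∧ ∀ y ∈ s.erase x, b ∉ T y := by
        intro x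
        by_cases hx : x ∈ s
        · obtain ⟨b, hb1, hb2⟩ := hcov x hx (s.erase x) (Finset.Subset.refl _)
            (by have := Finset.card_erase_of_mem hx; omega)
          exact ⟨b, fun _ => ⟨hb1, hb2⟩⟩
        · exact ⟨b0, fun h => absurd h hx⟩
      choose f hf using hpriv
      have hle : s.card ≤ G.card := by
        apply Finset.card_le_card_of_injOn f
        · intro x hx; exact hG x hx (hf x hx).1
        · intro x hx y hy hxy
          by_contra hne
          exact (hf x (Finset.mem_coe.mp hx)).2 y
            (Finset.mem_erase.mpr ⟨Ne.symm hne, Finset.mem_coe.mp hy⟩)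
            (hxy ▸ (hf y (Finset.mem_coe.mp hy)).1)
      omega
    · push_neg at hsmall
      cases d with
      | zero =>
        obtain ⟨b, hb, -⟩ := hcov x0 hx0 ∅ (Finset.empty_subset _) (by simp)
        have hGpos : 0 < G.card := Finset.card_pos.mpr ⟨b, hG x0 hx0 hb⟩
        omega
      | succ e =>
        by_cases hw : (T x0).card ≤ e + 1
        · -- small degree: x0 has a point private from everybody, delete it
          have hcex : ∃ c ∈ T x0, ∀ y ∈ s.erase x0, c ∉ T y := by
            by_contra hcon
            push_neg at hcon
            have hsel : ∀ c : {b // b ∈ T x0}, ∃ y, y ∈ s.erase x0 ∧ c.1 ∈ T y := by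
              intro c
              obtain ⟨y, h1, h2⟩ := hcon c.1 c.2
              exact ⟨y, h1, h2⟩
            choose g hg1 hg2 using hsel
            set t := (T x0).attach.image g with hτ
            have ht1 : t ⊆ s.erase x0 := by
              intro y hy
              rw [hτ, Finset.mem_image] at hy
              obtain ⟨c, -, rfl⟩ := hy
              exact hg1 c
            have ht2 : t.card ≤ e + 1 :=
              le_trans (le_trans Finset.card_image_le (by rw [Finset.card_attach])) hw
            obtain ⟨b, hb1, hb2⟩ := hcov x0 hx0 t ht1 ht2
            exact hb2 (g ⟨b, hb1⟩)
              (by rw [hτ]; exact Finset.mem_image_of_mem g (Finset.mem_attach _ _))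
              (hg2 ⟨b, hb1⟩)
          obtain ⟨c, hc1, hc2⟩ := hcex
          have hrec := ih (e + 1) (s.erase x0) (G.erase c) T
            (by rw [Finset.card_erase_of_mem hx0]; omega)
            (by
              intro y hy b hb
              rw [Finset.mem_erase]
              refine ⟨?_, hG y (Finset.mem_of_mem_erase hy) hb⟩
              rintro rfl
              exact hc2 y hy hb)
            (by
              intro y hy t ht htc
              exact hcov y (Finset.mem_of_mem_erase hy) t
                (ht.trans (Finset.erase_subset_erase _ (Finset.erase_subset _ _))) htc)
            (by
              have hcG : c ∈ G := hG x0 hx0 hc1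
              rw [Finset.card_erase_of_mem hcG, Finset.card_erase_of_mem hx0]
              have := Finset.card_pos.mpr ⟨c, hcG⟩
              omega)
          exact hrec.trans (Finset.card_le_card (Finset.erase_subset _ _))
        · -- big degree: remove x0 and all of T x0, decreasing d
          have hrec := ih e (s.erase x0) (G \ T x0) (fun y => T y \ T x0)
            (by rw [Finset.card_erase_of_mem hx0]; omega)
            (by
              intro y hy b hb
              rw [Finset.mem_sdiff] at hb ⊢
              exact ⟨hG y (Finset.mem_of_mem_erase hy) hb.1, hb.2⟩)
            (by
              intro y hy t ht htc
              have hyx : y ≠ x0 := (Finset.mem_erase.mp hy).1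
              have hxt : x0 ∉ t := fun hmem =>
                (Finset.mem_erase.mp (Finset.mem_of_mem_erase (ht hmem))).1 rfl
              have hsub : insert x0 t ⊆ s.erase y := by
                rw [Finset.insert_subset_iff]
                exact ⟨Finset.mem_erase.mpr ⟨Ne.symm hyx, hx0⟩,
                  ht.trans (Finset.erase_subset_erase _ (Finset.erase_subset _ _))⟩
              have hcins : (insert x0 t).card ≤ e + 1 := by
                rw [Finset.card_insert_of_notMem hxt]; omega
              obtain ⟨b, hb1, hb2⟩ := hcov y (Finset.mem_of_mem_erase hy)
                (insert x0 t) hsub hcins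
              refine ⟨b, Finset.mem_sdiff.mpr ⟨hb1, hb2 x0 (Finset.mem_insert_self _ _)⟩, ?_⟩
              intro z hz hbz
              exact hb2 z (Finset.mem_insert_of_mem hz) (Finset.mem_sdiff.mp hbz).1)
            (by
              rw [Finset.card_erase_of_mem hx0, Finset.card_sdiff_of_subset (hG x0 hx0)]
              omega)
          have hdiv : (e + 1 + 1) * (e + 1 + 2) / 2 = (e + 1) * (e + 2) / 2 + (e + 2) := by
            have hstep : (e + 1 + 1) * (e + 1 + 2) = (e + 1) * (e + 2) + (e + 2) * 2 := by ring
            rw [hstep, Nat.add_mul_div_right _ _ (by norm_num : (0:ℕ) < 2)]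
          rw [hdiv]
          have hsum : (G \ T x0).card + (T x0).card = G.card :=
            Finset.card_sdiff_add_card_eq_card (hG x0 hx0)
          calc (e + 1) * (e + 2) / 2 + (e + 2)
              ≤ (G \ T x0).card + (T x0).card := Nat.add_le_add hrec (by omega)
            _ = G.card := hsum

theorem stmt10 (n k : ℕ) (hk : 1 ≤ k) (hkn : k ≤ n) (h : 2 * n ≤ k ^ 2)
    (F : Finset (Finset (Fin n))) (hF : StronglySelective n k F) :
    n ≤ F.card := by
  by_contra hn
  push_neg at hn
  have hcov : ∀ x ∈ (Finset.univ : Finset (Fin n)),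
      ∀ t ⊆ Finset.univ.erase x, t.card ≤ k - 1 →
      ∃ b ∈ F.filter (fun A => x ∈ A), ∀ y ∈ t, b ∉ F.filter (fun A => y ∈ A) := by
    intro x _ t ht htc
    have hxt : x ∉ t := fun hmem => (Finset.mem_erase.mp (ht hmem)).1 rfl
    have hZcard : (insert x t).card ≤ k := by
      rw [Finset.card_insert_of_notMem hxt]; omega
    obtain ⟨A, hA, hAZ⟩ := hF (insert x t) hZcard x (Finset.mem_insert_self _ _)
    have hxA : x ∈ A := by
      have hx' : x ∈ insert x t ∩ A := by
        rw [hAZ]; exact Finset.mem_singleton_self x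
      exact (Finset.mem_inter.mp hx').2
    refine ⟨A, Finset.mem_filter.mpr ⟨hA, hxA⟩, ?_⟩
    intro y hy hyA
    have hyA' : y ∈ A := (Finset.mem_filter.mp hyA).2
    have hy' : y ∈ insert x t ∩ A :=
      Finset.mem_inter.mpr ⟨Finset.mem_insert_of_mem hy, hyA'⟩
    rw [hAZ, Finset.mem_singleton] at hy'
    exact (Finset.mem_erase.mp (ht hy)).1 hy'
  have hkey := coverfree_aux (Finset.univ : Finset (Fin n)).card (k - 1)
    Finset.univ F (fun x => F.filter (fun A => x ∈ A)) le_rfl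
    (fun x _ => Finset.filter_subset _ _) hcov
    (by rw [Finset.card_univ, Fintype.card_fin]; exact hn)
  have e1 : k - 1 + 1 = k := by omega
  have e2 : k - 1 + 2 = k + 1 := by omega
  rw [e1, e2] at hkey
  have h1 : n ≤ k ^ 2 / 2 :=
    (Nat.le_div_iff_mul_le (by norm_num)).mpr (by rw [Nat.mul_comm]; exact h)
  have h2 : k ^ 2 / 2 ≤ k * (k + 1) / 2 :=
    Nat.div_le_div_right (by rw [pow_two]; exact Nat.mul_le_mul_left k (Nat.le_succ k))
  exact absurd (h1.trans (h2.trans hkey)) (Nat.not_le.mpr hn)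
end

section
/- (Bassalygo) Every (n,k)-strongly-selective family 𝓕 with 1 ≤ k ≤ n satisfies |𝓕| ≥ min{ k(k+1)/2 , n }. -/
/-- Selectivity relativized to a ground set `V`. -/
def SelOn (n k : ℕ) (V : Finset (Fin n)) (F : Finset (Finset (Fin n))) : Prop :=
  ∀ Z : Finset (Fin n), Z ⊆ V → Z.card ≤ k → ∀ z ∈ Z, ∃ A ∈ F, Z ∩ A = {z}

lemma bassalygo_aux (n : ℕ) : ∀ k, 1 ≤ k →
    ∀ (V : Finset (Fin n)) (F : Finset (Finset (Fin n))),
    SelOn n k V F → min (k * (k + 1) / 2) V.card ≤ F.card := by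
  intro k hk
  induction k, hk using Nat.le_induction with
  | base =>
    intro V F hSel
    rcases V.eq_empty_or_nonempty with h | ⟨z, hz⟩
    · simp [h]
    · obtain ⟨A, hA, -⟩ := hSel {z} (by simpa) (by simp) z (by simp)
      calc min (1 * (1 + 1) / 2) V.card ≤ 1 := by simp
        _ ≤ F.card := Finset.card_pos.mpr ⟨A, hA⟩
  | succ k hk ih =>
    intro V F hSel
    by_cases hA : ∃ z ∈ V, k + 1 ≤ (F.filter (fun A => z ∈ A)).card
    · -- some element lies in at least k+1 sets: recurse
      obtain ⟨z, hzV, hw⟩ := hA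
      have hsel' : SelOn n k (V.erase z) (F.filter (fun A => z ∉ A)) := by
        intro Z hZV hZc z' hz'
        have hzZ : z ∉ Z := fun h => (Finset.mem_erase.mp (hZV h)).1 rfl
        obtain ⟨A, hAF, hZA⟩ := hSel (insert z Z)
          (Finset.insert_subset hzV (hZV.trans (Finset.erase_subset _ _)))
          (by
            rw [Finset.card_insert_of_notMem hzZ]
            exact Nat.succ_le_succ hZc)
          z' (Finset.mem_insert_of_mem hz')
        have hz'A : z' ∈ A := by
          have h1 : z' ∈ insert z Z ∩ A := by
            rw [hZA]; exact Finset.mem_singleton_self z'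
          exact (Finset.mem_inter.mp h1).2
        have hzA : z ∉ A := by
          intro h
          have h1 : z ∈ insert z Z ∩ A :=
            Finset.mem_inter.mpr ⟨Finset.mem_insert_self _ _, h⟩
          rw [hZA, Finset.mem_singleton] at h1
          exact hzZ (h1 ▸ hz')
        refine ⟨A, Finset.mem_filter.mpr ⟨hAF, hzA⟩, ?_⟩
        apply Finset.Subset.antisymm
        · intro y hy
          rw [← hZA]
          exact Finset.mem_inter.mpr
            ⟨Finset.mem_insert_of_mem (Finset.mem_inter.mp hy).1,
             (Finset.mem_inter.mp hy).2⟩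
        · intro y hy
          rw [Finset.mem_singleton] at hy
          subst hy
          exact Finset.mem_inter.mpr ⟨hz', hz'A⟩
      have h1 := ih (V.erase z) (F.filter (fun A => z ∉ A)) hsel'
      have hcard : (F.filter (fun A => z ∈ A)).card
          + (F.filter (fun A => z ∉ A)).card = F.card :=
        Finset.card_filter_add_card_filter_not (fun A => z ∈ A)
      have herase : (V.erase z).card = V.card - 1 := Finset.card_erase_of_mem hzV
      have hVpos : 1 ≤ V.card := Finset.card_pos.mpr ⟨z, hzV⟩
      have hprod : (k + 1) * (k + 1 + 1) = k * (k + 1) + 2 * (k + 1) := by ring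
      rw [herase] at h1
      generalize hx : k * (k + 1) = x at h1 hprod
      generalize hy : (k + 1) * (k + 1 + 1) = y at hprod
      omega
    · -- every element has small weight: each element gets a private set
      push_neg at hA
      have hex : ∀ z ∈ V, ∃ A, A ∈ F ∧ A ∩ V = {z} := by
        intro z hzV
        by_contra hcon
        push_neg at hcon
        -- each set containing z meets V somewhere else
        have hstep : ∀ A : Finset (Fin n),
            ∃ y, A ∈ F.filter (fun A => z ∈ A) → y ∈ A ∧ y ∈ V ∧ y ≠ z := by
          intro A
          by_cases hAT : A ∈ F.filter (fun A => z ∈ A)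
          · obtain ⟨hAF, hzA⟩ := Finset.mem_filter.mp hAT
            have hsub : ({z} : Finset (Fin n)) ⊆ A ∩ V := by
              intro y hy
              rw [Finset.mem_singleton] at hy
              subst hy
              exact Finset.mem_inter.mpr ⟨hzA, hzV⟩
            have hne : ({z} : Finset (Fin n)) ≠ A ∩ V :=
              fun h => hcon A hAF h.symm
            obtain ⟨y, hyAV, hyz⟩ :=
              Finset.exists_of_ssubset (lt_of_le_of_ne hsub hne)
            rw [Finset.mem_singleton] at hyz
            exact ⟨y, fun _ => ⟨(Finset.mem_inter.mp hyAV).1,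
              (Finset.mem_inter.mp hyAV).2, hyz⟩⟩
          · exact ⟨z, fun h => absurd h hAT⟩
        choose f hf using hstep
        set T := F.filter (fun A => z ∈ A) with hT
        set Z : Finset (Fin n) := insert z (T.image f) with hZ
        have hZV : Z ⊆ V := by
          intro y hy
          rcases Finset.mem_insert.mp hy with h | h
          · exact h ▸ hzV
          · obtain ⟨A, hAT, rfl⟩ := Finset.mem_image.mp h
            exact (hf A hAT).2.1
        have hZc : Z.card ≤ k + 1 := by
          calc Z.card ≤ (T.image f).card + 1 := Finset.card_insert_le _ _
            _ ≤ T.card + 1 := by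
                exact Nat.add_le_add_right (Finset.card_image_le) 1
            _ ≤ k + 1 := Nat.add_le_add_right (Nat.lt_succ_iff.mp (hA z hzV)) 1
        obtain ⟨A0, hA0F, hZA0⟩ := hSel Z hZV hZc z (Finset.mem_insert_self _ _)
        have hzA0 : z ∈ A0 := by
          have h1 : z ∈ Z ∩ A0 := by
            rw [hZA0]; exact Finset.mem_singleton_self z
          exact (Finset.mem_inter.mp h1).2
        have hA0T : A0 ∈ T := Finset.mem_filter.mpr ⟨hA0F, hzA0⟩
        have hfA0 : f A0 ∈ Z ∩ A0 :=
          Finset.mem_inter.mpr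
            ⟨Finset.mem_insert_of_mem (Finset.mem_image_of_mem f hA0T),
             (hf A0 hA0T).1⟩
        rw [hZA0, Finset.mem_singleton] at hfA0
        exact (hf A0 hA0T).2.2 hfA0
      choose! g hg1 hg2 using hex
      have hinj : V.card ≤ F.card := by
        apply Finset.card_le_card_of_injOn g (fun z hz => hg1 z hz)
        intro z1 h1 z2 h2 hgz
        have : ({z1} : Finset (Fin n)) = {z2} := by
          rw [← hg2 z1 h1, ← hg2 z2 h2, hgz]
        simpa using this
      exact le_trans (min_le_right _ _) hinj

theorem stmt11 (n k : ℕ) (hk : 1 ≤ k) (hkn : k ≤ n)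
    (F : Finset (Finset (Fin n))) (hF : StronglySelective n k F) :
    min (k * (k + 1) / 2) n ≤ F.card := by
  have h := bassalygo_aux n k hk Finset.univ F (fun Z _ hZc z hz => hF Z hZc z hz)
  simpa using h
end

section
/- (Füredi) Let 𝓕 be an (n,k)-strongly-selective family with k ≥ 3, n ≥ k, and set m = |𝓕|; assume m ≥ k. Then n ≤ k − 1 + C(m, ⌈(m − k + 1)/C(k,2)⌉), where C(a,b) denotes the binomial coefficient and ⌈·⌉ the ceiling. -/
open Finset

namespace Stmt12Aux

/-- Monotonicity of binomial coefficients below the middle. -/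
lemma choose_mono_aux (m : ℕ) : ∀ s r : ℕ, r ≤ s → 2 * s ≤ m → m.choose r ≤ m.choose s := by
  intro s
  induction s with
  | zero =>
      intro r hr _
      have : r = 0 := Nat.le_zero.1 hr
      simp [this]
  | succ s ih =>
      intro r hr h2
      rcases Nat.eq_or_lt_of_le hr with h | h
      · rw [h]
      · exact (ih r (by omega) (by omega)).trans
          (Nat.choose_le_succ_of_lt_half_left (by omega))

/-- LYM-based bound: an antichain of subsets, all of size at most `s ≤ card/2`,
has at most `choose (card α) s` members. -/
lemma antichain_card_le_fintype {α : Type*} [Fintype α] [DecidableEq α]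
    {𝒜 : Finset (Finset α)} {s : ℕ}
    (h𝒜 : IsAntichain (· ⊆ ·) (𝒜 : Set (Finset α)))
    (hsize : ∀ T ∈ 𝒜, T.card ≤ s) (hs : 2 * s ≤ Fintype.card α) :
    𝒜.card ≤ (Fintype.card α).choose s := by
  classical
  suffices h : (∑ r ∈ Finset.Iic (Fintype.card α),
      ((𝒜 # r).card : ℚ) / (Fintype.card α).choose s) ≤ 1 by
    rw [← Finset.sum_div, ← Nat.cast_sum, div_le_one] at h
    · rw [Nat.cast_le] at h
      rwa [Finset.sum_card_slice] at h
    · rw [Nat.cast_pos]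
      exact Nat.choose_pos (by omega)
  rw [Finset.Iic_eq_Icc, ← Finset.Ico_add_one_right_eq_Icc, Nat.bot_eq_zero, Nat.Ico_zero_eq_range]
  refine (Finset.sum_le_sum fun r hr => ?_).trans (Finset.sum_card_slice_div_choose_le_one h𝒜)
  rw [Finset.mem_range] at hr
  rcases (𝒜 # r).eq_empty_or_nonempty with he | hne
  · rw [he]; simp
  · obtain ⟨T, hT⟩ := hne
    have hT' := Finset.mem_slice.1 hT
    have hrs : r ≤ s := hT'.2 ▸ hsize T hT'.1
    refine div_le_div_of_nonneg_left ?_ ?_ ?_ <;> norm_cast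
    · exact Nat.zero_le _
    · exact Nat.choose_pos (by omega)
    · exact choose_mono_aux _ s r hrs hs

/-- Version of the antichain bound relative to a ground finset `G`. -/
lemma antichain_card_le {α : Type*} [DecidableEq α] {G : Finset α}
    {𝒜 : Finset (Finset α)} {s : ℕ}
    (hsub : ∀ T ∈ 𝒜, T ⊆ G)
    (hanti : ∀ T ∈ 𝒜, ∀ T' ∈ 𝒜, T ⊆ T' → T = T')
    (hsize : ∀ T ∈ 𝒜, T.card ≤ s) (hs : 2 * s ≤ G.card) :
    𝒜.card ≤ G.card.choose s := by
  classical
  set Φ : Finset α → Finset {a // a ∈ G} := fun T => T.subtype (· ∈ G) with hΦ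
  have hΦcard : ∀ T, T ⊆ G → (Φ T).card = T.card := by
    intro T hT
    rw [hΦ]
    simp only [Finset.card_subtype]
    rw [Finset.filter_true_of_mem (fun a ha => hT ha)]
  have hΦrefl : ∀ T, T ⊆ G → ∀ T', Φ T ⊆ Φ T' → T ⊆ T' := by
    intro T hT T' h a ha
    have : (⟨a, hT ha⟩ : {a // a ∈ G}) ∈ Φ T := Finset.mem_subtype.2 ha
    exact Finset.mem_subtype.1 (h this)
  have hinj : Set.InjOn Φ 𝒜 := by
    intro T hT T' hT' h
    have h1 : T ⊆ T' := hΦrefl T (hsub T hT) T' h.le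
    exact hanti T hT T' hT' h1
  set 𝒜' : Finset (Finset {a // a ∈ G}) := 𝒜.image Φ with h𝒜'
  have hcard : 𝒜'.card = 𝒜.card := Finset.card_image_of_injOn hinj
  have hanti' : IsAntichain (· ⊆ ·) (𝒜' : Set (Finset {a // a ∈ G})) := by
    intro a ha b hb hne hab
    rw [h𝒜', Finset.coe_image] at ha hb
    obtain ⟨T, hT, rfl⟩ := ha
    obtain ⟨T', hT', rfl⟩ := hb
    have h1 : T ⊆ T' := hΦrefl T (hsub T hT) T' hab
    exact hne (congrArg Φ (hanti T hT T' hT' h1))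
  have hsize' : ∀ T ∈ 𝒜', T.card ≤ s := by
    intro T hT
    rw [h𝒜', Finset.mem_image] at hT
    obtain ⟨T₀, hT₀, rfl⟩ := hT
    rw [hΦcard T₀ (hsub T₀ hT₀)]
    exact hsize T₀ hT₀
  have hfin : Fintype.card {a // a ∈ G} = G.card := Fintype.card_coe G
  have := antichain_card_le_fintype hanti' hsize' (by rw [hfin]; exact hs)
  rwa [hfin, hcard] at this

variable {n k : ℕ}

/-- Members of `F` containing `x`. -/
def FF (F : Finset (Finset (Fin n))) (x : Fin n) : Finset (Finset (Fin n)) :=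
  F.filter fun A => x ∈ A

/-- Members of `F` containing `x` and avoiding all of `V`. -/
def DD (F : Finset (Finset (Fin n))) (x : Fin n) (V : Finset (Fin n)) :
    Finset (Finset (Fin n)) :=
  F.filter fun A => x ∈ A ∧ ∀ w ∈ V, w ∉ A

/-- `x` is covered if each subset of `FF F x` of size at most `t` is contained in
`FF F y` for some `y ≠ x`. -/
def Covered (F : Finset (Finset (Fin n))) (t : ℕ) (x : Fin n) : Prop :=
  ∀ T : Finset (Finset (Fin n)), T ⊆ FF F x → T.card ≤ t →
    ∃ y, y ≠ x ∧ T ⊆ FF F y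

lemma DD_subset_FF {F : Finset (Finset (Fin n))} {x : Fin n} {V : Finset (Fin n)} :
    DD F x V ⊆ FF F x := by
  intro A hA
  have h := Finset.mem_filter.1 hA
  exact Finset.mem_filter.2 ⟨h.1, h.2.1⟩

lemma DD_mono {F : Finset (Finset (Fin n))} {x : Fin n} {V W : Finset (Fin n)}
    (h : V ⊆ W) : DD F x W ⊆ DD F x V := by
  intro A hA
  have h' := Finset.mem_filter.1 hA
  exact Finset.mem_filter.2 ⟨h'.1, h'.2.1, fun w hw => h'.2.2 w (h hw)⟩

lemma DD_nonempty {F : Finset (Finset (Fin n))} (hF : StronglySelective n k F)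
    {x : Fin n} {V : Finset (Fin n)} (hx : x ∉ V) (hV : V.card + 1 ≤ k) :
    (DD F x V).Nonempty := by
  obtain ⟨A, hAF, hA⟩ := hF (insert x V)
    (le_trans (Finset.card_insert_le x V) hV) x (Finset.mem_insert_self x V)
  refine ⟨A, Finset.mem_filter.2 ⟨hAF, ?_, ?_⟩⟩
  · have hx' : x ∈ ({x} : Finset (Fin n)) := Finset.mem_singleton_self x
    rw [← hA] at hx'
    exact (Finset.mem_inter.1 hx').2
  · intro w hw hwA
    have hmem : w ∈ insert x V ∩ A :=
      Finset.mem_inter.2 ⟨Finset.mem_insert_of_mem hw, hwA⟩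
    rw [hA, Finset.mem_singleton] at hmem
    exact hx (hmem ▸ hw)

lemma DD_card_lower {F : Finset (Finset (Fin n))} (hF : StronglySelective n k F)
    {t : ℕ} {x : Fin n} {V : Finset (Fin n)} (hcov : Covered F t x)
    (hx : x ∉ V) (hV : V.card + 2 ≤ k) : t + 1 ≤ (DD F x V).card := by
  by_contra h
  push_neg at h
  obtain ⟨y, hyx, hy⟩ := hcov (DD F x V) DD_subset_FF (by omega)
  have hxny : x ∉ insert y V := by
    simp only [Finset.mem_insert, not_or]
    exact ⟨fun h' => hyx h'.symm, hx⟩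
  obtain ⟨A, hA⟩ := DD_nonempty hF hxny
    (le_trans (by have := Finset.card_insert_le y V; omega) hV)
  have hAD : A ∈ DD F x V := DD_mono (Finset.subset_insert y V) hA
  have hyA : y ∈ A := (Finset.mem_filter.1 (hy hAD)).2
  exact (Finset.mem_filter.1 hA).2.2 y (Finset.mem_insert_self y V) hyA

lemma DD_card_lower' {F : Finset (Finset (Fin n))} (hF : StronglySelective n k F)
    {t : ℕ} {x : Fin n} (hcov : Covered F t x) :
    ∀ j (V : Finset (Fin n)), x ∉ V → V.card + j + 2 ≤ k →
      j * t + (t + 1) ≤ (DD F x V).card := by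
  intro j
  induction j with
  | zero =>
      intro V hx hV
      simpa using DD_card_lower hF hcov hx (by omega)
  | succ j ih =>
      intro V hx hV
      have h1 : t + 1 ≤ (DD F x V).card := DD_card_lower hF hcov hx (by omega)
      obtain ⟨T, hTsub, hTcard⟩ := Finset.exists_subset_card_eq (s := DD F x V) (n := t) (by omega)
      obtain ⟨y, hyx, hy⟩ := hcov T (hTsub.trans DD_subset_FF) (le_of_eq hTcard)
      have hxny : x ∉ insert y V := by
        simp only [Finset.mem_insert, not_or]
        exact ⟨fun h' => hyx h'.symm, hx⟩
      have key : j * t + (t + 1) ≤ (DD F x (insert y V)).card :=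
        ih (insert y V) hxny (by have := Finset.card_insert_le y V; omega)
      have hd : Disjoint (DD F x (insert y V)) T := by
        rw [Finset.disjoint_right]
        intro A hAT hAD
        have hyA : y ∈ A := (Finset.mem_filter.1 (hy hAT)).2
        exact (Finset.mem_filter.1 hAD).2.2 y (Finset.mem_insert_self y V) hyA
      have hsub2 : DD F x (insert y V) ∪ T ⊆ DD F x V :=
        Finset.union_subset (DD_mono (Finset.subset_insert y V)) hTsub
      have hle : (DD F x (insert y V)).card + T.card ≤ (DD F x V).card := by
        rw [← Finset.card_union_of_disjoint hd]
        exact Finset.card_le_card hsub2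
      calc (j + 1) * t + (t + 1) = (j * t + (t + 1)) + t := by ring
        _ ≤ (DD F x (insert y V)).card + T.card := by
            have := Nat.add_le_add key (le_of_eq hTcard.symm); omega
        _ ≤ (DD F x V).card := hle

lemma covered_card_le {F : Finset (Finset (Fin n))} (hF : StronglySelective n k F)
    (hk : 3 ≤ k) (hmk : k ≤ F.card) {t : ℕ}
    (ht : F.card - k + 1 ≤ k.choose 2 * t)
    [DecidablePred (Covered F t)] :
    (Finset.univ.filter (Covered F t)).card ≤ k - 1 := by
  by_contra hcon
  push_neg at hcon
  have hk' : k ≤ (Finset.univ.filter (Covered F t)).card := by omega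
  obtain ⟨S, hSsub, hScard⟩ := Finset.exists_subset_card_eq hk'
  set e := S.orderIsoOfFin hScard with he
  set x : Fin k → Fin n := fun i => (e i : Fin n) with hx
  have hxinj : Function.Injective x := by
    intro i j hij
    exact e.injective (Subtype.ext hij)
  have hxcov : ∀ i, Covered F t (x i) :=
    fun i => (Finset.mem_filter.1 (hSsub (e i).2)).2
  set V : Fin k → Finset (Fin n) := fun i => (Finset.Ioi i).image x with hV
  have hVcard : ∀ i : Fin k, (V i).card ≤ k - 1 - i.val := by
    intro i
    refine le_trans Finset.card_image_le ?_
    rw [Fin.card_Ioi]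
  have hxV : ∀ i, x i ∉ V i := by
    intro i hmem
    obtain ⟨j, hj, hji⟩ := Finset.mem_image.1 hmem
    have : j = i := hxinj hji
    rw [this] at hj
    exact absurd hj (by simp)
  have hlow : ∀ i : Fin k, i.val * t + 1 ≤ (DD F (x i) (V i)).card := by
    intro i
    have hiv := i.isLt
    rcases Nat.eq_zero_or_pos i.val with h0 | h1
    · have hne := DD_nonempty hF (hxV i) (by have := hVcard i; omega)
      rw [h0, Nat.zero_mul]
      exact Finset.Nonempty.card_pos hne
    · have := DD_card_lower' hF (hxcov i) (i.val - 1) (V i) (hxV i)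
        (by have := hVcard i; omega)
      calc i.val * t + 1 = (i.val - 1) * t + (t + 1) := by
            obtain ⟨p, hp⟩ : ∃ p, i.val = p + 1 := ⟨i.val - 1, by omega⟩
            rw [hp]; simp; ring
        _ ≤ (DD F (x i) (V i)).card := this
  have hdisj : ∀ i ∈ (Finset.univ : Finset (Fin k)), ∀ j ∈ (Finset.univ : Finset (Fin k)),
      i ≠ j → Disjoint (DD F (x i) (V i)) (DD F (x j) (V j)) := by
    have aux : ∀ i j : Fin k, i < j → Disjoint (DD F (x i) (V i)) (DD F (x j) (V j)) := by
      intro i j hij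
      rw [Finset.disjoint_left]
      intro A hAi hAj
      have hxjA : x j ∈ A := (Finset.mem_filter.1 hAj).2.1
      have hxjV : x j ∈ V i := Finset.mem_image.2 ⟨j, by simpa using hij, rfl⟩
      exact (Finset.mem_filter.1 hAi).2.2 (x j) hxjV hxjA
    intro i _ j _ hij
    rcases lt_or_gt_of_ne hij with h | h
    · exact aux i j h
    · exact (aux j i h).symm
  have hsum : ∑ i : Fin k, (DD F (x i) (V i)).card ≤ F.card := by
    rw [← Finset.card_biUnion hdisj]
    refine Finset.card_le_card ?_
    intro A hA
    obtain ⟨i, _, hAi⟩ := Finset.mem_biUnion.1 hA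
    exact (Finset.mem_filter.1 hAi).1
  have hsum2 : ∑ i : Fin k, (i.val * t + 1) ≤ F.card :=
    le_trans (Finset.sum_le_sum fun i _ => hlow i) hsum
  have hgauss : ∑ i : Fin k, (i.val * t + 1) = k.choose 2 * t + k := by
    rw [Finset.sum_add_distrib]
    simp only [Finset.sum_const, Finset.card_univ, Fintype.card_fin, smul_eq_mul, mul_one]
    rw [← Finset.sum_mul]
    congr 1
    rw [Fin.sum_univ_eq_sum_range (fun i => i), Finset.sum_range_id, Nat.choose_two_right]
  rw [hgauss] at hsum2
  set c := k.choose 2 * t with hc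
  omega

end Stmt12Aux

open Stmt12Aux in
theorem stmt12 (n k : ℕ) (hk : 3 ≤ k) (hkn : k ≤ n)
    (F : Finset (Finset (Fin n))) (hF : StronglySelective n k F) (hm : k ≤ F.card) :
    -- `(a + b - 1) / b` is the ceiling `⌈a / b⌉` for natural numbers (`b > 0`)
    n ≤ k - 1 + (F.card).choose ((F.card - k + 1 + k.choose 2 - 1) / k.choose 2) := by
  classical
  set m := F.card with hm'
  set C := k.choose 2 with hC'
  set t := (m - k + 1 + C - 1) / C with ht'
  have hC3 : 3 ≤ C := by
    have h := Nat.choose_le_choose 2 hk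
    norm_num at h
    exact h
  have hCpos : 0 < C := by omega
  have htm : m - k + 1 ≤ C * t := by
    have h1 := Nat.div_add_mod (m - k + 1 + C - 1) C
    have h2 := Nat.mod_lt (m - k + 1 + C - 1) hCpos
    rw [← ht'] at h1
    set p := C * t with hp
    set r := (m - k + 1 + C - 1) % C with hr
    omega
  have h2t : 2 * t ≤ m := by
    have hdm := Nat.div_mul_le_self (m - k + 1 + C - 1) C
    rw [← ht'] at hdm
    rcases Nat.eq_zero_or_pos t with h0 | h1
    · omega
    · obtain ⟨s, hs⟩ : ∃ s, t = s + 1 := ⟨t - 1, by omega⟩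
      rw [hs] at hdm ⊢
      have e1 : (s + 1) * C = s * C + C := by ring
      rw [e1] at hdm
      have e2 : s * 3 ≤ s * C := Nat.mul_le_mul_left s hC3
      set u := s * C with hu
      omega
  -- the covered elements
  have hbadcard : (Finset.univ.filter (Covered F t)).card ≤ k - 1 :=
    covered_card_le hF hk hm (by set c := C * t with hc; omega)
  -- good elements: choose own subsets
  have hgood : ∀ x : Fin n, ∃ T : Finset (Finset (Fin n)),
      ¬ Covered F t x → T ⊆ FF F x ∧ T.card ≤ t ∧ ∀ y, y ≠ x → ¬ T ⊆ FF F y := by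
    intro x
    by_cases hx : Covered F t x
    · exact ⟨∅, fun h => absurd hx h⟩
    · unfold Covered at hx
      push_neg at hx
      obtain ⟨T, h1, h2, h3⟩ := hx
      exact ⟨T, fun _ => ⟨h1, h2, h3⟩⟩
  choose Tf hTf using hgood
  set G := Finset.univ.filter (fun x => ¬ Covered F t x) with hG
  have hGmem : ∀ x ∈ G, ¬ Covered F t x := fun x hx => (Finset.mem_filter.1 hx).2
  set 𝒜 := G.image Tf with h𝒜
  have hinj : Set.InjOn Tf G := by
    intro a ha b hb hab
    by_contra hne
    have h1 := hTf a (hGmem a ha)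
    have h2 := hTf b (hGmem b hb)
    exact h1.2.2 b (fun h => hne h.symm) (hab ▸ h2.1)
  have hGcard : G.card = 𝒜.card := (Finset.card_image_of_injOn hinj).symm
  have h𝒜le : 𝒜.card ≤ m.choose t := by
    refine antichain_card_le (G := F) ?_ ?_ ?_ h2t
    · intro T hT
      obtain ⟨a, ha, rfl⟩ := Finset.mem_image.1 hT
      exact ((hTf a (hGmem a ha)).1).trans (Finset.filter_subset _ F)
    · intro T hT T' hT' hsub
      obtain ⟨a, ha, rfl⟩ := Finset.mem_image.1 hT
      obtain ⟨b, hb, rfl⟩ := Finset.mem_image.1 hT'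
      by_cases hab : a = b
      · rw [hab]
      · exact absurd (hsub.trans (hTf b (hGmem b hb)).1)
          ((hTf a (hGmem a ha)).2.2 b (fun h => hab h.symm))
    · intro T hT
      obtain ⟨a, ha, rfl⟩ := Finset.mem_image.1 hT
      exact (hTf a (hGmem a ha)).2.1
  have hpart : (Finset.univ.filter (Covered F t)).card + G.card = n := by
    have h := Finset.card_filter_add_card_filter_not
      (s := (Finset.univ : Finset (Fin n))) (Covered F t)
    simp only [Finset.card_univ, Fintype.card_fin] at h
    rw [hG]
    convert h using 3
  omega
end

section
/- Let r ≥ 2 be an integer, let S be a nonempty set of unordered pairs {a,b} of distinct elements of [r] = {1,…,r}, and let C be a finite set of sequences of length m over the alphabet [r] such that for every two distinct sequences x, y ∈ C and every pair {a,b} ∈ S there exists a coordinate i ∈ {1,…,m} with {x_i, y_i} = {a,b}. Then log₂|C| ≤ m · sup_P min_{{a,b} ∈ S} (p_a + p_b)·h(p_b/(p_a + p_b)), where the supremum ranges over all probability distributions P = (p_1,…,p_r) on [r]. -/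
noncomputable def binEnt (t : ℝ) : ℝ :=
  -t * Real.logb 2 t - (1 - t) * Real.logb 2 (1 - t)

lemma binEnt_eq (t : ℝ) : binEnt t = Real.binEntropy t / Real.log 2 := by
  simp only [binEnt, Real.binEntropy, Real.logb, Real.log_inv]
  ring

lemma binEnt_nonneg {t : ℝ} (h0 : 0 ≤ t) (h1 : t ≤ 1) : 0 ≤ binEnt t := by
  rw [binEnt_eq]
  exact div_nonneg (Real.binEntropy_nonneg h0 h1) (Real.log_nonneg one_le_two)

lemma binEnt_le_one (t : ℝ) : binEnt t ≤ 1 := by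
  rw [binEnt_eq, div_le_one (Real.log_pos one_lt_two)]
  exact Real.binEntropy_le_log_two

lemma key_sum {m r : ℕ} (a b : Fin r) (hab : a ≠ b) (C : Finset (Fin m → Fin r))
    (hcol : ∀ x ∈ C, ∀ y ∈ C, x ≠ y → ∃ i, (x i = a ∧ y i = b) ∨ (x i = b ∧ y i = a))
    (l : ℝ) (h0 : 0 ≤ l) (h1 : l ≤ 1) :
    ∑ x ∈ C, l ^ (Finset.univ.filter fun i => x i = a).card
      * (1 - l) ^ (Finset.univ.filter fun i => x i = b).card ≤ 1 := by
  classical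
  have hba : ¬ (b = a) := fun h => hab h.symm
  set w : (Fin m → Bool) → ℝ := fun σ => ∏ i, (if σ i then l else 1 - l) with hw_def
  have hw : ∀ σ, 0 ≤ w σ := by
    intro σ
    apply Finset.prod_nonneg
    intro i _
    split <;> linarith
  set T : (Fin m → Fin r) → ∀ _ : Fin m, Finset Bool := fun x i =>
    if x i = a then {true} else if x i = b then {false} else Finset.univ with hT_def
  have hGsum : ∀ x : Fin m → Fin r, ∑ σ ∈ Fintype.piFinset (T x), w σ =
      l ^ (Finset.univ.filter fun i => x i = a).card
        * (1 - l) ^ (Finset.univ.filter fun i => x i = b).card := by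
    intro x
    have h1' : ∑ σ ∈ Fintype.piFinset (T x), w σ
        = ∏ i, ∑ j ∈ T x i, (if j then l else 1 - l) :=
      (Finset.prod_univ_sum (T x) (fun _ j => if j then l else 1 - l)).symm
    rw [h1']
    have h2' : ∀ i, (∑ j ∈ T x i, (if j then l else 1 - l)) =
        (if x i = a then l else if x i = b then 1 - l else 1) := by
      intro i
      by_cases hia : x i = a
      · simp [hT_def, hia]
      · by_cases hib : x i = b
        · simp [hT_def, hia, hib, hba]
        · simp [hT_def, hia, hib, Fintype.sum_bool]
    rw [Finset.prod_congr rfl (fun i _ => h2' i)]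
    rw [← Finset.prod_filter_mul_prod_filter_not Finset.univ (fun i => x i = a)]
    have ea : ∏ i ∈ Finset.univ.filter (fun i => x i = a),
        (if x i = a then l else if x i = b then 1 - l else 1)
        = l ^ (Finset.univ.filter fun i => x i = a).card := by
      rw [Finset.prod_congr rfl (fun i hi => ?_), Finset.prod_const]
      rw [Finset.mem_filter] at hi
      rw [if_pos hi.2]
    rw [ea]
    congr 1
    rw [← Finset.prod_filter_mul_prod_filter_not (Finset.univ.filter fun i => ¬ x i = a)
      (fun i => x i = b)]
    have e1 : (Finset.univ.filter fun i => ¬ x i = a).filter (fun i => x i = b)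
        = Finset.univ.filter fun i => x i = b := by
      rw [Finset.filter_filter]
      apply Finset.filter_congr
      intro i _
      constructor
      · rintro ⟨_, h⟩; exact h
      · intro h; exact ⟨fun ha' => hab (ha' ▸ h ▸ rfl), h⟩
    have eb : ∏ i ∈ (Finset.univ.filter fun i => ¬ x i = a).filter (fun i => x i = b),
        (if x i = a then l else if x i = b then 1 - l else 1)
        = (1 - l) ^ (Finset.univ.filter fun i => x i = b).card := by
      rw [Finset.prod_congr rfl (fun i hi => ?_), Finset.prod_const, e1]
      simp only [Finset.mem_filter] at hi
      rw [if_neg hi.1.2, if_pos hi.2]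
    have ec : ∏ i ∈ (Finset.univ.filter fun i => ¬ x i = a).filter (fun i => ¬ x i = b),
        (if x i = a then l else if x i = b then 1 - l else 1) = 1 := by
      apply Finset.prod_eq_one
      intro i hi
      simp only [Finset.mem_filter] at hi
      rw [if_neg hi.1.2, if_neg hi.2]
    rw [eb, ec, mul_one]
  have hdisj : (C : Set (Fin m → Fin r)).PairwiseDisjoint (fun x => Fintype.piFinset (T x)) := by
    intro x hx y hy hxy
    simp only [Function.onFun]
    rw [Finset.disjoint_left]
    intro σ hσx hσy
    obtain ⟨i, hi⟩ := hcol x hx y hy hxy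
    have hx' := Fintype.mem_piFinset.mp hσx i
    have hy' := Fintype.mem_piFinset.mp hσy i
    rcases hi with ⟨hxa, hyb⟩ | ⟨hxb, hya⟩
    · rw [hT_def] at hx' hy'
      simp only [hxa, hyb, if_pos rfl, if_neg hba] at hx' hy'
      simp_all
    · rw [hT_def] at hx' hy'
      simp only [hxb, hya, if_pos rfl, if_neg hba] at hx' hy'
      simp_all
  have htot : ∑ σ : Fin m → Bool, w σ = 1 := by
    have h := Finset.prod_univ_sum (fun _ : Fin m => (Finset.univ : Finset Bool))
      (fun _ j => if j then l else 1 - l)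
    rw [Fintype.piFinset_univ] at h
    have : ∑ σ : Fin m → Bool, w σ = ∏ _i : Fin m, ∑ j : Bool, (if j then l else 1 - l) := by
      rw [h]
    rw [this]
    simp [Fintype.sum_bool]
  calc ∑ x ∈ C, l ^ (Finset.univ.filter fun i => x i = a).card
      * (1 - l) ^ (Finset.univ.filter fun i => x i = b).card
      = ∑ x ∈ C, ∑ σ ∈ Fintype.piFinset (T x), w σ :=
        Finset.sum_congr rfl (fun x _ => (hGsum x).symm)
    _ = ∑ σ ∈ C.biUnion (fun x => Fintype.piFinset (T x)), w σ :=
        (Finset.sum_biUnion hdisj).symm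
    _ ≤ ∑ σ : Fin m → Bool, w σ :=
        Finset.sum_le_sum_of_subset_of_nonneg (Finset.subset_univ _) (fun σ _ _ => hw σ)
    _ = 1 := htot

lemma perpair {m r : ℕ} (a b : Fin r) (hab : a ≠ b) (C : Finset (Fin m → Fin r))
    (hcol : ∀ x ∈ C, ∀ y ∈ C, x ≠ y → ∃ i, (x i = a ∧ y i = b) ∨ (x i = b ∧ y i = a))
    (hCne : C.Nonempty) (hN0 : (0:ℝ) < C.card)
    (qa qb : ℝ) (hA : 0 < qa) (hB : 0 < qb)
    (hna : ∑ z ∈ C, ((Finset.univ.filter fun i => z i = a).card : ℝ)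
      = qa * ((m:ℝ) * C.card))
    (hnb : ∑ z ∈ C, ((Finset.univ.filter fun i => z i = b).card : ℝ)
      = qb * ((m:ℝ) * C.card)) :
    Real.logb 2 C.card ≤ (m:ℝ) * ((qa + qb) * binEnt (qb / (qa + qb))) := by
  have hs : 0 < qa + qb := by linarith
  set l : ℝ := qa / (qa + qb) with hl_def
  have hl0 : 0 < l := div_pos hA hs
  have hl1 : l < 1 := by rw [hl_def, div_lt_one hs]; linarith
  have h1l : 1 - l = qb / (qa + qb) := by
    rw [hl_def, eq_div_iff hs.ne', sub_mul, div_mul_cancel₀ _ hs.ne']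
    ring
  have hsum_le := key_sum a b hab C hcol l hl0.le hl1.le
  set f : (Fin m → Fin r) → ℝ := fun z =>
    l ^ (Finset.univ.filter fun i => z i = a).card
      * (1 - l) ^ (Finset.univ.filter fun i => z i = b).card with hf_def
  have hfpos : ∀ z, 0 < f z := fun z =>
    mul_pos (pow_pos hl0 _) (pow_pos (by linarith) _)
  have hw1 : ∑ z ∈ C, ((C.card : ℝ))⁻¹ = 1 := by
    rw [Finset.sum_const, nsmul_eq_mul, mul_inv_cancel₀ hN0.ne']
  have hjen := (strictConcaveOn_log_Ioi.concaveOn).le_map_sum (t := C)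
    (w := fun _ => ((C.card : ℝ))⁻¹) (p := f)
    (fun _ _ => by positivity) hw1 (fun z _ => Set.mem_Ioi.mpr (hfpos z))
  simp only [smul_eq_mul] at hjen
  have h2 : Real.log (∑ z ∈ C, ((C.card : ℝ))⁻¹ * f z) ≤ Real.log (((C.card : ℝ))⁻¹) := by
    apply Real.log_le_log
    · rw [← Finset.mul_sum]
      exact mul_pos (inv_pos.mpr hN0) (Finset.sum_pos (fun z _ => hfpos z) hCne)
    · rw [← Finset.mul_sum]
      calc ((C.card : ℝ))⁻¹ * ∑ z ∈ C, f z ≤ ((C.card : ℝ))⁻¹ * 1 :=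
            mul_le_mul_of_nonneg_left hsum_le (by positivity)
        _ = ((C.card : ℝ))⁻¹ := mul_one _
  have h3 : ∑ z ∈ C, Real.log (f z) ≤ (C.card : ℝ) * Real.log (((C.card : ℝ))⁻¹) := by
    have h := le_trans hjen h2
    rw [← Finset.mul_sum] at h
    calc ∑ z ∈ C, Real.log (f z)
        = (C.card : ℝ) * (((C.card : ℝ))⁻¹ * ∑ z ∈ C, Real.log (f z)) :=
          (mul_inv_cancel_left₀ hN0.ne' _).symm
      _ ≤ (C.card : ℝ) * Real.log (((C.card : ℝ))⁻¹) :=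
          mul_le_mul_of_nonneg_left h (by positivity)
  have hlogf : ∀ z, Real.log (f z) =
      ((Finset.univ.filter fun i => z i = a).card : ℝ) * Real.log l
        + ((Finset.univ.filter fun i => z i = b).card : ℝ) * Real.log (1 - l) := by
    intro z
    rw [hf_def]
    rw [Real.log_mul (pow_pos hl0 _).ne' (pow_pos (by linarith) _).ne',
      Real.log_pow, Real.log_pow]
  have h4 : ∑ z ∈ C, Real.log (f z) =
      qa * ((m:ℝ) * C.card) * Real.log l + qb * ((m:ℝ) * C.card) * Real.log (1 - l) := by
    rw [Finset.sum_congr rfl (fun z _ => hlogf z), Finset.sum_add_distrib,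
      ← Finset.sum_mul, ← Finset.sum_mul, hna, hnb]
  have hlogl : Real.log l = Real.log qa - Real.log (qa + qb) := by
    rw [hl_def, Real.log_div hA.ne' hs.ne']
  have hlog1l : Real.log (1 - l) = Real.log qb - Real.log (qa + qb) := by
    rw [h1l, Real.log_div hB.ne' hs.ne']
  have hdiv : (m:ℝ) * (qa * (Real.log qa - Real.log (qa + qb))
      + qb * (Real.log qb - Real.log (qa + qb))) ≤ -Real.log (C.card) := by
    have h := h3
    rw [h4, Real.log_inv, hlogl, hlog1l] at h
    rw [← mul_le_mul_iff_right₀ hN0]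
    calc (C.card : ℝ) * ((m:ℝ) * (qa * (Real.log qa - Real.log (qa + qb))
          + qb * (Real.log qb - Real.log (qa + qb))))
        = qa * ((m:ℝ) * C.card) * (Real.log qa - Real.log (qa + qb))
          + qb * ((m:ℝ) * C.card) * (Real.log qb - Real.log (qa + qb)) := by ring
      _ ≤ (C.card : ℝ) * -Real.log (C.card) := h
  have h1mt : 1 - qb / (qa + qb) = qa / (qa + qb) := by
    rw [eq_div_iff hs.ne', sub_mul, div_mul_cancel₀ _ hs.ne']
    ring
  have hlog2 : Real.log 2 ≠ 0 := (Real.log_pos one_lt_two).ne'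
  have hbinEnt : (qa + qb) * binEnt (qb / (qa + qb)) * Real.log 2 =
      -(qb * (Real.log qb - Real.log (qa + qb))
        + qa * (Real.log qa - Real.log (qa + qb))) := by
    unfold binEnt
    rw [h1mt]
    simp only [Real.logb, Real.log_div hB.ne' hs.ne', Real.log_div hA.ne' hs.ne']
    field_simp
    ring
  rw [Real.logb, div_le_iff₀ (Real.log_pos one_lt_two)]
  have hgoal_eq : (m:ℝ) * ((qa + qb) * binEnt (qb / (qa + qb))) * Real.log 2 =
      -((m:ℝ) * (qa * (Real.log qa - Real.log (qa + qb))
        + qb * (Real.log qb - Real.log (qa + qb)))) := by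
    rw [show (m:ℝ) * ((qa + qb) * binEnt (qb / (qa + qb))) * Real.log 2
        = (m:ℝ) * ((qa + qb) * binEnt (qb / (qa + qb)) * Real.log 2) from by ring,
      hbinEnt]
    ring
  linarith [hdiv]

theorem stmt13 (r m : ℕ) (hr : 2 ≤ r)
    (S : Finset (Fin r × Fin r)) (hS : S.Nonempty) (hSne : ∀ p ∈ S, p.1 ≠ p.2)
    (C : Finset (Fin m → Fin r))
    (hC : ∀ x ∈ C, ∀ y ∈ C, x ≠ y → ∀ p ∈ S, ∃ i : Fin m,
      (x i = p.1 ∧ y i = p.2) ∨ (x i = p.2 ∧ y i = p.1)) :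
    Real.logb 2 C.card ≤ (m : ℝ) *
      sSup { v : ℝ | ∃ q : Fin r → ℝ, (∀ a, 0 ≤ q a) ∧ (∑ a, q a) = 1 ∧
        v = S.inf' hS (fun p => (q p.1 + q p.2) * binEnt (q p.2 / (q p.1 + q p.2))) } := by
  classical
  have hr0 : 0 < r := by omega
  have hBdd : BddAbove { v : ℝ | ∃ q : Fin r → ℝ, (∀ a, 0 ≤ q a) ∧ (∑ a, q a) = 1 ∧
      v = S.inf' hS (fun p => (q p.1 + q p.2) * binEnt (q p.2 / (q p.1 + q p.2))) } := by
    refine ⟨1, ?_⟩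
    rintro v ⟨q, hq0, hq1, rfl⟩
    obtain ⟨p₀, hp₀⟩ := hS
    refine le_trans (Finset.inf'_le _ hp₀) ?_
    have hab := hSne p₀ hp₀
    have hs1 : q p₀.1 + q p₀.2 ≤ 1 := by
      have h2 : ∑ c ∈ ({p₀.1, p₀.2} : Finset (Fin r)), q c ≤ ∑ c, q c :=
        Finset.sum_le_sum_of_subset_of_nonneg (Finset.subset_univ _) (fun c _ _ => hq0 c)
      rw [Finset.sum_pair hab, hq1] at h2
      exact h2
    rcases eq_or_lt_of_le (add_nonneg (hq0 p₀.1) (hq0 p₀.2)) with hs | hs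
    · rw [← hs, zero_mul]; norm_num
    · have hratio0 : 0 ≤ q p₀.2 / (q p₀.1 + q p₀.2) := div_nonneg (hq0 p₀.2) hs.le
      have hratio1 : q p₀.2 / (q p₀.1 + q p₀.2) ≤ 1 := by
        rw [div_le_one hs]; linarith [hq0 p₀.1]
      calc (q p₀.1 + q p₀.2) * binEnt (q p₀.2 / (q p₀.1 + q p₀.2)) ≤ 1 * 1 :=
            mul_le_mul hs1 (binEnt_le_one _) (binEnt_nonneg hratio0 hratio1) one_pos.le
        _ = 1 := mul_one 1
  have hmem0 : (0:ℝ) ∈ { v : ℝ | ∃ q : Fin r → ℝ, (∀ a, 0 ≤ q a) ∧ (∑ a, q a) = 1 ∧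
      v = S.inf' hS (fun p => (q p.1 + q p.2) * binEnt (q p.2 / (q p.1 + q p.2))) } := by
    set e : Fin r := ⟨0, hr0⟩ with he_def
    refine ⟨fun c => if c = e then 1 else 0,
      fun c => by dsimp only; split <;> norm_num, by simp, ?_⟩
    have hterms : ∀ p ∈ S,
        (((if p.1 = e then (1:ℝ) else 0) + (if p.2 = e then (1:ℝ) else 0)) *
          binEnt ((if p.2 = e then (1:ℝ) else 0) /
            ((if p.1 = e then (1:ℝ) else 0) + (if p.2 = e then (1:ℝ) else 0)))) = (0:ℝ) := by
      intro p hp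
      have hab := hSne p hp
      by_cases h1 : p.1 = e <;> by_cases h2 : p.2 = e
      · exact absurd (h1.trans h2.symm) hab
      · rw [if_pos h1, if_neg h2]
        norm_num
        simp [binEnt]
      · rw [if_neg h1, if_pos h2]
        norm_num
        simp [binEnt]
      · rw [if_neg h1, if_neg h2]
        norm_num
    exact ((Finset.inf'_congr hS rfl hterms).trans (Finset.inf'_const hS 0)).symm
  by_cases hN : C.card ≤ 1
  · have hlog : Real.logb 2 C.card ≤ 0 := by
      rcases Nat.le_one_iff_eq_zero_or_eq_one.mp hN with h | h <;> simp [h]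
    have h0s : (0:ℝ) ≤ sSup { v : ℝ | ∃ q : Fin r → ℝ, (∀ a, 0 ≤ q a) ∧ (∑ a, q a) = 1 ∧
        v = S.inf' hS (fun p => (q p.1 + q p.2) * binEnt (q p.2 / (q p.1 + q p.2))) } :=
      le_csSup hBdd hmem0
    have := mul_nonneg (Nat.cast_nonneg (α := ℝ) m) h0s
    linarith
  push_neg at hN
  obtain ⟨x, hx, y, hy, hxy⟩ := Finset.one_lt_card.mp hN
  have hm : 0 < m := by
    obtain ⟨p₀, hp₀⟩ := hS
    obtain ⟨i, _⟩ := hC x hx y hy hxy p₀ hp₀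
    exact i.pos
  have hm' : (0:ℝ) < m := Nat.cast_pos.mpr hm
  have hN0 : (0:ℝ) < C.card := by
    have : (1:ℝ) < C.card := by exact_mod_cast hN
    linarith
  have hmN : (0:ℝ) < (m:ℝ) * C.card := mul_pos hm' hN0
  set q : Fin r → ℝ :=
    fun c => (∑ z ∈ C, ((Finset.univ.filter fun i => z i = c).card : ℝ)) / ((m:ℝ) * C.card)
    with hq_def
  have hq0 : ∀ c, 0 ≤ q c := by
    intro c
    apply div_nonneg _ hmN.le
    exact Finset.sum_nonneg (fun z _ => Nat.cast_nonneg _)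
  have hq1 : ∑ c, q c = 1 := by
    simp only [hq_def]
    rw [← Finset.sum_div]
    rw [Finset.sum_comm]
    have hinner : ∀ z : Fin m → Fin r,
        ∑ c, ((Finset.univ.filter fun i => z i = c).card : ℝ) = (m:ℝ) := by
      intro z
      have h := Finset.card_eq_sum_card_fiberwise
        (f := z) (s := (Finset.univ : Finset (Fin m))) (t := Finset.univ)
        (fun i _ => Finset.mem_univ (z i))
      rw [Finset.card_univ, Fintype.card_fin] at h
      exact_mod_cast congrArg (fun k : ℕ => (k : ℝ)) h.symm
    rw [Finset.sum_congr rfl (fun z _ => hinner z), Finset.sum_const, nsmul_eq_mul, mul_comm]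
    exact div_self hmN.ne'
  have hqmul : ∀ c, ∑ z ∈ C, ((Finset.univ.filter fun i => z i = c).card : ℝ)
      = q c * ((m:ℝ) * C.card) := by
    intro c
    rw [hq_def]
    exact (div_mul_cancel₀ _ hmN.ne').symm
  have main : ∀ p ∈ S, Real.logb 2 C.card ≤
      (m:ℝ) * ((q p.1 + q p.2) * binEnt (q p.2 / (q p.1 + q p.2))) := by
    rintro ⟨a, b⟩ hp
    have hab : a ≠ b := hSne (a, b) hp
    have hnc : ∀ (c : Fin r) (z : Fin m → Fin r), z ∈ C → (∃ i, z i = c) → 0 < q c := by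
      rintro c z hz ⟨i, hi⟩
      apply div_pos _ hmN
      apply Finset.sum_pos' (fun w _ => Nat.cast_nonneg _)
      refine ⟨z, hz, ?_⟩
      have h1 : 0 < (Finset.univ.filter fun j => z j = c).card :=
        Finset.card_pos.mpr ⟨i, Finset.mem_filter.mpr ⟨Finset.mem_univ i, hi⟩⟩
      exact_mod_cast h1
    obtain ⟨i, hi⟩ := hC x hx y hy hxy (a, b) hp
    have hA : 0 < q a := by
      rcases hi with ⟨h1, h2⟩ | ⟨h1, h2⟩
      · exact hnc a x hx ⟨i, h1⟩
      · exact hnc a y hy ⟨i, h2⟩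
    have hB : 0 < q b := by
      rcases hi with ⟨h1, h2⟩ | ⟨h1, h2⟩
      · exact hnc b y hy ⟨i, h2⟩
      · exact hnc b x hx ⟨i, h1⟩
    exact perpair a b hab C (fun u hu v hv huv => hC u hu v hv huv (a, b) hp)
      ⟨x, hx⟩ hN0 (q a) (q b) hA hB (hqmul a) (hqmul b)
  have hinf : Real.logb 2 C.card ≤ (m:ℝ) *
      S.inf' hS (fun p => (q p.1 + q p.2) * binEnt (q p.2 / (q p.1 + q p.2))) := by
    have h := Finset.le_inf' hS (fun p => (q p.1 + q p.2) * binEnt (q p.2 / (q p.1 + q p.2)))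
      (fun p hp => by
        rw [div_le_iff₀ hm', mul_comm]
        exact main p hp :
        ∀ p ∈ S, Real.logb 2 C.card / m ≤ (q p.1 + q p.2) * binEnt (q p.2 / (q p.1 + q p.2)))
    have h2 := (div_le_iff₀ hm').mp h
    linarith [h2]
  refine le_trans hinf (mul_le_mul_of_nonneg_left ?_ (Nat.cast_nonneg m))
  exact le_csSup hBdd ⟨q, hq0, hq1, rfl⟩
end
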